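/- arXiv:2306.13282 — 6 statements merged into one kernel-verified Lean document; each statement's English description precedes it below -/
import Mathlib

section
/- Let G be a graph with a tree-decomposition (T, (B_t)) of outer diameter d < ∞. For each X ⊆ V(G), let X⁺ be the union of the vertex sets of all paths of G of length at most d with both endpoints in X. Then (T, (B_t⁺ : t ∈ V(T))) is again a tree-decomposition of G. -/
open SimpleGraph

/-- A tree-decomposition of `G`: a tree `T` with a bag `B t ⊆ V(G)` for each vertex `t`,
covering all vertices and edges, such that if `t₂` lies on the path of `T` between `t₁`
and `t₃` then `B t₁ ∩ B t₃ ⊆ B t₂`. -/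
structure TreeDecomp {V W : Type*} (G : SimpleGraph V) (T : SimpleGraph W) (B : W → Set V) : Prop where
  isTree : T.IsTree
  coversVertices : ∀ v : V, ∃ t : W, v ∈ B t
  coversEdges : ∀ ⦃u v : V⦄, G.Adj u v → ∃ t : W, u ∈ B t ∧ v ∈ B t
  interpolation : ∀ ⦃t₁ t₂ t₃ : W⦄ (p : T.Walk t₁ t₃), p.IsPath → t₂ ∈ p.support →
    B t₁ ∩ B t₃ ⊆ B t₂

/-- In a tree, the unique path between `t₁` and `t₃` has support contained in the union of the
supports of any walks `t₁ → t` and `t → t₃`. -/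
lemma tree_path_split {W : Type*} [DecidableEq W] {T : SimpleGraph W} (hT : T.IsTree) {t₁ t t₃ t₂ : W}
    (q : T.Walk t₁ t₃) (hq : q.IsPath) (h : t₂ ∈ q.support)
    (q₁ : T.Walk t₁ t) (q₂ : T.Walk t t₃) : t₂ ∈ q₁.support ∨ t₂ ∈ q₂.support := by
  obtain ⟨p, hp, hu⟩ := hT.existsUnique_path t₁ t₃
  have hq' : q = p := hu q hq
  have hb : (q₁.append q₂).bypass = p := hu _ ((q₁.append q₂).bypass_isPath)
  have h2 : t₂ ∈ (q₁.append q₂).bypass.support := by rw [hb, ← hq']; exact h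
  have h3 := Walk.support_bypass_subset _ h2
  rwa [Walk.mem_support_append_iff] at h3

/-- A bag on the tree-path between two bags separates them in `G`. -/
lemma sep {V W : Type*} [DecidableEq W] {G : SimpleGraph V} {T : SimpleGraph W} {B : W → Set V}
    (hTD : TreeDecomp G T B) {t₂ t₃ : W} {a b : V} (R : G.Walk a b) :
    ∀ {t₁ : W} (q : T.Walk t₁ t₃), q.IsPath → t₂ ∈ q.support → a ∈ B t₁ → b ∈ B t₃ →
    ∃ x ∈ R.support, x ∈ B t₂ := by
  induction R with
  | nil =>
    intro t₁ q hq ht ha hb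
    exact ⟨_, Walk.start_mem_support _, hTD.interpolation q hq ht ⟨ha, hb⟩⟩
  | cons h R ih =>
    intro t₁ q hq ht ha hb
    obtain ⟨t, hat, hct⟩ := hTD.coversEdges h
    obtain ⟨q₁, hq₁, -⟩ := hTD.isTree.existsUnique_path t₁ t
    obtain ⟨q₂, hq₂, -⟩ := hTD.isTree.existsUnique_path t t₃
    rcases tree_path_split hTD.isTree q hq ht q₁ q₂ with h1 | h2
    · exact ⟨_, Walk.start_mem_support _, hTD.interpolation q₁ hq₁ h1 ⟨ha, hat⟩⟩
    · obtain ⟨x, hx, hxB⟩ := ih q₂ hq₂ h2 hct hb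
      exact ⟨x, by simp [Walk.support_cons, hx], hxB⟩

/-- Glue: from a path `P` through `w`, with `x` before `w` and `y` after `w`, get a path
from `x` to `y` through `w` of length at most that of `P`. -/
lemma glue {V : Type*} [DecidableEq V] {G : SimpleGraph V} {u v w : V} (P : G.Walk u v) (hP : P.IsPath)
    (hw : w ∈ P.support) {x y : V}
    (hx : x ∈ (P.takeUntil w hw).support) (hy : y ∈ (P.dropUntil w hw).support) :
    ∃ Q : G.Walk x y, Q.IsPath ∧ Q.length ≤ P.length ∧ w ∈ Q.support := by
  have hP₁ : (P.takeUntil w hw).IsPath := hP.takeUntil hw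
  have hP₂ : (P.dropUntil w hw).IsPath := hP.dropUntil hw
  set P₁ := P.takeUntil w hw with hP₁def
  set P₂ := P.dropUntil w hw with hP₂def
  refine ⟨(P₁.dropUntil x hx).append (P₂.takeUntil y hy), ?_, ?_, ?_⟩
  · rw [Walk.isPath_def, Walk.support_append]
    refine List.Nodup.append ((hP₁.dropUntil hx).support_nodup) ((hP₂.takeUntil hy).support_nodup.tail) ?_
    intro z hz1 hz2
    have hzP₁ : z ∈ P₁.support := Walk.support_dropUntil_subset _ _ hz1
    have hzP₂ : z ∈ P₂.support.tail := by
      have hspec : (P₂.takeUntil y hy).append (P₂.dropUntil y hy) = P₂ := Walk.take_spec _ hy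
      have h4 : P₂.support.tail
          = (P₂.takeUntil y hy).support.tail ++ (P₂.dropUntil y hy).support.tail := by
        conv_lhs => rw [← hspec]
        rw [Walk.support_append, List.tail_append_of_ne_nil (Walk.support_ne_nil _)]
      rw [h4]
      exact List.mem_append_left _ hz2
    have hnd : (P₁.support ++ P₂.support.tail).Nodup := by
      have h5 := hP.support_nodup
      rwa [← Walk.take_spec P hw, Walk.support_append] at h5
    exact (List.disjoint_of_nodup_append hnd) hzP₁ hzP₂
  · rw [Walk.length_append]
    calc (P₁.dropUntil x hx).length + (P₂.takeUntil y hy).length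
        ≤ P₁.length + P₂.length :=
          Nat.add_le_add (Walk.length_dropUntil_le _ hx) (Walk.length_takeUntil_le _ hy)
      _ = P.length := by
          have h6 := congr_arg Walk.length (Walk.take_spec P hw)
          rwa [Walk.length_append] at h6
  · rw [Walk.mem_support_append_iff]
    exact Or.inl (Walk.end_mem_support _)

/-- If (T, B) is a tree-decomposition of outer diameter at most d, and B t ⁺ is the union of the
vertex sets of all paths of G of length at most d with both ends in B t, then (T, (B t ⁺)) is
again a tree-decomposition of G. -/
theorem stmt_3 {V W : Type*} (G : SimpleGraph V) (T : SimpleGraph W) (B : W → Set V)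
    (hTD : TreeDecomp G T B) (d : ℕ)
    (houter : ∀ t, ∀ u ∈ B t, ∀ v ∈ B t, G.dist u v ≤ d) :
    TreeDecomp G T (fun t => {w | ∃ (u v : V) (P : G.Walk u v),
      P.IsPath ∧ P.length ≤ d ∧ u ∈ B t ∧ v ∈ B t ∧ w ∈ P.support}) := by
  classical
  constructor
  · exact hTD.isTree
  · intro v
    obtain ⟨t, ht⟩ := hTD.coversVertices v
    exact ⟨t, v, v, Walk.nil, Walk.IsPath.nil, by simp, ht, ht, by simp⟩
  · intro u v huv
    obtain ⟨t, hu, hv⟩ := hTD.coversEdges huv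
    exact ⟨t, ⟨u, u, Walk.nil, Walk.IsPath.nil, by simp, hu, hu, by simp⟩,
      ⟨v, v, Walk.nil, Walk.IsPath.nil, by simp, hv, hv, by simp⟩⟩
  · intro t₁ t₂ t₃ p hp ht w hw
    obtain ⟨⟨u, v, P, hP, hPd, huB, hvB, hwP⟩, ⟨u', v', Q, hQ, hQd, hu'B, hv'B, hwQ⟩⟩ := hw
    -- split both walks at w
    set P₁ := P.takeUntil w hwP with hP₁def
    set P₂ := P.dropUntil w hwP with hP₂def
    set Q₁ := Q.takeUntil w hwQ with hQ₁def
    set Q₂ := Q.dropUntil w hwQ with hQ₂def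
    -- four applications of the separation lemma
    have D1 : (∃ x ∈ P₁.support, x ∈ B t₂) ∨ (∃ x ∈ Q₂.support, x ∈ B t₂) := by
      obtain ⟨x, hx, hxB⟩ := sep hTD (P₁.append Q₂) p hp ht huB hv'B
      rw [Walk.mem_support_append_iff] at hx
      rcases hx with h | h
      · exact Or.inl ⟨x, h, hxB⟩
      · exact Or.inr ⟨x, h, hxB⟩
    have D2 : (∃ x ∈ P₁.support, x ∈ B t₂) ∨ (∃ x ∈ Q₁.support, x ∈ B t₂) := by
      obtain ⟨x, hx, hxB⟩ := sep hTD (P₁.append Q₁.reverse) p hp ht huB hu'B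
      rw [Walk.mem_support_append_iff, Walk.support_reverse, List.mem_reverse] at hx
      rcases hx with h | h
      · exact Or.inl ⟨x, h, hxB⟩
      · exact Or.inr ⟨x, h, hxB⟩
    have D3 : (∃ x ∈ P₂.support, x ∈ B t₂) ∨ (∃ x ∈ Q₂.support, x ∈ B t₂) := by
      obtain ⟨x, hx, hxB⟩ := sep hTD (P₂.reverse.append Q₂) p hp ht hvB hv'B
      rw [Walk.mem_support_append_iff, Walk.support_reverse, List.mem_reverse] at hx
      rcases hx with h | h
      · exact Or.inl ⟨x, h, hxB⟩
      · exact Or.inr ⟨x, h, hxB⟩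
    have D4 : (∃ x ∈ P₂.support, x ∈ B t₂) ∨ (∃ x ∈ Q₁.support, x ∈ B t₂) := by
      obtain ⟨x, hx, hxB⟩ := sep hTD (P₂.reverse.append Q₁.reverse) p hp ht hvB hu'B
      rw [Walk.mem_support_append_iff, Walk.support_reverse, List.mem_reverse,
        Walk.support_reverse, List.mem_reverse] at hx
      rcases hx with h | h
      · exact Or.inl ⟨x, h, hxB⟩
      · exact Or.inr ⟨x, h, hxB⟩
    -- either P meets B t₂ on both sides of w, or Q does
    have key : ((∃ x ∈ P₁.support, x ∈ B t₂) ∧ (∃ y ∈ P₂.support, y ∈ B t₂)) ∨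
        ((∃ x ∈ Q₁.support, x ∈ B t₂) ∧ (∃ y ∈ Q₂.support, y ∈ B t₂)) := by
      rcases D1 with hA1 | hC2
      · rcases D4 with hA2 | hC1
        · exact Or.inl ⟨hA1, hA2⟩
        · rcases D3 with hA2 | hC2
          · exact Or.inl ⟨hA1, hA2⟩
          · exact Or.inr ⟨hC1, hC2⟩
      · rcases D2 with hA1 | hC1
        · rcases D4 with hA2 | hC1
          · exact Or.inl ⟨hA1, hA2⟩
          · exact Or.inr ⟨hC1, hC2⟩
        · exact Or.inr ⟨hC1, hC2⟩
    rcases key with ⟨⟨x, hx, hxB⟩, ⟨y, hy, hyB⟩⟩ | ⟨⟨x, hx, hxB⟩, ⟨y, hy, hyB⟩⟩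
    · obtain ⟨R, hR, hRlen, hwR⟩ := glue P hP hwP hx hy
      exact ⟨x, y, R, hR, le_trans hRlen hPd, hxB, hyB, hwR⟩
    · obtain ⟨R, hR, hRlen, hwR⟩ := glue Q hQ hwQ hx hy
      exact ⟨x, y, R, hR, le_trans hRlen hQd, hxB, hyB, hwR⟩
end

section
/- Let C be a cycle of a graph G, let F ⊆ E(C) with |F| ≥ 2, and let (T, (B_t)) be a tree-decomposition of G. Then there exist t ∈ V(T) and u, v ∈ V(C) ∩ B_t such that d_{C,F}(u, v) ≥ |F|/3. -/
open Finset SimpleGraph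

namespace StmtAux


def cnt (mark : ℕ → Prop) [DecidablePred mark] (a b : ℕ) : ℕ :=
  ((Finset.Ico a b).filter mark).card

variable {mark : ℕ → Prop} [DecidablePred mark]

lemma cnt_add {a b c : ℕ} (h1 : a ≤ b) (h2 : b ≤ c) :
    cnt mark a b + cnt mark b c = cnt mark a c := by
  unfold cnt
  rw [← card_union_of_disjoint, ← filter_union, Finset.Ico_union_Ico_eq_Ico h1 h2]
  exact disjoint_filter_filter (Finset.Ico_disjoint_Ico_consecutive a b c)

lemma cnt_le {a b : ℕ} : cnt mark a b ≤ b - a := by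
  calc cnt mark a b ≤ (Finset.Ico a b).card := card_filter_le _ _
  _ = b - a := Nat.card_Ico a b

lemma cnt_singleton (a : ℕ) : cnt mark a (a+1) = if mark a then 1 else 0 := by
  unfold cnt
  rw [Nat.Ico_succ_singleton, filter_singleton]
  split <;> simp

lemma cnt_shift (n : ℕ) (hper : ∀ i, mark (i+n) ↔ mark i) (a b : ℕ) :
    cnt mark (a+n) (b+n) = cnt mark a b := by
  unfold cnt
  rw [← image_add_right_Ico, filter_image]
  rw [Finset.card_image_of_injective _ (add_left_injective n)]
  congr 1
  apply filter_congr
  intro x _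
  simp [hper x]

lemma cnt_window {n k : ℕ} (hper : ∀ i, mark (i+n) ↔ mark i)
    (hk : ((range n).filter mark).card = k) : ∀ a, cnt mark a (a+n) = k := by
  intro a
  induction a with
  | zero => unfold cnt; rw [← Finset.range_eq_Ico]; simpa using hk
  | succ a ih =>
    have h1 : cnt mark a (a+1) + cnt mark (a+1) (a+1+n) = cnt mark a (a+1+n) := by
      apply cnt_add <;> omega
    have h2 : cnt mark a (a+n) + cnt mark (a+n) (a+n+1) = cnt mark a (a+n+1) := by
      apply cnt_add <;> omega
    have h3 : cnt mark (a+n) (a+n+1) = cnt mark a (a+1) := by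
      rw [cnt_singleton, cnt_singleton]
      simp [hper a]
    have h4 : (a+1+n) = a+n+1 := by omega
    rw [h4] at h1 ⊢
    omega




lemma gap_extract (n k c : ℕ) (hn : 1 ≤ n) (hc1 : 1 ≤ c) (hck : c ≤ k) (h3c : 3*c ≤ k+2)
    (covered : ℕ → Prop) [DecidablePred covered]
    (hcovper : ∀ i, covered (i+n) ↔ covered i)
    (hwin : ∀ a, cnt mark a (a+n) = k)
    (p₀ : ℕ) (hp₀ : covered p₀)
    (hnogood : ∀ i j, i < j → j < i + n → covered i → covered j →
      ¬(c ≤ cnt mark (i+1) (j+1) ∧ c ≤ cnt mark (j+1) (i+n+1))) :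
    ∃ p q, covered p ∧ p < q ∧ q ≤ p + n ∧ (∀ r, p < r → r < q → ¬ covered r) ∧
      k + 1 ≤ cnt mark (p+1) (q+1) + c := by
  classical
  have hwin' : ∀ a, cnt mark (a+1) (a+n+1) = k := by
    intro a
    have := hwin (a+1)
    rwa [show a+1+n = a+n+1 by omega] at this
  set Qs : Finset ℕ := (Finset.Ioc p₀ (p₀+n)).filter
      (fun q => covered q ∧ c ≤ cnt mark (p₀+1) (q+1)) with hQs
  have hQmem : p₀ + n ∈ Qs := by
    simp only [hQs, mem_filter, Finset.mem_Ioc]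
    exact ⟨⟨by omega, le_refl _⟩, (hcovper p₀).mpr hp₀, by rw [hwin' p₀]; exact hck⟩
  have hQne : Qs.Nonempty := ⟨_, hQmem⟩
  set qq : ℕ := Qs.min' hQne with hqqdef
  have hqqQ : qq ∈ Qs := Qs.min'_mem hQne
  have hqq : p₀ < qq ∧ qq ≤ p₀ + n ∧ covered qq ∧ c ≤ cnt mark (p₀+1) (qq+1) := by
    have := hqqQ
    simp only [hQs, mem_filter, Finset.mem_Ioc] at this
    tauto
  set Ps : Finset ℕ := (Finset.Ico p₀ qq).filter covered with hPs
  have hPmem : p₀ ∈ Ps := by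
    simp only [hPs, mem_filter, Finset.mem_Ico]
    exact ⟨⟨le_refl _, hqq.1⟩, hp₀⟩
  have hPne : Ps.Nonempty := ⟨_, hPmem⟩
  set pp : ℕ := Ps.max' hPne with hppdef
  have hppP : pp ∈ Ps := Ps.max'_mem hPne
  have hpp : p₀ ≤ pp ∧ pp < qq ∧ covered pp := by
    have := hppP
    simp only [hPs, mem_filter, Finset.mem_Ico] at this
    tauto
  refine ⟨pp, qq, hpp.2.2, hpp.2.1, by omega, ?_, ?_⟩
  · -- uncovered in between
    intro r hr1 hr2 hrc
    have : r ∈ Ps := by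
      simp only [hPs, mem_filter, Finset.mem_Ico]
      exact ⟨⟨by omega, hr2⟩, hrc⟩
    have := Ps.le_max' r this
    omega
  · -- heavy count
    -- First: cnt (p₀+1) (qq+1) ≥ k - c + 1 (or qq = p₀ + n case)
    have hsplit : cnt mark (p₀+1) (qq+1) + cnt mark (qq+1) (p₀+n+1) = k := by
      rw [cnt_add (by omega : p₀+1 ≤ qq+1) (by omega : qq+1 ≤ p₀+n+1), hwin' p₀]
    have hqqheavy : k + 1 ≤ cnt mark (p₀+1) (qq+1) + c := by
      rcases eq_or_lt_of_le hqq.2.1 with heq | hlt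
      · rw [heq, hwin' p₀]; omega
      · have := hnogood p₀ qq hqq.1 hlt hp₀ hqq.2.2.1
        have h2 : ¬ (c ≤ cnt mark (qq+1) (p₀+n+1)) := by tauto
        omega
    rcases Nat.eq_or_lt_of_le hpp.1 with heqp | hltp
    · rw [heqp] at hqqheavy; exact hqqheavy
    · -- pp > p₀ : cnt (p₀+1) (pp+1) ≤ c - 1 since pp ∉ Qs below qq
      have hpplight : cnt mark (p₀+1) (pp+1) < c := by
        by_contra hge
        push_neg at hge
        have : pp ∈ Qs := by
          simp only [hQs, mem_filter, Finset.mem_Ioc]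
          exact ⟨⟨hltp, by omega⟩, hpp.2.2, hge⟩
        have := Qs.min'_le pp this
        omega
      have hsplit2 : cnt mark (p₀+1) (pp+1) + cnt mark (pp+1) (qq+1) = cnt mark (p₀+1) (qq+1) :=
        cnt_add (by omega) (by omega)
      -- cnt (pp+1) (qq+1) ≥ k - 2c + 2 ≥ c, so apply hnogood at (pp, qq)
      have hA : c ≤ cnt mark (pp+1) (qq+1) := by omega
      have := hnogood pp qq hpp.2.1 (by omega) hpp.2.2 hqq.2.2.1
      have hB : ¬ (c ≤ cnt mark (qq+1) (pp+n+1)) := by tauto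
      have hsplit3 : cnt mark (pp+1) (qq+1) + cnt mark (qq+1) (pp+n+1) = k := by
        rw [cnt_add (by omega : pp+1 ≤ qq+1) (by omega : qq+1 ≤ pp+n+1), hwin' pp]
      omega



variable {V : Type*} {G : SimpleGraph V}

lemma support_get_getVert {u v : V} (p : G.Walk u v) (i : ℕ) (h : i < p.support.length) :
    p.support.get ⟨i, h⟩ = p.getVert i := by
  induction p generalizing i with
  | nil => simp at h; simp [h]
  | cons hadj q ih =>
    cases i with
    | zero => simp
    | succ i =>
      rw [Walk.getVert_cons_succ]
      have h' : i < q.support.length := by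
        simpa [Walk.support_cons] using h
      rw [← ih i h']
      simp [Walk.support_cons]

lemma getVert_mem_support {u v : V} (p : G.Walk u v) (i : ℕ) (h : i ≤ p.length) :
    p.getVert i ∈ p.support := by
  have h' : i < p.support.length := by rw [Walk.length_support]; omega
  rw [← support_get_getVert p i h']
  exact List.get_mem _ _

lemma edges_eq_map {u v : V} (p : G.Walk u v) :
    p.edges = (List.range p.length).map (fun r => s(p.getVert r, p.getVert (r+1))) := by
  induction p with
  | nil => simp
  | cons hadj q ih =>
    rw [Walk.edges_cons, Walk.length_cons, List.range_succ_eq_map, List.map_cons, ih]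
    congr 1
    · simp [Walk.getVert_cons_succ]
    · rw [List.map_map]
      apply List.map_congr_left
      intro r _
      simp [Walk.getVert_cons_succ]

lemma walk_cross (f : V → Prop) {u v : V} (p : G.Walk u v) (hu : ¬ f u) (hv : f v) :
    ∃ w₁ w₂, s(w₁,w₂) ∈ p.edges ∧ ¬ f w₁ ∧ f w₂ := by
  classical
  induction p with
  | nil => exact absurd hv hu
  | @cons a b c hadj q ih =>
    by_cases hb : f b
    · exact ⟨a, b, by simp, hu, hb⟩
    · obtain ⟨w₁, w₂, hmem, h1, h2⟩ := ih hb hv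
      exact ⟨w₁, w₂, by simp [hmem], h1, h2⟩



variable {W : Type*} [DecidableEq W] {T : SimpleGraph W}

lemma path_eq (hacy : T.IsAcyclic) {a b : W} (p q : T.Walk a b)
    (hp : p.IsPath) (hq : q.IsPath) : p = q := by
  have := (isAcyclic_iff_path_unique.mp hacy) (⟨p, hp⟩ : T.Path a b) ⟨q, hq⟩
  exact congrArg Subtype.val this

lemma len_decr (hacy : T.IsAcyclic) {s s' z : W} (h : T.Adj s s')
    (q : T.Walk s' z) (hq : s ∉ q.support)
    (P : T.Walk s z) (hP : P.IsPath) (Q : T.Walk s' z) (hQ : Q.IsPath) :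
    Q.length + 1 = P.length := by
  have hQq : Q = (q.toPath : T.Walk s' z) := path_eq hacy _ _ hQ (q.toPath).2
  have hsQ : s ∉ Q.support := by
    rw [hQq]
    intro hmem
    exact hq (Walk.support_toPath_subset q hmem)
  have hR : (Walk.cons h Q).IsPath := by
    rw [Walk.cons_isPath_iff]
    exact ⟨hQ, hsQ⟩
  have := path_eq hacy P (Walk.cons h Q) hP hR
  rw [this, Walk.length_cons]

lemma len_incr (hacy : T.IsAcyclic) {s s' z : W} (h : T.Adj s' s)
    (P : T.Walk s z) (Q : T.Walk s' z) (hQ : Q.IsPath) :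
    Q.length ≤ P.length + 1 := by
  have h1 : Q = ((Walk.cons h P).toPath : T.Walk s' z) :=
    path_eq hacy _ _ hQ (Walk.cons h P).toPath.2
  have h2 : ((Walk.cons h P).toPath : T.Walk s' z).length ≤ (Walk.cons h P).length :=
    Walk.length_bypass_le _
  rw [h1]
  simpa using h2

lemma successor (hacy : T.IsAcyclic) {α β s : W} (p : T.Walk α β) (hp : p.IsPath)
    (hs : s ∈ p.support) (hne : s ≠ β) :
    ∃ (s' : W) (q : T.Walk s' β), T.Adj s s' ∧ s ∉ q.support ∧ s' ∈ p.support := by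
  classical
  set d := p.dropUntil s hs with hd
  have hdp : d.IsPath := hp.dropUntil hs
  cases hdnil : d with
  | nil => exact absurd rfl hne
  | cons hadj q =>
    rename_i s''
    refine ⟨s'', q, hadj, ?_, ?_⟩
    · have := hdp
      rw [hdnil, Walk.cons_isPath_iff] at this
      exact this.2
    · have hq : s'' ∈ d.support := by
        rw [hdnil]
        simp [Walk.support_cons]
      exact Walk.support_dropUntil_subset p hs hq

section TreeMain

variable {W : Type*} [DecidableEq W] {T : SimpleGraph W}

lemma tree_main (hconn : T.Connected) (hacy : T.IsAcyclic)
    (n k c : ℕ) (hn : 1 ≤ n) (hk2 : 2 ≤ k) (hc : c = (k+2)/3)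
    (t : ℕ → W) (ht : ∀ i, t (i+n) = t i)
    (mark : ℕ → Prop) [DecidablePred mark] (hper : ∀ i, mark (i+n) ↔ mark i)
    (hk : ((Finset.range n).filter mark).card = k) :
    ∃ (s : W) (i j : ℕ), i < j ∧ j < i + n ∧
      (∃ p : T.Walk (t i) (t (i+1)), p.IsPath ∧ s ∈ p.support) ∧
      (∃ q : T.Walk (t j) (t (j+1)), q.IsPath ∧ s ∈ q.support) ∧
      c ≤ cnt mark (i+1) (j+1) ∧ c ≤ cnt mark (j+1) (i+n+1) := by
  classical
  have hc1 : 1 ≤ c := by omega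
  have hck : c ≤ k := by omega
  have h3c : 3*c ≤ k+2 := by omega
  have h2c : 2*c ≤ k := by omega
  have hreach : ∀ a b : W, T.Reachable a b := fun a b => hconn.preconnected a b
  let cp : ∀ a b : W, T.Path a b := fun a b => (Classical.choice (hreach a b)).toPath
  -- congruence for t
  have ht_mul : ∀ q i, t (i + n*q) = t i := by
    intro q
    induction q with
    | zero => intro i; simp
    | succ q ih =>
      intro i
      have : i + n*(q+1) = (i + n*q) + n := by ring
      rw [this, ht, ih]
  have ht_cong : ∀ i j, i % n = j % n → t i = t j := by
    have key : ∀ i j, i ≤ j → i % n = j % n → t i = t j := by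
      intro i j hij hmod
      have hdvd : n ∣ j - i := (Nat.modEq_iff_dvd' hij).mp hmod
      obtain ⟨q, hq⟩ := hdvd
      have : j = i + n * q := by omega
      rw [this, ht_mul]
    intro i j hmod
    rcases le_total i j with h | h
    · exact key i j h hmod
    · exact (key j i h hmod.symm).symm
  have hmodmod : ∀ a : ℕ, a % n % n = a % n := fun a => Nat.mod_mod_of_dvd a dvd_rfl
  have ht_mod : ∀ i, t i = t (i % n) := fun i => ht_cong i (i % n) (hmodmod i).symm
  have hsucc_cong : ∀ i, (i+1) % n = (i % n + 1) % n := by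
    intro i
    conv_lhs => rw [Nat.add_mod]
    conv_rhs => rw [Nat.add_mod, hmodmod]
  -- natural-number injectivity of residues on short intervals
  have mod_inj : ∀ a b, a ≤ b → b < a + n → a % n = b % n → a = b := by
    intro a b hab hlt hmod
    have hdvd : n ∣ b - a := (Nat.modEq_iff_dvd' hab).mp hmod
    rcases Nat.eq_zero_of_dvd_of_lt hdvd (by omega) with h
    · omega
  have hmark_mod : ∀ i, mark (i % n) ↔ mark i := by
    intro i
    induction i using Nat.strong_induction_on with
    | _ i ih =>
      by_cases h : i < n
      · rw [Nat.mod_eq_of_lt h]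
      · have h1 : i = (i - n) + n := by omega
        rw [h1, hper, Nat.add_mod_right]
        exact ih (i - n) (by omega)
  -- the finset of all segment-support vertices
  set S : Finset W :=
    (Finset.range n).biUnion (fun r => ((cp (t r) (t (r+1))).1.support.toFinset)) with hS
  have hSmem : ∀ (s : W) (r : ℕ), s ∈ (cp (t r) (t (r+1))).1.support → s ∈ S := by
    intro s r hs
    rw [hS]
    apply Finset.mem_biUnion.mpr
    refine ⟨r % n, Finset.mem_range.mpr (Nat.mod_lt _ (by omega)), ?_⟩
    rw [List.mem_toFinset]
    rw [ht_cong (r % n) r (by rw [hmodmod]), ht_cong (r % n + 1) (r+1) (hsucc_cong r).symm]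
    exact hs
  have hSne : S.Nonempty := by
    refine ⟨t 0, hSmem (t 0) 0 ?_⟩
    exact Walk.start_mem_support _
  set M : Finset ℕ := (Finset.range n).filter mark with hM
  set Φ : W → ℕ := fun s => ∑ m ∈ M, (cp s (t m)).1.length with hΦdef
  obtain ⟨s₀, hs₀S, hs₀min⟩ := S.exists_min_image Φ hSne
  by_contra hno
  -- get a covered position for s₀
  obtain ⟨r₀, hr₀n, hs₀r₀⟩ := Finset.mem_biUnion.mp hs₀S
  rw [List.mem_toFinset] at hs₀r₀
  -- apply gap extraction
  have hwin : ∀ a, cnt mark a (a+n) = k := cnt_window hper hk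
  have hgap := gap_extract n k c hn hc1 hck h3c
    (fun i => s₀ ∈ (cp (t i) (t (i+1))).1.support)
    (by
      intro i
      have e1 : t (i+n) = t i := ht_cong (i+n) i (by simp)
      have e2 : t (i+n+1) = t (i+1) := ht_cong (i+n+1) (i+1) (by
          have : i+n+1 = (i+1)+n := by ring
          rw [this]; simp)
      constructor
      · intro h
        have h' : s₀ ∈ (cp (t (i+n)) (t (i+n+1))).1.support := h
        rw [e1, e2] at h'
        exact h'
      · intro h
        show s₀ ∈ (cp (t (i+n)) (t (i+n+1))).1.support
        rw [e1, e2]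
        exact h)
    hwin r₀ hs₀r₀
    (by
      intro i j hij hjn hci hcj hcnt
      exact hno ⟨s₀, i, j, hij, hjn, ⟨(cp (t i) (t (i+1))).1, (cp _ _).2, hci⟩,
        ⟨(cp (t j) (t (j+1))).1, (cp _ _).2, hcj⟩, hcnt.1, hcnt.2⟩)
  obtain ⟨pp, qq, hcovpp, hppqq, hqqle, huncov, hheavy⟩ := hgap
  have hcntle : cnt mark (pp+1) (qq+1) ≤ qq - pp := by
    have := cnt_le (mark := mark) (a := pp+1) (b := qq+1)
    omega
  have hqp2 : pp + 2 ≤ qq := by omega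
  -- t (pp+1) ≠ s₀
  have hne : s₀ ≠ t (pp+1) := by
    intro h
    apply huncov (pp+1) (by omega) (by omega)
    rw [h]
    exact Walk.start_mem_support _
  -- successor
  obtain ⟨s', q0, hadj, hs0q0, hs'supp⟩ :=
    successor hacy (cp (t pp) (t (pp+1))).1 (cp _ _).2 hcovpp hne
  -- avoid walks
  have avoid : ∀ m, pp+1 ≤ m → m ≤ qq → ∃ w : T.Walk s' (t m), s₀ ∉ w.support := by
    intro m hm1
    induction m, hm1 using Nat.le_induction with
    | base => intro _; exact ⟨q0, hs0q0⟩
    | succ m hm ih =>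
      intro hm2
      obtain ⟨w, hw⟩ := ih (by omega)
      refine ⟨w.append (cp (t m) (t (m+1))).1, ?_⟩
      rw [Walk.support_append]
      intro hmem
      rcases List.mem_append.mp hmem with h | h
      · exact hw h
      · apply huncov m (by omega) (by omega)
        exact List.mem_of_mem_tail h
  -- heavy residue set
  set H : Finset ℕ := ((Finset.Ico (pp+1) (qq+1)).filter mark).image (· % n) with hH
  have hHsub : H ⊆ M := by
    intro ρ hρ
    rw [hH] at hρ
    obtain ⟨m, hm, rfl⟩ := Finset.mem_image.mp hρ
    rw [Finset.mem_filter, Finset.mem_Ico] at hm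
    rw [hM, Finset.mem_filter, Finset.mem_range]
    constructor
    · exact Nat.mod_lt _ (by omega)
    · exact (hmark_mod m).mpr hm.2
  have hHcard : H.card = cnt mark (pp+1) (qq+1) := by
    rw [hH]
    unfold cnt
    apply Finset.card_image_of_injOn
    intro m1 h1 m2 h2 hmod
    rw [Finset.coe_filter, Set.mem_setOf_eq, Finset.mem_Ico] at h1 h2
    rcases le_total m1 m2 with h | h
    · exact mod_inj m1 m2 h (by omega) hmod
    · exact (mod_inj m2 m1 h (by omega) hmod.symm).symm
  -- decrements and increments
  have hdec : ∀ ρ ∈ H, (cp s' (t ρ)).1.length + 1 = (cp s₀ (t ρ)).1.length := by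
    intro ρ hρ
    rw [hH] at hρ
    obtain ⟨m, hm, rfl⟩ := Finset.mem_image.mp hρ
    rw [Finset.mem_filter, Finset.mem_Ico] at hm
    have hw : ∃ w : T.Walk s' (t (m % n)), s₀ ∉ w.support := by
      rw [← ht_mod m]
      exact avoid m hm.1.1 (by omega)
    obtain ⟨w, hw⟩ := hw
    exact len_decr hacy hadj w hw _ (cp s₀ (t (m % n))).2 _ (cp s' (t (m % n))).2
  have hinc : ∀ ρ ∈ M \ H, (cp s' (t ρ)).1.length ≤ (cp s₀ (t ρ)).1.length + 1 := by
    intro ρ _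
    exact len_incr hacy hadj.symm (cp s₀ (t ρ)).1 (cp s' (t ρ)).1 (cp s' (t ρ)).2
  -- sum comparison
  have hΦs' : Φ s' + H.card + H.card ≤ Φ s₀ + M.card := by
    have hsplit1 : ∑ m ∈ M \ H, (cp s' (t m)).1.length + ∑ m ∈ H, (cp s' (t m)).1.length
        = Φ s' := Finset.sum_sdiff hHsub
    have hsplit2 : ∑ m ∈ M \ H, (cp s₀ (t m)).1.length + ∑ m ∈ H, (cp s₀ (t m)).1.length
        = Φ s₀ := Finset.sum_sdiff hHsub
    have e1 : ∑ m ∈ H, (cp s' (t m)).1.length + H.card = ∑ m ∈ H, (cp s₀ (t m)).1.length := by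
      rw [Finset.card_eq_sum_ones H, ← Finset.sum_add_distrib]
      exact Finset.sum_congr rfl (fun ρ hρ => hdec ρ hρ)
    have e2 : ∑ m ∈ M \ H, (cp s' (t m)).1.length
        ≤ ∑ m ∈ M \ H, (cp s₀ (t m)).1.length + (M \ H).card := by
      rw [Finset.card_eq_sum_ones (M \ H), ← Finset.sum_add_distrib]
      exact Finset.sum_le_sum hinc
    have e3 : (M \ H).card + H.card = M.card := Finset.card_sdiff_add_card_eq_card hHsub
    omega
  have hMk : M.card = k := hk
  have hΦlt : Φ s' < Φ s₀ := by omega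
  have hs'S : s' ∈ S := hSmem s' pp hs'supp
  have := hs₀min s' hs'S
  omega

end TreeMain

section Cycle

variable {V : Type*} {G : SimpleGraph V} {a : V}

lemma cyc_getVert_inj (C : G.Walk a a) (hC : C.IsCycle) {i j : ℕ}
    (h1 : i < C.length) (h2 : j < C.length) (h : C.getVert i = C.getVert j) : i = j := by
  have hnd : C.support.tail.Nodup := hC.support_nodup
  have hlen : C.support.tail.length = C.length := by
    have := C.length_support
    rw [List.length_tail, this]
    omega
  have htail : ∀ (m : ℕ) (hm : m < C.support.tail.length),
      C.support.tail.get ⟨m, hm⟩ = C.getVert (m+1) := by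
    intro m hm
    have hm1 : m + 1 < C.support.length := by
      rw [C.length_support]; rw [hlen] at hm; omega
    rw [List.get_tail C.support m hm hm1]
    exact support_get_getVert C (m+1) hm1
  -- injectivity of tail.get
  have hinj : ∀ (m m' : ℕ) (hm : m < C.support.tail.length) (hm' : m' < C.support.tail.length),
      C.getVert (m+1) = C.getVert (m'+1) → m = m' := by
    intro m m' hm hm' hh
    rw [← htail m hm, ← htail m' hm'] at hh
    have := (List.Nodup.get_inj_iff hnd).mp hh
    simpa using this
  rcases Nat.eq_zero_or_pos i with hi0 | hipos
  · rcases Nat.eq_zero_or_pos j with hj0 | hjpos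
    · omega
    · -- i = 0 : getVert 0 = a = getVert C.length
      exfalso
      subst hi0
      have h' : C.getVert C.length = C.getVert j := C.getVert_length.trans (C.getVert_zero.symm.trans h)
      have hjn : j - 1 < C.support.tail.length := by omega
      have hnn : C.length - 1 < C.support.tail.length := by
        have := hC.three_le_length
        omega
      have := hinj (C.length - 1) (j - 1) hnn hjn (by
        rw [show C.length - 1 + 1 = C.length by have := hC.three_le_length; omega,
          show j - 1 + 1 = j by omega]
        exact h')
      have := hC.three_le_length
      omega
  · rcases Nat.eq_zero_or_pos j with hj0 | hjpos
    · exfalso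
      subst hj0
      have h' : C.getVert i = C.getVert C.length := h.trans (C.getVert_zero.trans C.getVert_length.symm)
      have hin : i - 1 < C.support.tail.length := by omega
      have hnn : C.length - 1 < C.support.tail.length := by
        have := hC.three_le_length
        omega
      have := hinj (i - 1) (C.length - 1) hin hnn (by
        rw [show C.length - 1 + 1 = C.length by have := hC.three_le_length; omega,
          show i - 1 + 1 = i by omega]
        exact h')
      have := hC.three_le_length
      omega
    · have hin : i - 1 < C.support.tail.length := by omega
      have hjn : j - 1 < C.support.tail.length := by omega
      have := hinj (i-1) (j-1) hin hjn (by
        rw [show i - 1 + 1 = i by omega, show j - 1 + 1 = j by omega]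
        exact h)
      omega

end Cycle

end StmtAux

open StmtAux in
/-- Let C be a cycle of G, F ⊆ E(C) with |F| ≥ 2, and (T, B) a tree-decomposition of G. Then
some bag contains vertices u, v of C with d_{C,F}(u,v) ≥ |F|/3, i.e. every path of C between
u and v carries at least |F|/3 edges of F. -/
theorem stmt_4 {V W : Type*} [DecidableEq V] (G : SimpleGraph V) (T : SimpleGraph W)
    (B : W → Set V) (hTD : TreeDecomp G T B)
    {a : V} (C : G.Walk a a) (hC : C.IsCycle)
    (F : Finset (Sym2 V)) (hF : ∀ e ∈ F, e ∈ C.edges) (hcard : 2 ≤ F.card) :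
    ∃ (t : W) (u v : V), u ∈ C.support ∧ u ∈ B t ∧ v ∈ C.support ∧ v ∈ B t ∧
      ∀ P : G.Walk u v, P.IsPath → (∀ e ∈ P.edges, e ∈ C.edges) →
        F.card ≤ 3 * (F ∩ P.edges.toFinset).card := by
  classical
  set n := C.length with hn
  have hn3 : 3 ≤ n := hC.three_le_length
  have hnpos : 0 < n := by omega
  have hmod_lt : ∀ i : ℕ, i % n < n := fun i => Nat.mod_lt _ hnpos
  have hmodmod : ∀ i : ℕ, i % n % n = i % n := fun i => Nat.mod_mod_of_dvd i dvd_rfl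
  have hsucc_mod : ∀ i : ℕ, (i+1) % n = (i % n + 1) % n := by
    intro i
    conv_lhs => rw [Nat.add_mod]
    conv_rhs => rw [Nat.add_mod, hmodmod]
  have mod_inj : ∀ a b : ℕ, a ≤ b → b < a + n → a % n = b % n → a = b := by
    intro a b hab hlt hmod
    have hdvd : n ∣ b - a := (Nat.modEq_iff_dvd' hab).mp hmod
    rcases Nat.eq_zero_or_pos (b - a) with h | h
    · omega
    · have := Nat.le_of_dvd h hdvd
      omega
  set x : ℕ → V := fun i => C.getVert (i % n) with hx
  have hx_cong : ∀ i j, i % n = j % n → x i = x j := by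
    intro i j h
    simp only [hx, h]
  have hx_mod : ∀ i, x (i % n) = x i := fun i => hx_cong _ _ (hmodmod i)
  have hxinj : ∀ i j, x i = x j → i % n = j % n := by
    intro i j h
    exact cyc_getVert_inj C hC (hmod_lt i) (hmod_lt j) h
  have hxsucc : ∀ i, x (i+1) = C.getVert (i % n + 1) := by
    intro i
    by_cases h : i % n + 1 < n
    · show C.getVert ((i+1) % n) = _
      rw [hsucc_mod i, Nat.mod_eq_of_lt h]
    · have hieq : i % n = n - 1 := by have := hmod_lt i; omega
      have h1 : (i+1) % n = 0 := by
        rw [hsucc_mod i, hieq, show n - 1 + 1 = n by omega, Nat.mod_self]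
      show C.getVert ((i+1) % n) = _
      rw [h1, hieq, show n - 1 + 1 = n by omega, C.getVert_zero, hn, C.getVert_length]
  set e : ℕ → Sym2 V := fun i => s(x i, x (i+1)) with he
  have he_def : ∀ i, e i = s(C.getVert (i % n), C.getVert (i % n + 1)) := by
    intro i
    simp only [he, hxsucc i]
    rfl
  have hedges : C.edges = (List.range n).map (fun r => s(C.getVert r, C.getVert (r+1))) :=
    edges_eq_map C
  have he_mem : ∀ i, e i ∈ C.edges := by
    intro i
    rw [hedges, List.mem_map]
    exact ⟨i % n, List.mem_range.mpr (hmod_lt i), (he_def i).symm⟩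
  have he_char : ∀ d ∈ C.edges, ∃ ρ, ρ < n ∧ d = e ρ := by
    intro d hd
    rw [hedges, List.mem_map] at hd
    obtain ⟨ρ, hρ, hde⟩ := hd
    refine ⟨ρ, List.mem_range.mp hρ, ?_⟩
    rw [he_def ρ, Nat.mod_eq_of_lt (List.mem_range.mp hρ)]
    exact hde.symm
  have he_cong : ∀ i j, i % n = j % n → e i = e j := by
    intro i j h
    rw [he_def, he_def, h]
  have he_inj : ∀ i j, e i = e j → i % n = j % n := by
    intro i j h
    by_contra hne
    have hnd : C.edges.Nodup := hC.isCircuit.isTrail.edges_nodup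
    rw [hedges] at hnd
    have hlenmap : ((List.range n).map
        (fun r => s(C.getVert r, C.getVert (r+1)))).length = n := by simp
    have hi' : i % n < ((List.range n).map
        (fun r => s(C.getVert r, C.getVert (r+1)))).length := by rw [hlenmap]; exact hmod_lt i
    have hj' : j % n < ((List.range n).map
        (fun r => s(C.getVert r, C.getVert (r+1)))).length := by rw [hlenmap]; exact hmod_lt j
    have := (List.Nodup.getElem_inj_iff hnd (hi := hi') (hj := hj')).mp
      (by
        rw [List.getElem_map, List.getElem_map, List.getElem_range, List.getElem_range]
        rw [← he_def, ← he_def]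
        exact h)
    exact hne this
  have hadj : ∀ i, G.Adj (x i) (x (i+1)) := by
    intro i
    rw [hxsucc i]
    exact C.adj_getVert_succ (hmod_lt i)
  have hbag : ∀ i, ∃ tt, x i ∈ B tt ∧ x (i+1) ∈ B tt := fun i => hTD.coversEdges (hadj i)
  set t : ℕ → W := fun i => (hbag (i % n)).choose with htdef
  have ht_spec : ∀ i, x i ∈ B (t i) ∧ x (i+1) ∈ B (t i) := by
    intro i
    have h := (hbag (i % n)).choose_spec
    constructor
    · rw [← hx_mod i]
      exact h.1
    · have hxx : x (i % n + 1) = x (i+1) := hx_cong _ _ (hsucc_mod i).symm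
      rw [← hxx]
      exact h.2
  have ht_per : ∀ i, t (i+n) = t i := by
    intro i
    simp only [htdef, Nat.add_mod_right]
  set mark : ℕ → Prop := fun i => e i ∈ F with hmark
  have hmark_per : ∀ i, mark (i+n) ↔ mark i := by
    intro i
    simp only [hmark]
    rw [he_cong (i+n) i (by simp)]
  set k := F.card with hkdef
  have himg : ((Finset.range n).filter mark).image e = F := by
    apply Finset.ext
    intro d
    constructor
    · intro hd
      obtain ⟨m, hm, rfl⟩ := Finset.mem_image.mp hd
      exact (Finset.mem_filter.mp hm).2
    · intro hd
      obtain ⟨ρ, hρn, rfl⟩ := he_char d (hF d hd)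
      exact Finset.mem_image.mpr ⟨ρ, Finset.mem_filter.mpr ⟨Finset.mem_range.mpr hρn, hd⟩, rfl⟩
  have hkcard : ((Finset.range n).filter mark).card = k := by
    have hinj : Set.InjOn e ((Finset.range n).filter mark) := by
      intro m1 h1 m2 h2 hee
      rw [Finset.coe_filter, Set.mem_setOf_eq, Finset.mem_range] at h1 h2
      have := he_inj m1 m2 hee
      rwa [Nat.mod_eq_of_lt h1.1, Nat.mod_eq_of_lt h2.1] at this
    rw [hkdef]
    conv_rhs => rw [← himg]
    rw [Finset.card_image_of_injOn hinj]
  obtain ⟨s, i, j, hij, hjn, ⟨pI, hpI, hsI⟩, ⟨pJ, hpJ, hsJ⟩, hcnt1, hcnt2⟩ :=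
    tree_main hTD.isTree.isConnected hTD.isTree.IsAcyclic n k ((k+2)/3) (by omega)
      (by omega) rfl t ht_per mark hmark_per hkcard
  refine ⟨s, x (i+1), x (j+1), ?_, ?_, ?_, ?_, ?_⟩
  · exact getVert_mem_support C ((i+1) % n) (le_of_lt (hmod_lt (i+1)))
  · exact hTD.interpolation pI hpI hsI ⟨(ht_spec i).2, (ht_spec (i+1)).1⟩
  · exact getVert_mem_support C ((j+1) % n) (le_of_lt (hmod_lt (j+1)))
  · exact hTD.interpolation pJ hpJ hsJ ⟨(ht_spec j).2, (ht_spec (j+1)).1⟩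
  · intro P hP hPC
    have he_eval : ∀ i, e i = s(x i, x (i+1)) := fun i => by rw [he]
    set c := (k+2)/3 with hcdef
    suffices hcc : c ≤ (F ∩ P.edges.toFinset).card by
      omega
    have hcut : ∀ m₁ m₂, i+1 ≤ m₁ → m₁ ≤ j → j+1 ≤ m₂ → m₂ ≤ i+n →
        e m₁ ∉ P.edges → e m₂ ∈ P.edges := by
      intro m₁ m₂ hm11 hm12 hm21 hm22 hm₁P
      set f : V → Prop := fun w => ∃ r, m₁+1 ≤ r ∧ r ≤ m₂ ∧ x r = w with hfdef
      have hfv : f (x (j+1)) := ⟨j+1, by omega, by omega, rfl⟩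
      have hfu : ¬ f (x (i+1)) := by
        rintro ⟨r, hr1, hr2, hr⟩
        have hcong := hxinj r (i+1) hr
        have h2 : i+1 ≤ r := by omega
        have hdvd : n ∣ r - (i+1) := (Nat.modEq_iff_dvd' h2).mp hcong.symm
        rcases Nat.eq_zero_or_pos (r - (i+1)) with h0 | hpos
        · omega
        · have := Nat.le_of_dvd hpos hdvd
          omega
      obtain ⟨w₁, w₂, hmem, hw1, hw2⟩ := walk_cross f P hfu hfv
      obtain ⟨ρ, hρn, hρe⟩ := he_char _ (hPC _ hmem)
      obtain ⟨qd, rd, hqr, hrd⟩ : ∃ qd rd, m₁ + n - ρ = qd * n + rd ∧ rd < n :=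
        ⟨(m₁+n-ρ)/n, (m₁+n-ρ)%n, by rw [mul_comm]; exact (Nat.div_add_mod _ n).symm,
          Nat.mod_lt _ hnpos⟩
      set r' := ρ + qd * n with hr'def
      have hr'cong : r' % n = ρ % n := by
        simp [hr'def, Nat.add_mul_mod_self_right]
      have hr'lo : m₁ + 1 ≤ r' := by omega
      have hr'hi : r' ≤ m₁ + n := by omega
      have hd : s(w₁, w₂) = s(x r', x (r'+1)) := by
        rw [hρe, he_cong ρ r' hr'cong.symm, he_eval r']
      have hm2le : m₂ ≤ m₁ + n - 1 := by omega
      have hfx : ∀ r'', m₁+1 ≤ r'' → r'' ≤ m₁+n → (f (x r'') ↔ r'' ≤ m₂) := by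
        intro r'' h1 h2
        constructor
        · rintro ⟨r, hrr1, hrr2, hrr⟩
          have hcong := hxinj r r'' hrr
          have : r = r'' := by
            rcases le_total r r'' with h | h
            · exact mod_inj r r'' h (by omega) hcong
            · exact (mod_inj r'' r h (by omega) hcong.symm).symm
          omega
        · intro h
          exact ⟨r'', h1, h, rfl⟩
      rcases Sym2.eq_iff.mp hd with ⟨h1, h2⟩ | ⟨h1, h2⟩
      · rw [h1] at hw1
        rw [h2] at hw2
        by_cases hcase : r' + 1 ≤ m₁ + n
        · have ha := (hfx (r'+1) (by omega) hcase).mp hw2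
          have hb : ¬ (r' ≤ m₂) := fun hh => hw1 ((hfx r' hr'lo hr'hi).mpr hh)
          omega
        · exfalso
          have hr'eq : r' = m₁ + n := by omega
          apply hm₁P
          have hee : e m₁ = s(w₁, w₂) := by
            rw [hd, ← he_eval r']
            exact he_cong m₁ r' (by rw [hr'eq]; simp)
          rw [hee]
          exact hmem
      · rw [h1] at hw1
        rw [h2] at hw2
        have hfr' := (hfx r' hr'lo hr'hi).mp hw2
        by_cases hcase : r' + 1 ≤ m₁ + n
        · have hb : ¬ (r'+1 ≤ m₂) := fun hh => hw1 ((hfx (r'+1) (by omega) hcase).mpr hh)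
          have hr'm2 : r' = m₂ := by omega
          rw [← hr'm2, he_eval r', ← hd]
          exact hmem
        · exfalso
          have hr'eq : r' = m₁ + n := by omega
          apply hw1
          have hxeq : x (r'+1) = x (m₁+1) := hx_cong _ _ (by
            rw [hr'eq, show m₁+n+1 = (m₁+1)+n by ring]
            simp)
          rw [hxeq]
          exact (hfx (m₁+1) (le_refl _) (by omega)).mpr (by omega)
    by_cases hall : ∀ m ∈ (Finset.Ico (i+1) (j+1)).filter mark, e m ∈ P.edges
    · have hsub : ((Finset.Ico (i+1) (j+1)).filter mark).image e ⊆ F ∩ P.edges.toFinset := by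
        intro d hd
        obtain ⟨m, hm, rfl⟩ := Finset.mem_image.mp hd
        rw [Finset.mem_inter]
        exact ⟨(Finset.mem_filter.mp hm).2, List.mem_toFinset.mpr (hall m hm)⟩
      have hinj2 : Set.InjOn e ((Finset.Ico (i+1) (j+1)).filter mark) := by
        intro m1 h1 m2 h2 hee
        rw [Finset.coe_filter, Set.mem_setOf_eq, Finset.mem_Ico] at h1 h2
        have := he_inj m1 m2 hee
        rcases le_total m1 m2 with h | h
        · exact mod_inj m1 m2 h (by omega) this
        · exact (mod_inj m2 m1 h (by omega) this.symm).symm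
      have hle := Finset.card_le_card hsub
      rw [Finset.card_image_of_injOn hinj2] at hle
      have hcnt1' : cnt mark (i+1) (j+1) = ((Finset.Ico (i+1) (j+1)).filter mark).card := rfl
      omega
    · push_neg at hall
      obtain ⟨m₁, hm₁mem, hm₁P⟩ := hall
      rw [Finset.mem_filter, Finset.mem_Ico] at hm₁mem
      have hcutall : ∀ m ∈ (Finset.Ico (j+1) (i+n+1)).filter mark, e m ∈ P.edges := by
        intro m hm
        rw [Finset.mem_filter, Finset.mem_Ico] at hm
        exact hcut m₁ m (by omega) (by omega) (by omega) (by omega) hm₁P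
      have hsub : ((Finset.Ico (j+1) (i+n+1)).filter mark).image e ⊆ F ∩ P.edges.toFinset := by
        intro d hd
        obtain ⟨m, hm, rfl⟩ := Finset.mem_image.mp hd
        rw [Finset.mem_inter]
        refine ⟨(Finset.mem_filter.mp hm).2, List.mem_toFinset.mpr (hcutall m hm)⟩
      have hinj2 : Set.InjOn e ((Finset.Ico (j+1) (i+n+1)).filter mark) := by
        intro m1 h1 m2 h2 hee
        rw [Finset.coe_filter, Set.mem_setOf_eq, Finset.mem_Ico] at h1 h2
        have := he_inj m1 m2 hee
        rcases le_total m1 m2 with h | h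
        · exact mod_inj m1 m2 h (by omega) this
        · exact (mod_inj m2 m1 h (by omega) this.symm).symm
      have hle := Finset.card_le_card hsub
      rw [Finset.card_image_of_injOn hinj2] at hle
      have hcnt2' : cnt mark (j+1) (i+n+1) = ((Finset.Ico (j+1) (i+n+1)).filter mark).card := rfl
      omega
end

section
/- If G has a geodesic cycle C (a cycle in which distances agree with distances in G), then in every tree-decomposition of G some bag contains two vertices at G-distance at least |C|/3; hence odw(G) ≥ |C|/3. -/
open SimpleGraph

set_option linter.unusedSectionVars false
set_option linter.unusedVariables false

section TreeAux

variable {W : Type*} [DecidableEq W] {T : SimpleGraph W}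

/-- Appending two paths that share only the middle vertex gives a path. -/
lemma aux_isPath_append {u v w : W} {p : T.Walk u v} {q : T.Walk v w}
    (hp : p.IsPath) (hq : q.IsPath)
    (hint : ∀ y, y ∈ p.support → y ∈ q.support → y = v) : (p.append q).IsPath := by
  rw [Walk.isPath_def, Walk.support_append]
  refine List.Nodup.append hp.support_nodup ?_ ?_
  · exact hq.support_nodup.sublist (List.tail_sublist _)
  · intro y hy hy'
    have hyq : y ∈ q.support := List.mem_of_mem_tail hy'
    have : y = v := hint y hy hyq
    subst this
    have := hq.support_nodup
    rw [Walk.support_eq_cons] at this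
    exact (List.nodup_cons.mp this).1 hy'

variable (hT : T.IsTree) (pp : ∀ t s : W, T.Walk t s)
  (hppath : ∀ t s, (pp t s).IsPath)
  (hpuniq : ∀ t s (q : T.Walk t s), q.IsPath → q = pp t s)

include hT hppath hpuniq

lemma aux_dist_eq (t s : W) : T.dist t s = (pp t s).length := by
  classical
  refine le_antisymm (dist_le _) ?_
  obtain ⟨w, hw⟩ := hT.isConnected.exists_walk_length_eq_dist t s
  calc (pp t s).length = w.bypass.length := by rw [hpuniq t s w.bypass w.bypass_isPath]
    _ ≤ w.length := Walk.length_bypass_le w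
    _ = T.dist t s := hw

lemma aux_exists_dir {t s : W} (h : s ≠ t) :
    ∃ x, T.Adj t x ∧ T.dist t s = T.dist x s + 1 ∧ (pp t s).getVert 1 = x := by
  obtain ⟨x, hadj, q, hq⟩ := Walk.exists_eq_cons_of_ne h.symm (pp t s)
  have hqpath : q.IsPath := by
    have := hppath t s; rw [hq] at this; exact this.of_cons
  refine ⟨x, hadj, ?_, ?_⟩
  · rw [aux_dist_eq hT pp hppath hpuniq t s, aux_dist_eq hT pp hppath hpuniq x s,
      ← hpuniq x s q hqpath, hq, Walk.length_cons]
  · rw [hq, Walk.getVert_cons_succ, Walk.getVert_zero]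

end TreeAux

section TreeAux2

variable {W : Type*} [DecidableEq W] {T : SimpleGraph W}
variable (hT : T.IsTree) (pp : ∀ t s : W, T.Walk t s)
  (hppath : ∀ t s, (pp t s).IsPath)
  (hpuniq : ∀ t s (q : T.Walk t s), q.IsPath → q = pp t s)
  (dir : W → W → W)
  (hdir : ∀ t s, s ≠ t → T.Adj t (dir t s) ∧ T.dist t s = T.dist (dir t s) s + 1 ∧
    (pp t s).getVert 1 = dir t s)

include hT hppath hpuniq hdir

/-- the reverse of the canonical path. -/
lemma aux_pp_reverse (t s : W) : pp s t = (pp t s).reverse :=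
  (hpuniq s t _ (hppath t s).reverse).symm

lemma aux_length_pos {t s : W} (h : s ≠ t) : 0 < (pp t s).length := by
  rcases Nat.eq_zero_or_pos (pp t s).length with h0 | h0
  · exact absurd (Walk.eq_of_length_eq_zero h0).symm h
  · exact h0

/-- If `y` lies on the canonical path from `t` to `s`, the first edges agree. -/
lemma aux_dir_of_mem {t s y : W} (hy : y ∈ (pp t s).support) (hyt : y ≠ t) :
    dir t y = dir t s := by
  have hst : s ≠ t := by
    rintro rfl
    have : pp s s = Walk.nil := (hpuniq s s Walk.nil (by simp)).symm
    rw [this] at hy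
    simp at hy
    exact hyt hy
  have htk : ((pp t s).takeUntil y hy).IsPath := (hppath t s).takeUntil hy
  have htkeq : (pp t s).takeUntil y hy = pp t y := hpuniq t y _ htk
  have hlen : 0 < ((pp t s).takeUntil y hy).length := by
    rw [htkeq]; exact aux_length_pos hT pp hppath hpuniq dir hdir hyt
  have hspec := (pp t s).take_spec hy
  have h1 : (pp t s).getVert 1 = ((pp t s).takeUntil y hy).getVert 1 := by
    conv_lhs => rw [← hspec]
    rw [Walk.getVert_append]
    rcases Nat.lt_or_ge 1 ((pp t s).takeUntil y hy).length with hl | hl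
    · simp [hl]
    · have hl1 : ((pp t s).takeUntil y hy).length = 1 := by omega
      have h2 : ((pp t s).dropUntil y hy).getVert 0 = y := Walk.getVert_zero _
      have h3 : ((pp t s).takeUntil y hy).getVert 1 = y := by
        have h4 := Walk.getVert_length ((pp t s).takeUntil y hy)
        rwa [hl1] at h4
      rw [if_neg (by omega), hl1, h3]
      simpa using h2
  rw [(hdir t y (hyt)).2.2.symm, (hdir t s (hst)).2.2.symm, h1, htkeq]

/-- If the directions to `s` and `s'` differ, the canonical paths meet only at `t`. -/
lemma aux_meet_only {t s s' y : W} (hs : s ≠ t) (hs' : s' ≠ t)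
    (hne : dir t s ≠ dir t s') (hy : y ∈ (pp t s).support) (hy' : y ∈ (pp t s').support) :
    y = t := by
  by_contra hyt
  exact hne ((aux_dir_of_mem hT pp hppath hpuniq dir hdir hy hyt).symm.trans
    (aux_dir_of_mem hT pp hppath hpuniq dir hdir hy' hyt))

omit hdir in
/-- distance splits along the canonical path. -/
lemma aux_dist_split {u w y : W} (hy : y ∈ (pp u w).support) :
    T.dist u w = T.dist u y + T.dist y w := by
  have htk : ((pp u w).takeUntil y hy).IsPath := (hppath u w).takeUntil hy
  have hdr : ((pp u w).dropUntil y hy).IsPath := (hppath u w).dropUntil hy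
  have e1 : (pp u w).takeUntil y hy = pp u y := hpuniq u y _ htk
  have e2 : (pp u w).dropUntil y hy = pp y w := hpuniq y w _ hdr
  have hspec := (pp u w).take_spec hy
  have := congrArg Walk.length hspec
  rw [Walk.length_append, e1, e2] at this
  rw [aux_dist_eq hT pp hppath hpuniq u w, aux_dist_eq hT pp hppath hpuniq u y,
    aux_dist_eq hT pp hppath hpuniq y w, ← this]

omit hdir in
/-- if distance is additive through `z`, then `z` is on the canonical path. -/
lemma aux_mem_of_dist_add {u w z : W} (h : T.dist u w = T.dist u z + T.dist z w) :
    z ∈ (pp u w).support := by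
  have hconn := hT.isConnected
  have hpath : ((pp u z).append (pp z w)).IsPath := by
    refine aux_isPath_append (hppath u z) (hppath z w) ?_
    intro y hy1 hy2
    have d1 := aux_dist_split hT pp hppath hpuniq hy1
    have d2 := aux_dist_split hT pp hppath hpuniq hy2
    have tri : T.dist u w ≤ T.dist u y + T.dist y w := hconn.dist_triangle
    have hcomm : T.dist z y = T.dist y z := dist_comm
    have hz0 : T.dist y z = 0 := by omega
    exact (hconn.dist_eq_zero_iff.mp (hcomm ▸ hz0))
  have : (pp u z).append (pp z w) = pp u w := hpuniq u w _ hpath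
  rw [← this, Walk.mem_support_append_iff]
  left; exact Walk.end_mem_support _

end TreeAux2

section TreeAux3

variable {W : Type*} [DecidableEq W] {T : SimpleGraph W}
variable (hT : T.IsTree) (pp : ∀ t s : W, T.Walk t s)
  (hppath : ∀ t s, (pp t s).IsPath)
  (hpuniq : ∀ t s (q : T.Walk t s), q.IsPath → q = pp t s)

include hT hppath hpuniq

/-- two vertices on a common canonical path are comparable. -/
lemma aux_between {u w y1 y2 : W} (h1 : y1 ∈ (pp u w).support) (h2 : y2 ∈ (pp u w).support) :
    y2 ∈ (pp y1 w).support ∨ y1 ∈ (pp y2 w).support := by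
  have hdr : ((pp u w).dropUntil y2 h2).IsPath := (hppath u w).dropUntil h2
  have e2 : (pp u w).dropUntil y2 h2 = pp y2 w := hpuniq y2 w _ hdr
  have htk : ((pp u w).takeUntil y2 h2).IsPath := (hppath u w).takeUntil h2
  have e1 : (pp u w).takeUntil y2 h2 = pp u y2 := hpuniq u y2 _ htk
  have hspec := (pp u w).take_spec h2
  rw [← hspec, Walk.mem_support_append_iff] at h1
  rcases h1 with h1 | h1
  · left
    rw [e1] at h1
    have d1 : T.dist u y2 = T.dist u y1 + T.dist y1 y2 :=
      aux_dist_split hT pp hppath hpuniq h1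
    have d2 : T.dist u w = T.dist u y2 + T.dist y2 w :=
      aux_dist_split hT pp hppath hpuniq h2
    have d3 : T.dist u w = T.dist u y1 + T.dist y1 w := by
      apply aux_dist_split hT pp hppath hpuniq
      rw [← hspec, Walk.mem_support_append_iff]; left; rwa [e1]
    have tri : T.dist y1 w ≤ T.dist y1 y2 + T.dist y2 w := hT.isConnected.dist_triangle
    have heq : T.dist y1 w = T.dist y1 y2 + T.dist y2 w := by omega
    exact aux_mem_of_dist_add hT pp hppath hpuniq heq
  · right
    rwa [e2] at h1

/-- existence of a median of three vertices in a tree. -/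
lemma aux_median (p q r : W) :
    ∃ y, y ∈ (pp p q).support ∧ y ∈ (pp q r).support ∧ y ∈ (pp r p).support := by
  obtain ⟨dir, hdir⟩ : ∃ dir : W → W → W, ∀ t s, s ≠ t → T.Adj t (dir t s) ∧
      T.dist t s = T.dist (dir t s) s + 1 ∧ (pp t s).getVert 1 = dir t s := by
    have hch : ∀ t s : W, ∃ x, s ≠ t → T.Adj t x ∧
        T.dist t s = T.dist x s + 1 ∧ (pp t s).getVert 1 = x := by
      intro t s
      by_cases hc : s = t
      · exact ⟨t, fun h => absurd hc h⟩
      · obtain ⟨x, hx⟩ := aux_exists_dir hT pp hppath hpuniq hc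
        exact ⟨x, fun _ => hx⟩
    choose f hf using hch
    exact ⟨f, hf⟩
  suffices H : ∀ N : ℕ, ∀ p q r : W, T.dist p q ≤ N →
      ∃ y, y ∈ (pp p q).support ∧ y ∈ (pp q r).support ∧ y ∈ (pp r p).support by
    exact H (T.dist p q) p q r le_rfl
  intro N
  induction N with
  | zero =>
    intro p q r h0
    have : p = q := hT.isConnected.dist_eq_zero_iff.mp (Nat.le_zero.mp h0)
    subst this
    exact ⟨p, Walk.start_mem_support _, Walk.start_mem_support _, Walk.end_mem_support _⟩
  | succ N ih =>
    intro p q r hN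
    by_cases hmem : p ∈ (pp q r).support
    · exact ⟨p, Walk.start_mem_support _, hmem, Walk.end_mem_support _⟩
    have hqp : q ≠ p := fun h => hmem (h ▸ Walk.start_mem_support _)
    have hrp : r ≠ p := fun h => hmem (h ▸ Walk.end_mem_support _)
    have hdq := hdir p q hqp
    have hdr := hdir p r hrp
    -- directions to q and r agree
    have hdireq : dir p q = dir p r := by
      by_contra hne
      have hpathW : ((pp p q).reverse.append (pp p r)).IsPath := by
        refine aux_isPath_append (hppath p q).reverse (hppath p r) ?_
        intro y hy1 hy2
        rw [Walk.support_reverse, List.mem_reverse] at hy1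
        exact aux_meet_only hT pp hppath hpuniq dir hdir hqp hrp hne hy1 hy2
      have : (pp p q).reverse.append (pp p r) = pp q r := hpuniq q r _ hpathW
      apply hmem
      rw [← this, Walk.mem_support_append_iff]
      left; rw [Walk.support_reverse, List.mem_reverse]; exact Walk.start_mem_support _
    set x := dir p q with hx
    -- decompose pp p q and pp p r as cons
    obtain ⟨x1, hadj1, q1, hq1⟩ := Walk.exists_eq_cons_of_ne hqp.symm (pp p q)
    have hx1 : x1 = x := by
      have := hdq.2.2
      rw [hq1, Walk.getVert_cons_succ, Walk.getVert_zero] at this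
      exact this
    subst hx1
    obtain ⟨x2, hadj2, q2, hq2⟩ := Walk.exists_eq_cons_of_ne hrp.symm (pp p r)
    have hx2 : x2 = x := by
      have := hdr.2.2
      rw [hq2, Walk.getVert_cons_succ, Walk.getVert_zero] at this
      rw [this, ← hdireq]
    subst hx2
    have hq1path : q1.IsPath := by
      have := hppath p q; rw [hq1] at this; exact this.of_cons
    have hq2path : q2.IsPath := by
      have := hppath p r; rw [hq2] at this; exact this.of_cons
    have hq1eq : q1 = pp x q := hpuniq x q _ hq1path
    have hq2eq : q2 = pp x r := hpuniq x r _ hq2path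
    have hdxq : T.dist x q ≤ N := by
      have := hdq.2.1; omega
    obtain ⟨y, hy1, hy2, hy3⟩ := ih x q r hdxq
    refine ⟨y, ?_, hy2, ?_⟩
    · rw [hq1]; rw [Walk.support_cons]; right; rwa [hq1eq]
    · -- y ∈ (pp r x).support → y ∈ (pp r p).support
      have : pp r x = q2.reverse := by
        rw [aux_pp_reverse hT pp hppath hpuniq dir hdir x r, hq2eq]
      rw [this, Walk.support_reverse, List.mem_reverse] at hy3
      rw [aux_pp_reverse hT pp hppath hpuniq dir hdir p r, hq2, Walk.support_reverse,
        List.mem_reverse, Walk.support_cons]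
      right; exact hy3
  
end TreeAux3

section WalkAux

variable {V : Type*} {G : SimpleGraph V}

lemma aux_support_eq_map {u v : V} (w : G.Walk u v) :
    w.support = (List.range (w.length + 1)).map w.getVert := by
  induction w with
  | nil => simp [Walk.getVert]
  | cons h p ih =>
    rename_i u' v' w'
    have hr : List.map (Walk.cons h p).getVert (List.range (p.length + 1 + 1)) =
        u' :: List.map p.getVert (List.range (p.length + 1)) := by
      rw [List.range_succ_eq_map, List.map_cons, List.map_map]
      refine List.ext_getElem (by simp) ?_
      intro i h1 h2
      rcases i with _ | i <;> simp [Walk.getVert_cons_succ]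
    rw [Walk.support_cons, ih, Walk.length_cons, hr]

lemma aux_edges_char {u v : V} (w : G.Walk u v) :
    ∀ e ∈ w.edges, ∃ k, k < w.length ∧ e = s(w.getVert k, w.getVert (k + 1)) := by
  induction w with
  | nil => simp
  | cons h p ih =>
    intro e he
    rw [Walk.edges_cons] at he
    rcases List.mem_cons.mp he with he | he
    · refine ⟨0, by simp [Walk.length_cons], ?_⟩
      rw [he]
      simp [Walk.getVert_zero, Walk.getVert_cons_succ]
    · obtain ⟨k, hk, hke⟩ := ih e he
      exact ⟨k + 1, by simp [Walk.length_cons]; omega,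
        by rw [hke, Walk.getVert_cons_succ, Walk.getVert_cons_succ]⟩

/-- vertices of a cycle at distinct indices `< length` are distinct -/
lemma aux_cycle_inj {a : V} {C : G.Walk a a} (hC : C.IsCycle) :
    ∀ k l, k < C.length → l < C.length → C.getVert k = C.getVert l → k = l := by
  have hmap : C.support.tail = ((List.range C.length).map (fun i => i + 1)).map C.getVert := by
    have := aux_support_eq_map C
    rw [List.range_succ_eq_map] at this
    rw [this]
    simp [List.map_map, Function.comp]
  have hnd : C.support.tail.Nodup := hC.support_nodup
  rw [hmap, List.map_map] at hnd
  have hinj : ∀ x ∈ List.range C.length, ∀ y ∈ List.range C.length,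
      C.getVert (x + 1) = C.getVert (y + 1) → x = y := by
    intro x hx y hy hxy
    by_contra hne
    have := List.inj_on_of_nodup_map hnd
    simp only [Function.comp] at this
    exact hne (this (List.mem_range.mpr (List.mem_range.mp hx))
      (List.mem_range.mpr (List.mem_range.mp hy)) hxy)
  intro k l hk hl hkl
  rcases Nat.eq_zero_or_pos k with rfl | hk0 <;> rcases Nat.eq_zero_or_pos l with rfl | hl0
  · rfl
  · -- getVert 0 = a = getVert n; l ∈ [1, n)
    exfalso
    rw [Walk.getVert_zero] at hkl
    have hone : C.getVert ((l - 1) + 1) = C.getVert ((C.length - 1) + 1) := by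
      have h1 : (l - 1) + 1 = l := by omega
      have h2 : (C.length - 1) + 1 = C.length := by
        have := hC.three_le_length; omega
      rw [h1, h2, Walk.getVert_length, ← hkl]
    have := hinj _ (List.mem_range.mpr (by omega)) _
      (List.mem_range.mpr (by have := hC.three_le_length; omega)) hone
    omega
  · exfalso
    rw [Walk.getVert_zero] at hkl
    have hone : C.getVert ((k - 1) + 1) = C.getVert ((C.length - 1) + 1) := by
      have h1 : (k - 1) + 1 = k := by omega
      have h2 : (C.length - 1) + 1 = C.length := by
        have := hC.three_le_length; omega
      rw [h1, h2, Walk.getVert_length, hkl]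
    have := hinj _ (List.mem_range.mpr (by omega)) _
      (List.mem_range.mpr (by have := hC.three_le_length; omega)) hone
    omega
  · have hone : C.getVert ((k - 1) + 1) = C.getVert ((l - 1) + 1) := by
      have h1 : (k - 1) + 1 = k := by omega
      have h2 : (l - 1) + 1 = l := by omega
      rw [h1, h2, hkl]
    have := hinj _ (List.mem_range.mpr (by omega)) _ (List.mem_range.mpr (by omega)) hone
    omega

end WalkAux

/-- cyclic distance on `ZMod n`. -/
def zdelta (n : ℕ) (x : ZMod n) : ℕ := min x.val (n - x.val)

section ZModAux

variable {n : ℕ} [NeZero n]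

lemma aux_zval (x : ZMod n) : ((x.val : ℕ) : ZMod n) = x := by
  rw [ZMod.natCast_val, ZMod.cast_id]

lemma aux_val_inj {x y : ZMod n} (h : x.val = y.val) : x = y := by
  rw [← aux_zval x, ← aux_zval y, h]

lemma aux_val_succ (x : ZMod n) : (x + 1).val = (x.val + 1) % n := by
  conv_lhs => rw [← aux_zval x]
  rw [show ((x.val : ZMod n) + 1) = ((x.val + 1 : ℕ) : ZMod n) by push_cast; ring]
  exact ZMod.val_natCast _ _

lemma aux_zdelta_step (x : ZMod n) :
    zdelta n x ≤ zdelta n (x + 1) + 1 ∧ zdelta n (x + 1) ≤ zdelta n x + 1 := by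
  have hv := ZMod.val_lt x
  have hv1 := aux_val_succ x
  have hn := Nat.pos_of_ne_zero (NeZero.ne n)
  unfold zdelta
  rcases Nat.lt_or_ge (x.val + 1) n with h | h
  · rw [hv1, Nat.mod_eq_of_lt h]; omega
  · have hx : x.val + 1 = n := by omega
    rw [hv1, hx, Nat.mod_self]
    simp [ZMod.val_zero]
    omega

lemma aux_zdelta_zero : zdelta n 0 = 0 := by
  simp [zdelta, ZMod.val_zero]

end ZModAux

section CycleAux

variable {V : Type*} {G : SimpleGraph V} {a : V} {C : G.Walk a a}

lemma aux_c_succ [NeZero C.length] (k : ℕ) (hk : k < C.length) :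
    C.getVert (k + 1) = C.getVert (((k : ZMod C.length) + 1)).val := by
  rw [aux_val_succ, ZMod.val_natCast_of_lt hk]
  rcases Nat.lt_or_ge (k + 1) C.length with h | h
  · rw [Nat.mod_eq_of_lt h]
  · have hk1 : k + 1 = C.length := by omega
    rw [hk1, Nat.mod_self, Walk.getVert_zero]
    exact Walk.getVert_length C

lemma aux_c_adj [NeZero C.length] (x : ZMod C.length) :
    G.Adj (C.getVert x.val) (C.getVert (x + 1).val) := by
  have hv := ZMod.val_lt x
  have := C.adj_getVert_succ hv
  rwa [aux_c_succ x.val hv, aux_zval] at this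

lemma aux_c_inj [NeZero C.length] (hC : C.IsCycle) {x y : ZMod C.length}
    (h : C.getVert x.val = C.getVert y.val) : x = y :=
  aux_val_inj (aux_cycle_inj hC _ _ (ZMod.val_lt x) (ZMod.val_lt y) h)

lemma aux_c_mem (x : ZMod C.length) [NeZero C.length] :
    C.getVert x.val ∈ C.support :=
  Walk.mem_support_iff_exists_getVert.mpr ⟨x.val, rfl, (ZMod.val_lt x).le⟩

lemma aux_L1 [NeZero C.length] (hC : C.IsCycle) :
    ∀ {u v : V} (P : G.Walk u v), (∀ e ∈ P.edges, e ∈ C.edges) →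
    ∀ x y : ZMod C.length, u = C.getVert x.val → v = C.getVert y.val →
    zdelta C.length (y - x) ≤ P.length := by
  intro u v P
  induction P with
  | nil =>
    intro _ x y hx hy
    have : x = y := aux_c_inj hC (hx.symm.trans hy)
    subst this
    simp [sub_self, aux_zdelta_zero]
  | cons hadj P' ih =>
    rename_i u' w' v'
    intro hedges x y hx hy
    have hhead : s(u', w') ∈ C.edges := hedges _ (by rw [Walk.edges_cons]; exact List.mem_cons_self)
    obtain ⟨k, hk, hke⟩ := aux_edges_char C _ hhead
    have htail : ∀ e ∈ P'.edges, e ∈ C.edges := fun e he =>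
      hedges e (by rw [Walk.edges_cons]; exact List.mem_cons_of_mem _ he)
    rcases Sym2.eq_iff.mp hke with ⟨h1, h2⟩ | ⟨h1, h2⟩
    · -- u' = getVert k, w' = getVert (k+1)
      have hxk : x = (k : ZMod C.length) := by
        apply aux_c_inj hC
        rw [← hx, h1, ZMod.val_natCast_of_lt hk]
      have hw : w' = C.getVert ((x + 1)).val := by
        rw [h2, aux_c_succ k hk, hxk]
      have := ih htail (x + 1) y hw hy
      have hstep := (aux_zdelta_step (y - (x + 1))).2
      have harith : (y - (x+1)) + 1 = y - x := by ring
      rw [harith] at hstep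
      rw [Walk.length_cons]
      omega
    · -- u' = getVert (k+1), w' = getVert k
      have hxk : x = (k : ZMod C.length) + 1 := by
        apply aux_c_inj hC
        rw [← hx, h1, aux_c_succ k hk]
      have hw : w' = C.getVert ((x - 1)).val := by
        rw [h2, hxk]
        congr 1
        rw [add_sub_cancel_right, ZMod.val_natCast_of_lt hk]
      have := ih htail (x - 1) y hw hy
      have hstep := (aux_zdelta_step (y - x)).1
      have harith : (y - x) + 1 = y - (x - 1) := by ring
      rw [harith] at hstep
      rw [Walk.length_cons]
      omega

end CycleAux

section ArcAux

variable {n D : ℕ} [NeZero n]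

lemma aux_arc (hD3 : 3 * D < n) (S : Set (ZMod n))
    (hS : ∀ x ∈ S, ∀ y ∈ S, zdelta n (y - x) ≤ D) :
    ∃ b : ZMod n, ∀ x ∈ S, ∃ i : ℕ, i ≤ D ∧ x = b + (i : ℕ) := by
  classical
  rcases Set.eq_empty_or_nonempty S with rfl | ⟨x0, hx0⟩
  · exact ⟨0, fun x hx => absurd hx (Set.notMem_empty x)⟩
  set e : ZMod n → ℤ := fun x =>
    if (x - x0).val ≤ D then ((x - x0).val : ℤ) else ((x - x0).val : ℤ) - n with he
  have hbd : ∀ x ∈ S, -(D : ℤ) ≤ e x ∧ e x ≤ D ∧ x = x0 + ((e x : ℤ) : ZMod n) := by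
    intro x hx
    have hdel := hS x0 hx0 x hx
    have hcast : (((x - x0).val : ℕ) : ZMod n) = x - x0 := aux_zval _
    have hvlt := ZMod.val_lt (x - x0)
    have hdel2 : (x - x0).val ≤ D ∨ n - (x - x0).val ≤ D := min_le_iff.mp hdel
    by_cases hc : (x - x0).val ≤ D
    · have hex : e x = ((x - x0).val : ℤ) := by rw [he]; simp only [hc, if_true]
      refine ⟨by rw [hex]; omega, by rw [hex]; omega, ?_⟩
      rw [hex]
      push_cast
      rw [hcast]; ring
    · have hge : n - (x - x0).val ≤ D := by omega
      have hex : e x = ((x - x0).val : ℤ) - n := by rw [he]; simp only [hc, if_false]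
      refine ⟨by rw [hex]; omega, by rw [hex]; omega, ?_⟩
      rw [hex]
      push_cast
      rw [hcast, ZMod.natCast_self]; ring
  have hsep : ∀ x ∈ S, ∀ y ∈ S, e x - e y ≤ D := by
    intro x hx y hy
    by_contra hgt
    push_neg at hgt
    obtain ⟨hbx1, hbx2, hbx3⟩ := hbd x hx
    obtain ⟨hby1, hby2, hby3⟩ := hbd y hy
    set m : ℕ := (e x - e y).toNat with hm
    have hm1 : (m : ℤ) = e x - e y := Int.toNat_of_nonneg (by omega)
    have hmD : D < m ∧ m ≤ 2 * D := by omega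
    have hxy : x - y = ((m : ℕ) : ZMod n) := by
      have h2 : ((m : ℕ) : ZMod n) = ((m : ℤ) : ZMod n) := by push_cast; ring
      rw [hbx3, hby3, h2, hm1]
      push_cast
      ring
    have hval : (x - y).val = m := by
      rw [hxy, ZMod.val_natCast, Nat.mod_eq_of_lt (by omega)]
    have hfin := hS y hy x hx
    unfold zdelta at hfin
    rw [hval] at hfin
    have := min_le_iff.mp hfin
    omega
  have hfin : (Set.toFinite S).toFinset.Nonempty := by
    rw [Set.Finite.toFinset_nonempty]; exact ⟨x0, hx0⟩
  obtain ⟨xm, hxmm, hxmin⟩ := Finset.exists_min_image (Set.toFinite S).toFinset e hfin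
  rw [Set.Finite.mem_toFinset] at hxmm
  refine ⟨xm, fun x hx => ?_⟩
  have hmemx := hbd x hx
  have hmemm := hbd xm hxmm
  have hge : e xm ≤ e x := hxmin x (by rwa [Set.Finite.mem_toFinset])
  refine ⟨(e x - e xm).toNat, ?_, ?_⟩
  · have := hsep x hx xm hxmm
    omega
  · have hcast : (((e x - e xm).toNat : ℕ) : ℤ) = e x - e xm := Int.toNat_of_nonneg (by omega)
    have h2 : (((e x - e xm).toNat : ℕ) : ZMod n) =
        ((e x : ℤ) : ZMod n) - ((e xm : ℤ) : ZMod n) := by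
      have h3 : (((e x - e xm).toNat : ℕ) : ZMod n) = (((e x - e xm).toNat : ℤ) : ZMod n) := by
        push_cast; ring
      rw [h3, hcast]
      push_cast
      ring
    calc x = x0 + ((e x : ℤ) : ZMod n) := hmemx.2.2
      _ = (x0 + ((e xm : ℤ) : ZMod n)) + (((e x - e xm).toNat : ℕ) : ZMod n) := by
          rw [h2]; ring
      _ = xm + (((e x - e xm).toNat : ℕ) : ZMod n) := by rw [← hmemm.2.2]

end ArcAux

/-- If C is a geodesic cycle of G, then in every tree-decomposition of G some bag contains two
vertices at G-distance at least |C|/3; hence odw(G) ≥ |C|/3. -/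
theorem stmt_6 {V W : Type*} (G : SimpleGraph V) (T : SimpleGraph W) (B : W → Set V)
    (hTD : TreeDecomp G T B) {a : V} (C : G.Walk a a) (hC : C.IsCycle)
    (hgeo : ∀ u v : V, u ∈ C.support → v ∈ C.support →
      ∃ P : G.Walk u v, P.IsPath ∧ (∀ e ∈ P.edges, e ∈ C.edges) ∧ P.length = G.dist u v) :
    ∃ (t : W) (u v : V), u ∈ B t ∧ v ∈ B t ∧ C.length ≤ 3 * G.dist u v := by
  classical
  by_contra hcon
  push_neg at hcon
  have hn3 : 3 ≤ C.length := hC.three_le_length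
  haveI : NeZero C.length := ⟨by omega⟩
  -- lower bound on distances via the geodesic property
  have hdistlow : ∀ x y : ZMod C.length,
      zdelta C.length (y - x) ≤ G.dist (C.getVert x.val) (C.getVert y.val) := by
    intro x y
    obtain ⟨P, hP, hPe, hPl⟩ := hgeo _ _ (aux_c_mem x) (aux_c_mem y)
    rw [← hPl]
    exact aux_L1 hC P hPe x y rfl rfl
  set D : ℕ := (C.length - 1) / 3 with hD
  have h3D : 3 * D < C.length := by
    have := Nat.div_mul_le_self (C.length - 1) 3
    omega
  have hbag : ∀ (t : W) (x y : ZMod C.length), C.getVert x.val ∈ B t →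
      C.getVert y.val ∈ B t → zdelta C.length (y - x) ≤ D := by
    intro t x y hx hy
    have h1 := hcon t _ _ hx hy
    have h2 := hdistlow x y
    have h3 : zdelta C.length (y - x) ≤ (C.length - 1) / 3 := by
      rw [Nat.le_div_iff_mul_le (by norm_num)]
      omega
    exact h3
  -- tree path infrastructure
  have hT := hTD.isTree
  choose pp hpp using fun t s : W => hT.existsUnique_path t s
  have hppath : ∀ t s : W, (pp t s).IsPath := fun t s => (hpp t s).1
  have hpuniq : ∀ t s : W, ∀ q : T.Walk t s, q.IsPath → q = pp t s := fun t s q hq =>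
    (hpp t s).2 q hq
  choose tb htb using hTD.coversVertices
  by_cases hn4 : C.length = 4
  · -- the 4-cycle case, via medians
    have hopp : ∀ (t : W) (x : ZMod C.length), C.getVert x.val ∈ B t →
        C.getVert (x + 2).val ∈ B t → False := by
      intro t x h1 h2
      have hcc := hcon t _ _ h1 h2
      have hlow := hdistlow x (x + 2)
      have he : (x + 2) - x = ((2 : ℕ) : ZMod C.length) := by push_cast; ring
      have hval : (((2 : ℕ) : ZMod C.length)).val = 2 := ZMod.val_natCast_of_lt (by omega)
      have hz : zdelta C.length ((x + 2) - x) = 2 := by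
        rw [he]
        unfold zdelta
        rw [hval, hn4]
        simp
      omega
    set p0 : ZMod C.length := 0 with hp0
    have hwrap : p0 + 3 + 1 = p0 := by
      have h40 : ((4 : ℕ) : ZMod C.length) = 0 := by rw [← hn4]; exact ZMod.natCast_self _
      have : p0 + 3 + 1 = p0 + ((4 : ℕ) : ZMod C.length) := by push_cast; ring
      rw [this, h40, add_zero]
    obtain ⟨q01, hq01a, hq01b⟩ := hTD.coversEdges (aux_c_adj (C := C) p0)
    obtain ⟨q12, hq12a, hq12b⟩ := hTD.coversEdges (aux_c_adj (C := C) (p0 + 1))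
    obtain ⟨q23, hq23a, hq23b⟩ := hTD.coversEdges (aux_c_adj (C := C) (p0 + 2))
    obtain ⟨q30, hq30a, hq30b⟩ := hTD.coversEdges (aux_c_adj (C := C) (p0 + 3))
    rw [hwrap] at hq30b
    -- normalize position arithmetic
    have e1 : p0 + 1 + 1 = p0 + 2 := by ring
    have e2 : p0 + 2 + 1 = p0 + 3 := by ring
    rw [e1] at hq12b
    rw [e2] at hq23b
    obtain ⟨y1, hy1a, hy1b, hy1c⟩ := aux_median hT pp hppath hpuniq q30 q01 q12
    obtain ⟨y2, hy2a, hy2b, hy2c⟩ := aux_median hT pp hppath hpuniq q12 q23 q30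
    -- bag contents of the medians
    have hv0y1 : C.getVert p0.val ∈ B y1 :=
      hTD.interpolation (pp q30 q01) (hppath _ _) hy1a ⟨hq30b, hq01a⟩
    have hv1y1 : C.getVert (p0 + 1).val ∈ B y1 :=
      hTD.interpolation (pp q01 q12) (hppath _ _) hy1b ⟨hq01b, hq12a⟩
    have hv2y2 : C.getVert (p0 + 2).val ∈ B y2 :=
      hTD.interpolation (pp q12 q23) (hppath _ _) hy2a ⟨hq12b, hq23a⟩
    have hv3y2 : C.getVert (p0 + 3).val ∈ B y2 :=
      hTD.interpolation (pp q23 q30) (hppath _ _) hy2b ⟨hq23b, hq30a⟩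
    -- both medians lie on the path from q30 to q12
    have hrev : pp q12 q30 = (pp q30 q12).reverse :=
      (hpuniq _ _ _ (hppath q30 q12).reverse).symm
    rw [hrev, Walk.support_reverse, List.mem_reverse] at hy1c
    rcases aux_between hT pp hppath hpuniq hy1c hy2c with hbet | hbet
    · -- y2 between y1 and q12 : v1 ∈ B y2, contradiction with v3 ∈ B y2
      have hv1y2 : C.getVert (p0 + 1).val ∈ B y2 :=
        hTD.interpolation (pp y1 q12) (hppath _ _) hbet ⟨hv1y1, hq12a⟩
      have e3 : p0 + 1 + 2 = p0 + 3 := by ring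
      exact hopp y2 (p0 + 1) hv1y2 (by rw [e3]; exact hv3y2)
    · -- y1 between y2 and q12 : v2 ∈ B y1, contradiction with v0 ∈ B y1
      have hv2y1 : C.getVert (p0 + 2).val ∈ B y1 :=
        hTD.interpolation (pp y2 q12) (hppath _ _) hbet ⟨hv2y2, hq12b⟩
      exact hopp y1 p0 hv0y1 hv2y1
  · -- the general case: strictly decreasing potential
    obtain ⟨dir, hdir⟩ : ∃ dir : W → W → W, ∀ t s, s ≠ t → T.Adj t (dir t s) ∧
        T.dist t s = T.dist (dir t s) s + 1 ∧ (pp t s).getVert 1 = dir t s := by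
      have hch : ∀ t s : W, ∃ x, s ≠ t → T.Adj t x ∧
          T.dist t s = T.dist x s + 1 ∧ (pp t s).getVert 1 = x := by
        intro t s
        by_cases hc : s = t
        · exact ⟨t, fun h => absurd hc h⟩
        · obtain ⟨x, hx⟩ := aux_exists_dir hT pp hppath hpuniq hc
          exact ⟨x, fun _ => hx⟩
      choose f hf using hch
      exact ⟨f, hf⟩
    -- all bags of a vertex avoiding B t lie in the same direction from t
    have G1 : ∀ (t : W) (v : V) (b1 b2 : W), v ∉ B t → v ∈ B b1 → v ∈ B b2 →
        dir t b1 = dir t b2 := by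
      intro t v b1 b2 hvt hv1 hv2
      have hb1 : b1 ≠ t := fun h => hvt (h ▸ hv1)
      have hb2 : b2 ≠ t := fun h => hvt (h ▸ hv2)
      by_contra hne
      have hpathW : ((pp t b1).reverse.append (pp t b2)).IsPath := by
        refine aux_isPath_append (hppath t b1).reverse (hppath t b2) ?_
        intro y hy1 hy2
        rw [Walk.support_reverse, List.mem_reverse] at hy1
        exact aux_meet_only hT pp hppath hpuniq dir hdir hb1 hb2 hne hy1 hy2
      have htmem : t ∈ ((pp t b1).reverse.append (pp t b2)).support := by
        rw [Walk.mem_support_append_iff]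
        left
        rw [Walk.support_reverse, List.mem_reverse]
        exact Walk.start_mem_support _
      exact hvt (hTD.interpolation _ hpathW htmem ⟨hv1, hv2⟩)
    -- arcs
    have harc : ∀ t : W, ∃ b : ZMod C.length, ∀ x : ZMod C.length,
        C.getVert x.val ∈ B t → ∃ i : ℕ, i ≤ D ∧ x = b + (i : ℕ) := by
      intro t
      exact aux_arc h3D {x : ZMod C.length | C.getVert x.val ∈ B t}
        (fun x hx y hy => hbag t x y hx hy)
    choose base hbase using harc
    have hD1 : D + 1 < C.length := by omega
    have hfar_notin : ∀ (t : W) (j : ℕ), D < j → j < C.length →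
        C.getVert (base t + (j : ℕ)).val ∉ B t := by
      intro t j hj1 hj2 hmem
      obtain ⟨i, hi, hieq⟩ := hbase t _ hmem
      have hcast : ((j : ℕ) : ZMod C.length) = ((i : ℕ) : ZMod C.length) := by
        have := hieq
        exact add_left_cancel this
      have := congrArg ZMod.val hcast
      rw [ZMod.val_natCast, ZMod.val_natCast, Nat.mod_eq_of_lt hj2,
        Nat.mod_eq_of_lt (by omega)] at this
      omega
    set nxt : W → W := fun t =>
      dir t (tb (C.getVert (base t + ((D + 1 : ℕ) : ZMod C.length)).val)) with hnxt
    -- the chain lemma : all bags of far vertices lie in direction nxt t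
    have hchain : ∀ (t : W) (j : ℕ), D < j → j < C.length → ∀ b : W,
        C.getVert (base t + (j : ℕ)).val ∈ B b → dir t b = nxt t := by
      intro t j hj1
      induction j, (show D + 1 ≤ j by omega) using Nat.le_induction with
      | base =>
        intro hj2 b hb
        have hvnot := hfar_notin t (D + 1) (by omega) hj2
        have := G1 t _ b (tb (C.getVert (base t + ((D + 1 : ℕ) : ZMod C.length)).val))
          hvnot hb (htb _)
        rw [this, hnxt]
      | succ j hj ih =>
        intro hj2 b hb
        have hj2' : j < C.length := by omega
        have hadj := aux_c_adj (C := C) (base t + (j : ℕ))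
        have hsucc : base t + (j : ℕ) + 1 = base t + ((j + 1 : ℕ) : ZMod C.length) := by
          push_cast; ring
        rw [hsucc] at hadj
        obtain ⟨b0, hb0a, hb0b⟩ := hTD.coversEdges hadj
        have hih := ih (by omega) hj2' b0 hb0a
        have hvnot := hfar_notin t (j + 1) (by omega) hj2
        have := G1 t _ b b0 hvnot hb hb0b
        rw [this, hih]
    -- nxt t is adjacent to t
    have hneq : ∀ (v : V) (t : W), v ∉ B t → tb v ≠ t := by
      intro v t hv h
      exact hv (by rw [← h]; exact htb v)
    have hadjnxt : ∀ t : W, T.Adj t (nxt t) := by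
      intro t
      have hvnot := hfar_notin t (D + 1) (by omega) hD1
      exact (hdir t _ (hneq _ _ hvnot)).1
    -- distance steps
    have hstep_far : ∀ (t : W) (x : ZMod C.length), D < (x - base t).val →
        T.dist t (tb (C.getVert x.val)) = T.dist (nxt t) (tb (C.getVert x.val)) + 1 := by
      intro t x hx
      have hj2 : (x - base t).val < C.length := ZMod.val_lt _
      have hxeq : x = base t + (((x - base t).val : ℕ) : ZMod C.length) := by
        rw [aux_zval]; ring
      have hmem : C.getVert x.val ∈ B (tb (C.getVert x.val)) := htb _
      have hmem' : C.getVert (base t + (((x - base t).val : ℕ) : ZMod C.length)).val ∈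
          B (tb (C.getVert x.val)) := by rw [← hxeq]; exact hmem
      have hdirb := hchain t _ hx hj2 _ hmem'
      have hvnot : C.getVert x.val ∉ B t := by
        rw [hxeq]; exact hfar_notin t _ hx hj2
      have hne : tb (C.getVert x.val) ≠ t := hneq _ _ hvnot
      have := (hdir t _ hne).2.1
      rw [hdirb] at this
      exact this
    have hstep_near : ∀ (t s : W), T.dist (nxt t) s ≤ T.dist t s + 1 := by
      intro t s
      have h1 : T.dist (nxt t) s ≤ T.dist (nxt t) t + T.dist t s :=
        hT.isConnected.dist_triangle
      have h2 : T.dist (nxt t) t ≤ 1 := by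
        have := dist_le (Walk.cons (hadjnxt t).symm Walk.nil)
        simpa using this
      omega
    -- the potential
    set mu : W → ℕ := fun t => ∑ x : ZMod C.length, T.dist t (tb (C.getVert x.val)) with hmu
    have hcardP : ∀ t : W,
        (Finset.univ.filter (fun x : ZMod C.length => (x - base t).val ≤ D)).card = D + 1 := by
      intro t
      have himg : Finset.univ.filter (fun x : ZMod C.length => (x - base t).val ≤ D) =
          (Finset.range (D + 1)).image (fun i : ℕ => base t + (i : ℕ)) := by
        ext x
        simp only [Finset.mem_filter, Finset.mem_univ, true_and, Finset.mem_image,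
          Finset.mem_range]
        constructor
        · intro hx
          exact ⟨(x - base t).val, by omega, by rw [aux_zval]; ring⟩
        · rintro ⟨i, hi, rfl⟩
          have : (base t + (i : ℕ) - base t) = ((i : ℕ) : ZMod C.length) := by ring
          rw [this, ZMod.val_natCast, Nat.mod_eq_of_lt (by omega)]
          omega
      rw [himg, Finset.card_image_of_injOn, Finset.card_range]
      intro i hi j hj hij
      rw [Finset.mem_coe, Finset.mem_range] at hi hj
      have : ((i : ℕ) : ZMod C.length) = ((j : ℕ) : ZMod C.length) := by
        exact add_left_cancel hij
      have := congrArg ZMod.val this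
      rw [ZMod.val_natCast, ZMod.val_natCast, Nat.mod_eq_of_lt (by omega),
        Nat.mod_eq_of_lt (by omega)] at this
      exact this
    have hmustep : ∀ t : W, mu (nxt t) + (C.length - (D + 1)) ≤ mu t + (D + 1) := by
      intro t
      set P := Finset.univ.filter (fun x : ZMod C.length => (x - base t).val ≤ D) with hP
      set Q := Finset.univ.filter (fun x : ZMod C.length => ¬ (x - base t).val ≤ D) with hQ
      have hsplit1 : mu (nxt t) = (∑ x ∈ P, T.dist (nxt t) (tb (C.getVert x.val))) +
          (∑ x ∈ Q, T.dist (nxt t) (tb (C.getVert x.val))) := by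
        rw [hmu]
        exact (Finset.sum_filter_add_sum_filter_not _ _ _).symm
      have hsplit2 : mu t = (∑ x ∈ P, T.dist t (tb (C.getVert x.val))) +
          (∑ x ∈ Q, T.dist t (tb (C.getVert x.val))) := by
        rw [hmu]
        exact (Finset.sum_filter_add_sum_filter_not _ _ _).symm
      have hQ1 : (∑ x ∈ Q, T.dist (nxt t) (tb (C.getVert x.val))) + Q.card =
          ∑ x ∈ Q, T.dist t (tb (C.getVert x.val)) := by
        rw [Finset.card_eq_sum_ones Q, ← Finset.sum_add_distrib]
        apply Finset.sum_congr rfl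
        intro x hx
        rw [hQ, Finset.mem_filter] at hx
        exact (hstep_far t x (by omega)).symm
      have hP1 : (∑ x ∈ P, T.dist (nxt t) (tb (C.getVert x.val))) ≤
          (∑ x ∈ P, T.dist t (tb (C.getVert x.val))) + P.card := by
        rw [Finset.card_eq_sum_ones P, ← Finset.sum_add_distrib]
        exact Finset.sum_le_sum (fun x _ => hstep_near t _)
      have hcards : P.card + Q.card = C.length := by
        rw [hP, hQ, Finset.card_filter_add_card_filter_not, Finset.card_univ,
          ZMod.card]
      have hcardp := hcardP t
      rw [← hP] at hcardp
      omega
    have hlt : ∀ t : W, mu (nxt t) < mu t := by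
      intro t
      have := hmustep t
      have hord : D + 1 < C.length - (D + 1) := by omega
      omega
    -- infinite descent
    set f : ℕ → W := fun k => nxt^[k] (tb a) with hf
    have hstep : ∀ k : ℕ, mu (f (k + 1)) < mu (f k) := by
      intro k
      rw [hf]
      simp only [Function.iterate_succ_apply']
      exact hlt _
    have hdec : ∀ k : ℕ, mu (f k) + k ≤ mu (f 0) := by
      intro k
      induction k with
      | zero => omega
      | succ k ih =>
        have := hstep k
        omega
    have := hdec (mu (f 0) + 1)
    omega
end

section
/- Let G be a connected graph with odw(G) = k finite. Then there is a tree S and a map ψ : V(G) → V(S) such that |d_G(u,v) − d_S(ψ(u), ψ(v))| ≤ 6k for all u, v ∈ V(G), and every vertex of S is within distance 6k of the image of ψ. In particular, the additive distortion ad(G) is at most 6·odw(G). -/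
open SimpleGraph

universe u w

namespace Stmt9Aux

variable {V : Type u} {W : Type w}

section Defs

variable (G : SimpleGraph V) (r : V)

/-- `x` and `y` are joined by a walk all of whose vertices are at distance `≥ ℓ` from `r`. -/
def Reach (ℓ : ℕ) (x y : V) : Prop :=
  ∃ p : G.Walk x y, ∀ z ∈ p.support, ℓ ≤ G.dist r z

/-- Same layer and joined within the layer-or-above. -/
def cRel (x y : V) : Prop :=
  G.dist r x = G.dist r y ∧ Reach G r (G.dist r x) x y

/-- Clusters of the layering partition. -/
def CT : Type u := Quot (cRel G r)

/-- Cluster type, lifted to `Type (max u w)`. -/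
def CTL : Type (max u w) := ULift.{w} (CT G r)

/-- The cluster of a vertex. -/
def cl (x : V) : CTL.{u, w} G r := ULift.up (Quot.mk _ x)

/-- The layering tree. -/
def S : SimpleGraph (CTL.{u, w} G r) where
  Adj C D := C ≠ D ∧ ∃ x y : V, cl G r x = C ∧ cl G r y = D ∧ G.Adj x y
  symm := ⟨by rintro C D ⟨hne, x, y, hx, hy, h⟩; exact ⟨hne.symm, y, x, hy, hx, h.symm⟩⟩
  loopless := ⟨by rintro C ⟨hne, -⟩; exact hne rfl⟩

/-- Level of a cluster. -/
noncomputable def clev (C : CTL.{u, w} G r) : ℕ := Quot.lift (G.dist r) (fun a b h => h.1) C.down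

end Defs

section Lemmas

variable {G : SimpleGraph V} {r : V}

lemma reach_mono {ℓ ℓ' : ℕ} (h : ℓ' ≤ ℓ) {x y : V} (hr : Reach G r ℓ x y) :
    Reach G r ℓ' x y := by
  obtain ⟨p, hp⟩ := hr
  exact ⟨p, fun z hz => le_trans h (hp z hz)⟩

lemma reach_refl {ℓ : ℕ} {x : V} (h : ℓ ≤ G.dist r x) : Reach G r ℓ x x :=
  ⟨Walk.nil, by simp [h]⟩

lemma reach_symm {ℓ : ℕ} {x y : V} (hr : Reach G r ℓ x y) : Reach G r ℓ y x := by
  obtain ⟨p, hp⟩ := hr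
  exact ⟨p.reverse, by simpa using hp⟩

lemma reach_trans {ℓ : ℕ} {x y z : V} (h1 : Reach G r ℓ x y) (h2 : Reach G r ℓ y z) :
    Reach G r ℓ x z := by
  obtain ⟨p, hp⟩ := h1
  obtain ⟨q, hq⟩ := h2
  refine ⟨p.append q, fun t ht => ?_⟩
  rw [Walk.mem_support_append_iff] at ht
  exact ht.elim (hp t) (hq t)

lemma reach_adj {ℓ : ℕ} {x y : V} (h : G.Adj x y) (hx : ℓ ≤ G.dist r x)
    (hy : ℓ ≤ G.dist r y) : Reach G r ℓ x y :=
  ⟨Walk.cons h Walk.nil, by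
    intro z hz
    simp only [Walk.support_cons, Walk.support_nil, List.mem_cons, List.mem_singleton] at hz
    rcases hz with rfl | rfl | h'
    · exact hx
    · exact hy
    · simp at h'⟩

lemma cRel_equivalence : Equivalence (cRel G r) := by
  constructor
  · exact fun x => ⟨rfl, reach_refl le_rfl⟩
  · rintro x y ⟨h1, h2⟩
    exact ⟨h1.symm, by rw [← h1]; exact reach_symm h2⟩
  · rintro x y z ⟨h1, h2⟩ ⟨h3, h4⟩
    exact ⟨h1.trans h3, reach_trans h2 (by rw [h1]; exact h4)⟩

lemma cl_eq_iff {x y : V} : cl G r x = cl G r y ↔ cRel G r x y := by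
  constructor
  · intro h
    have h' : (Quot.mk (cRel G r) x) = Quot.mk (cRel G r) y := congrArg ULift.down h
    exact (cRel_equivalence (G := G) (r := r)).eqvGen_iff.mp (Quot.eq.mp h')
  · intro h
    exact congrArg ULift.up (Quot.sound h)

lemma clev_cl (x : V) : clev G r (cl G r x) = G.dist r x := rfl

lemma cl_surjective (C : CTL.{u, w} G r) : ∃ x : V, cl G r x = C := by
  obtain ⟨x, hx⟩ := Quot.exists_rep C.down
  exact ⟨x, by cases C; exact congrArg ULift.up hx⟩

lemma dist_adj_le {x y : V} (hG : G.Connected) (h : G.Adj x y) :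
    G.dist r y ≤ G.dist r x + 1 := by
  have h1 := hG.dist_triangle (u := r) (v := x) (w := y)
  have h2 : G.dist x y ≤ 1 := by
    simpa using SimpleGraph.dist_le (Walk.cons h Walk.nil)
  omega

lemma S_adj_lev (hG : G.Connected) {C D : CTL.{u, w} G r} (h : (S G r).Adj C D) :
    clev G r C = clev G r D + 1 ∨ clev G r D = clev G r C + 1 := by
  obtain ⟨hne, x, y, hx, hy, hxy⟩ := h
  subst hx; subst hy
  rw [clev_cl, clev_cl]
  have h1 := dist_adj_le (r := r) hG hxy
  have h2 := dist_adj_le (r := r) hG hxy.symm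
  have hne' : G.dist r x ≠ G.dist r y := by
    intro heq
    exact hne (cl_eq_iff.mpr ⟨heq, reach_adj hxy le_rfl heq.le⟩)
  omega

lemma down (hG : G.Connected) (x : V) (ℓ : ℕ) (h : ℓ ≤ G.dist r x) :
    ∃ z : V, G.dist r z = ℓ ∧ G.dist z x ≤ G.dist r x - ℓ ∧ Reach G r ℓ z x ∧
      ∃ sw : (S G r).Walk (cl G r x) (cl G r z), sw.length = G.dist r x - ℓ := by
  suffices H : ∀ (n : ℕ) (x : V), ℓ ≤ G.dist r x → G.dist r x - ℓ = n →
      ∃ z : V, G.dist r z = ℓ ∧ G.dist z x ≤ G.dist r x - ℓ ∧ Reach G r ℓ z x ∧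
        ∃ sw : (S G r).Walk (cl G r x) (cl G r z), sw.length = G.dist r x - ℓ by
    exact H _ x h rfl
  intro n
  induction n with
  | zero =>
    intro x h hn
    have hx : G.dist r x = ℓ := by omega
    refine ⟨x, hx, by simp [SimpleGraph.dist_self], reach_refl hx.ge, Walk.nil, by simp; omega⟩
  | succ n ih =>
    intro x h hn
    have hx0 : G.dist r x ≠ 0 := by omega
    have hxr : x ≠ r := by
      rintro rfl
      simp [SimpleGraph.dist_self] at hx0
    obtain ⟨p, hp⟩ := hG.exists_walk_length_eq_dist r x
    obtain ⟨y, hadj, q, hq⟩ := Walk.exists_eq_cons_of_ne hxr p.reverse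
    have hql : q.length = G.dist r x - 1 := by
      have := congrArg Walk.length hq
      simp only [Walk.length_reverse, Walk.length_cons, hp] at this
      omega
    have hy1 : G.dist r y ≤ G.dist r x - 1 := by
      have := SimpleGraph.dist_le q.reverse
      rw [Walk.length_reverse, hql] at this
      exact this
    have hy2 := dist_adj_le (r := r) hG hadj.symm
    have hy : G.dist r y = G.dist r x - 1 := by omega
    obtain ⟨z, hz1, hz2, hz3, sw, hsw⟩ := ih y (by omega) (by omega)
    have hclne : cl G r x ≠ cl G r y := by
      intro heq
      have := (cl_eq_iff.mp heq).1
      omega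
    have hSadj : (S G r).Adj (cl G r x) (cl G r y) := ⟨hclne, x, y, rfl, rfl, hadj⟩
    refine ⟨z, hz1, ?_, ?_, Walk.cons hSadj sw, by simp only [Walk.length_cons, hsw]; omega⟩
    · have t1 := hG.dist_triangle (u := z) (v := y) (w := x)
      have t2 : G.dist y x ≤ 1 := by
        simpa using SimpleGraph.dist_le (Walk.cons hadj.symm Walk.nil)
      omega
    · exact reach_trans hz3 (reach_adj hadj.symm (by omega) (by omega))

lemma S_connected (hG : G.Connected) : (S.{u, w} G r).Connected := by
  have key : ∀ x : V, (S.{u, w} G r).Reachable (cl G r x) (cl G r r) := by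
    intro x
    obtain ⟨z, hz1, _, _, sw, _⟩ := down (r := r) hG x 0 (Nat.zero_le _)
    have hzr : z = r := ((hG r z).dist_eq_zero_iff.mp hz1).symm
    subst hzr
    exact ⟨sw⟩
  rw [connected_iff]
  refine ⟨?_, ⟨cl G r r⟩⟩
  intro C D
  obtain ⟨x, rfl⟩ := cl_surjective C
  obtain ⟨y, rfl⟩ := cl_surjective D
  exact (key x).trans (key y).symm

lemma down_unique (hG : G.Connected) {M N P : CTL.{u, w} G r}
    (h1 : (S G r).Adj M N) (h2 : (S G r).Adj M P)
    (hN : clev G r N + 1 = clev G r M) (hP : clev G r P + 1 = clev G r M) : N = P := by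
  obtain ⟨-, a, b, ha, hb, hab⟩ := h1
  obtain ⟨-, a', b', ha', hb', hab'⟩ := h2
  have haa : cRel G r a a' := cl_eq_iff.mp (ha.trans ha'.symm)
  have hla : G.dist r a = clev G r M := by rw [← ha, clev_cl]
  have hla' : G.dist r a' = clev G r M := by rw [← ha', clev_cl]
  have hlb : G.dist r b = clev G r N := by rw [← hb, clev_cl]
  have hlb' : G.dist r b' = clev G r P := by rw [← hb', clev_cl]
  have hre : Reach G r (G.dist r b) b b' := by
    have h1 : Reach G r (G.dist r b) b a := reach_adj hab.symm le_rfl (by omega)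
    have h2 : Reach G r (G.dist r b) a a' := by
      have h2' : Reach G r (G.dist r a) a a' := haa.2
      exact reach_mono (by omega) h2'
    have h3 : Reach G r (G.dist r b) a' b' := reach_adj hab' (by omega) (by omega)
    exact reach_trans h1 (reach_trans h2 h3)
  have : cl G r b = cl G r b' := cl_eq_iff.mpr ⟨by omega, hre⟩
  rw [← hb, ← hb', this]

lemma S_acyclic (hG : G.Connected) : (S.{u, w} G r).IsAcyclic := by
  classical
  intro C c hc
  have hsupne : c.support.toFinset.Nonempty := by
    simp [List.toFinset_nonempty_iff]
  obtain ⟨M, hMmem, hmax⟩ := Finset.exists_max_image c.support.toFinset (clev G r) hsupne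
  rw [List.mem_toFinset] at hMmem
  have hc' := hc.rotate hMmem
  set c' : (S G r).Walk M M := c.rotate M hMmem with hc'def
  have hsup : ∀ D ∈ c'.support, clev G r D ≤ clev G r M := by
    intro D hD
    rw [Walk.support_eq_cons, List.mem_cons] at hD
    rcases hD with rfl | hD
    · exact le_rfl
    · have hperm := Walk.support_rotate c M hMmem
      have : D ∈ c.support.tail := hperm.mem_iff.mp hD
      have : D ∈ c.support := List.mem_of_mem_tail this
      exact hmax D (List.mem_toFinset.mpr this)
  have hlen3 := hc'.three_le_length
  have hnil : ¬c'.Nil := by rw [Walk.not_nil_iff_lt_length]; omega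
  obtain ⟨N, hMN, q, hq⟩ := Walk.not_nil_iff.mp hnil
  have hqc : (Walk.cons hMN q).IsCycle := hq ▸ hc'
  have hqpath : q.IsPath := ((Walk.cons_isCycle_iff q hMN).mp hqc).1
  have hqlen : 2 ≤ q.length := by
    have := congrArg Walk.length hq
    simp only [Walk.length_cons] at this
    omega
  have hqrevnil : ¬q.reverse.Nil := by
    rw [Walk.not_nil_iff_lt_length, Walk.length_reverse]; omega
  obtain ⟨P, hMP, q₂, hq₂⟩ := Walk.not_nil_iff.mp hqrevnil
  have hq₂path : (Walk.cons hMP q₂).IsPath := hq₂ ▸ hqpath.reverse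
  have hNsup : N ∈ c'.support := by
    rw [hq, Walk.support_cons]
    exact List.mem_cons_of_mem _ q.start_mem_support
  have hPsup : P ∈ c'.support := by
    rw [hq, Walk.support_cons]
    refine List.mem_cons_of_mem _ ?_
    have : P ∈ q.reverse.support := by
      rw [hq₂, Walk.support_cons]
      exact List.mem_cons_of_mem _ q₂.start_mem_support
    rwa [Walk.support_reverse, List.mem_reverse] at this
  have hNlev := hsup N hNsup
  have hPlev := hsup P hPsup
  rcases S_adj_lev hG hMN with h | h
  on_goal 2 => omega
  have hMPadj : (S G r).Adj M P := hMP
  rcases S_adj_lev hG hMPadj with h' | h'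
  on_goal 2 => omega
  have hNP : N = P := down_unique hG hMN hMPadj (by omega) (by omega)
  subst hNP
  have hq₂nil : q₂ = Walk.nil :=
    Walk.isPath_iff_eq_nil.mp ((Walk.cons_isPath_iff _ _).mp hq₂path).1
  have hlen1 : q.reverse.length = 1 := by
    rw [hq₂, hq₂nil]
    simp
  rw [Walk.length_reverse] at hlen1
  omega

lemma trace (hG : G.Connected) {C D : CTL.{u, w} G r} (sw : (S G r).Walk C D) :
    ∀ x y : V, cl G r x = C → cl G r y = D →
      ∃ ℓ, ℓ ≤ G.dist r x ∧ ℓ ≤ G.dist r y ∧ Reach G r ℓ x y ∧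
        (G.dist r x - ℓ) + (G.dist r y - ℓ) ≤ sw.length := by
  induction sw with
  | nil =>
    intro x y hx hy
    have hxy : cRel G r x y := cl_eq_iff.mp (hx.trans hy.symm)
    exact ⟨G.dist r x, le_rfl, hxy.1.le, hxy.2, by have h := hxy.1; simp only [Walk.length_nil]; omega⟩
  | @cons C C₂ D h sw' ih =>
    intro x y hx hy
    obtain ⟨hne, a, b, ha, hb, hab⟩ := h
    obtain ⟨ℓ', hℓ'b, hℓ'y, hrby, hbnd⟩ := ih b y hb hy
    have hxa : cRel G r x a := cl_eq_iff.mp (hx.trans ha.symm)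
    have hlev : G.dist r a = G.dist r b + 1 ∨ G.dist r b = G.dist r a + 1 := by
      have h1 := dist_adj_le (r := r) hG hab
      have h2 := dist_adj_le (r := r) hG hab.symm
      have hne' : G.dist r a ≠ G.dist r b := by
        intro heq
        exact hne (ha ▸ hb ▸ cl_eq_iff.mpr ⟨heq, reach_adj hab le_rfl heq.le⟩)
      omega
    refine ⟨min ℓ' (min (G.dist r a) (G.dist r b)), by
        have := hxa.1; omega, by omega, ?_, by have := hxa.1; show _ + _ ≤ sw'.length + 1; omega⟩
    have h1 : Reach G r (min ℓ' (min (G.dist r a) (G.dist r b))) x a :=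
      reach_mono (by have := hxa.1; omega) hxa.2
    have h2 : Reach G r (min ℓ' (min (G.dist r a) (G.dist r b))) a b :=
      reach_adj hab (by omega) (by omega)
    have h3 : Reach G r (min ℓ' (min (G.dist r a) (G.dist r b))) b y :=
      reach_mono (by omega) hrby
    exact reach_trans h1 (reach_trans h2 h3)

section TreePart

lemma sep {T : SimpleGraph W} (hT : T.IsTree) {B : W → Set V}
    (hcov : ∀ ⦃u v : V⦄, G.Adj u v → ∃ t, u ∈ B t ∧ v ∈ B t)
    (hint : ∀ ⦃t₁ t₂ t₃ : W⦄ (p : T.Walk t₁ t₃), p.IsPath → t₂ ∈ p.support →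
      B t₁ ∩ B t₃ ⊆ B t₂) {t : W} :
    ∀ {x y : V} (wk : G.Walk x y) {ta tb : W} (p : T.Walk ta tb), p.IsPath → t ∈ p.support →
      x ∈ B ta → y ∈ B tb → ∃ z ∈ wk.support, z ∈ B t := by
  classical
  intro x y wk
  induction wk with
  | nil =>
    intro ta tb p hp ht hx hy
    exact ⟨_, Walk.start_mem_support _, hint p hp ht ⟨hx, hy⟩⟩
  | @cons x x₂ y hadj w' ih =>
    intro ta tb p hp ht hx hy
    obtain ⟨s, hxs, hx₂s⟩ := hcov hadj
    set q : T.Walk s tb := ((hT.isConnected s tb).some).bypass with hqdef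
    have hqpath : q.IsPath := Walk.bypass_isPath _
    by_cases htq : t ∈ q.support
    · obtain ⟨z, hz, hzB⟩ := ih q hqpath htq hx₂s hy
      exact ⟨z, by rw [Walk.support_cons]; exact List.mem_cons_of_mem _ hz, hzB⟩
    · set q' : T.Walk ta s := (p.append q.reverse).bypass with hq'def
      have hq'path : q'.IsPath := Walk.bypass_isPath _
      have hq't : t ∈ q'.support := by
        have hpu := hT.IsAcyclic.path_unique ⟨p, hp⟩ ⟨(q'.append q).bypass, Walk.bypass_isPath _⟩
        have hps : p = (q'.append q).bypass := congrArg Subtype.val hpu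
        have ht' : t ∈ ((q'.append q).bypass).support := hps ▸ ht
        have ht'' : t ∈ (q'.append q).support := Walk.support_bypass_subset _ ht'
        rw [Walk.mem_support_append_iff] at ht''
        exact ht''.resolve_right htq
      exact ⟨x, Walk.start_mem_support _, hint q' hq'path hq't ⟨hx, hxs⟩⟩

lemma firstMeet {T : SimpleGraph W} {c : W} :
    ∀ {b a : W} (D : T.Walk b a) (E : T.Walk a c), D.IsPath →
      ∃ m, m ∈ E.support ∧ m ∈ D.support ∧ ∃ D₁ : T.Walk b m, D₁.IsPath ∧
        (∀ x ∈ D₁.support, x ∈ D.support) ∧ ∀ x ∈ D₁.support, x ∈ E.support → x = m := by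
  intro b a D
  induction D with
  | nil =>
    intro E _
    exact ⟨_, Walk.start_mem_support E, Walk.start_mem_support _, Walk.nil, Walk.IsPath.nil,
      by simp, by intro x hx _; simpa using hx⟩
  | @cons u u₂ ua hadj D' ih =>
    intro E hD
    by_cases hb : u ∈ E.support
    · refine ⟨u, hb, Walk.start_mem_support _, Walk.nil, Walk.IsPath.nil, ?_, ?_⟩
      · intro x hx
        simp only [Walk.support_nil, List.mem_singleton] at hx
        subst hx
        exact Walk.start_mem_support _
      · intro x hx _
        simpa using hx
    · obtain ⟨m, hmE, hmD', D₁, hD₁path, hD₁sub, hD₁int⟩ :=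
        ih E ((Walk.cons_isPath_iff _ _).mp hD).1
      have hbD' : u ∉ D'.support := ((Walk.cons_isPath_iff _ _).mp hD).2
      refine ⟨m, hmE, by rw [Walk.support_cons]; exact List.mem_cons_of_mem _ hmD',
        Walk.cons hadj D₁, ?_, ?_, ?_⟩
      · rw [Walk.cons_isPath_iff]
        exact ⟨hD₁path, fun hmem => hbD' (hD₁sub _ hmem)⟩
      · intro x hx
        rw [Walk.support_cons, List.mem_cons] at hx ⊢
        exact hx.imp id (hD₁sub x)
      · intro x hx hxE
        rw [Walk.support_cons, List.mem_cons] at hx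
        rcases hx with rfl | hx
        · exact absurd hxE hb
        · exact hD₁int x hx hxE

lemma median {T : SimpleGraph W} (hT : T.IsTree) (a b c : W) :
    ∃ (m : W) (pab : T.Walk a b) (pac : T.Walk a c) (pbc : T.Walk b c),
      pab.IsPath ∧ pac.IsPath ∧ pbc.IsPath ∧
        m ∈ pab.support ∧ m ∈ pac.support ∧ m ∈ pbc.support := by
  classical
  set pab : T.Walk a b := ((hT.isConnected a b).some).bypass with hpabdef
  set pac : T.Walk a c := ((hT.isConnected a c).some).bypass with hpacdef
  have hpab : pab.IsPath := Walk.bypass_isPath _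
  have hpac : pac.IsPath := Walk.bypass_isPath _
  obtain ⟨m, hmE, hmD, D₁, hD₁path, hD₁sub, hD₁int⟩ := firstMeet pab.reverse pac hpab.reverse
  have hmpab : m ∈ pab.support := by rwa [Walk.support_reverse, List.mem_reverse] at hmD
  set E₂ : T.Walk m c := pac.dropUntil m hmE with hE₂def
  have hE₂path : E₂.IsPath := hpac.dropUntil hmE
  have hE₂sub : ∀ x ∈ E₂.support, x ∈ pac.support := fun x hx =>
    Walk.support_dropUntil_subset _ hmE hx
  have hdisj : ∀ x ∈ D₁.support, x ∈ E₂.support.tail → False := by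
    intro x hx hx'
    have hxE₂ : x ∈ E₂.support := List.mem_of_mem_tail hx'
    have hxm : x = m := hD₁int x hx (hE₂sub x hxE₂)
    rw [hxm] at hx'
    have : E₂.support = m :: E₂.support.tail := Walk.support_eq_cons _
    have hnd : E₂.support.Nodup := hE₂path.support_nodup
    rw [this] at hnd
    exact (List.nodup_cons.mp hnd).1 hx'
  have hpbc : (D₁.append E₂).IsPath := by
    rw [Walk.isPath_def, Walk.support_append, List.nodup_append]
    refine ⟨hD₁path.support_nodup, ?_, ?_⟩
    · have := hE₂path.support_nodup
      rw [Walk.support_eq_cons] at this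
      exact (List.nodup_cons.mp this).2
    · intro x hx hx' hy hxy
      exact hdisj x hx (by subst hxy; exact hy)
  refine ⟨m, pab, pac, D₁.append E₂, hpab, hpac, hpbc, hmpab, hmE, ?_⟩
  rw [Walk.mem_support_append_iff]
  exact Or.inl (Walk.end_mem_support _)

lemma dist_split (hG : G.Connected) {u v q : V} (p : G.Walk u v) (hp : p.length = G.dist u v)
    (hq : q ∈ p.support) : G.dist u q + G.dist q v = G.dist u v := by
  classical
  have h1 := SimpleGraph.dist_le (p.takeUntil q hq)
  have h2 := SimpleGraph.dist_le (p.dropUntil q hq)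
  have h3 : (p.takeUntil q hq).length + (p.dropUntil q hq).length = p.length := by
    rw [← Walk.length_append, p.take_spec hq]
  have h4 := hG.dist_triangle (u := u) (v := q) (w := v)
  omega

lemma cluster_diam (hG : G.Connected) {T : SimpleGraph W} {B : W → Set V} {k : ℕ}
    (hTD : TreeDecomp G T B) (houter : ∀ t, ∀ u ∈ B t, ∀ v ∈ B t, G.dist u v ≤ k)
    {x y : V} (hxy : G.dist r x = G.dist r y) (hr : Reach G r (G.dist r x) x y) :
    G.dist x y ≤ 3 * k := by
  obtain ⟨P, hP⟩ := hr
  obtain ⟨tr, htr⟩ := hTD.coversVertices r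
  obtain ⟨tx, htx⟩ := hTD.coversVertices x
  obtain ⟨ty, hty⟩ := hTD.coversVertices y
  obtain ⟨m, pab, pac, pbc, h1, h2, h3, hm1, hm2, hm3⟩ := median hTD.isTree tr tx ty
  obtain ⟨Qx, hQx⟩ := hG.exists_walk_length_eq_dist r x
  obtain ⟨Qy, hQy⟩ := hG.exists_walk_length_eq_dist r y
  obtain ⟨qx, hqxQ, hqxB⟩ :=
    sep hTD.isTree hTD.coversEdges hTD.interpolation Qx pab h1 hm1 htr htx
  obtain ⟨qy, hqyQ, hqyB⟩ :=
    sep hTD.isTree hTD.coversEdges hTD.interpolation Qy pac h2 hm2 htr hty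
  obtain ⟨pp, hppP, hppB⟩ :=
    sep hTD.isTree hTD.coversEdges hTD.interpolation P pbc h3 hm3 htx hty
  have hsx := dist_split hG Qx hQx hqxQ
  have hsy := dist_split hG Qy hQy hqyQ
  have hpplev : G.dist r x ≤ G.dist r pp := hP pp hppP
  have d1 : G.dist qx pp ≤ k := houter m qx hqxB pp hppB
  have d2 : G.dist qy pp ≤ k := houter m qy hqyB pp hppB
  have d3 : G.dist qx qy ≤ k := houter m qx hqxB qy hqyB
  have t1 := hG.dist_triangle (u := r) (v := qx) (w := pp)
  have t2 := hG.dist_triangle (u := r) (v := qy) (w := pp)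
  have t3 := hG.dist_triangle (u := x) (v := qx) (w := y)
  have t4 := hG.dist_triangle (u := qx) (v := qy) (w := y)
  have c1 : G.dist x qx = G.dist qx x := SimpleGraph.dist_comm
  have c2 : G.dist y qy = G.dist qy y := SimpleGraph.dist_comm
  have c3 : G.dist qy y = G.dist y qy := SimpleGraph.dist_comm
  omega

end TreePart

end Lemmas

end Stmt9Aux

/-- If G is connected with odw(G) ≤ k, then there is a tree S and a map ψ : V(G) → V(S)
of additive distortion at most 6k whose image is 6k-dense in S; in particular ad(G) ≤ 6·odw(G). -/
theorem stmt_9 {V : Type u} {W : Type w} (G : SimpleGraph V) (hG : G.Connected)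
    (T : SimpleGraph W) (B : W → Set V) (k : ℕ) (hTD : TreeDecomp G T B)
    (houter : ∀ t, ∀ u ∈ B t, ∀ v ∈ B t, G.dist u v ≤ k) :
    ∃ (W' : Type (max u w)) (S : SimpleGraph W'), S.IsTree ∧
      ∃ ψ : V → W',
        (∀ u v : V, G.dist u v ≤ S.dist (ψ u) (ψ v) + 6 * k ∧
          S.dist (ψ u) (ψ v) ≤ G.dist u v + 6 * k) ∧
        ∀ s : W', ∃ x : V, S.dist (ψ x) s ≤ 6 * k := by
  classical
  open Stmt9Aux in
  obtain ⟨r⟩ := hG.nonempty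
  refine ⟨Stmt9Aux.CTL.{u, w} G r, Stmt9Aux.S G r,
    ⟨Stmt9Aux.S_connected hG, Stmt9Aux.S_acyclic hG⟩, Stmt9Aux.cl G r, ?_, ?_⟩
  · intro u v
    -- upper bound on tree distance
    obtain ⟨Q, hQ⟩ := hG.exists_walk_length_eq_dist u v
    have htriu : G.dist r v ≤ G.dist r u + G.dist u v := hG.dist_triangle
    have htriv : G.dist r u ≤ G.dist r v + G.dist v u := hG.dist_triangle
    have hcomm : G.dist v u = G.dist u v := SimpleGraph.dist_comm
    set ℓ : ℕ := (G.dist r u + G.dist r v - G.dist u v + 1) / 2 with hℓdef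
    have hlu : ℓ ≤ G.dist r u := by omega
    have hlv : ℓ ≤ G.dist r v := by omega
    have hreach : Stmt9Aux.Reach G r ℓ u v := by
      refine ⟨Q, ?_⟩
      intro z hz
      have hsplit := Stmt9Aux.dist_split hG Q hQ hz
      have t1 : G.dist r u ≤ G.dist r z + G.dist z u := hG.dist_triangle
      have t2 : G.dist r v ≤ G.dist r z + G.dist z v := hG.dist_triangle
      have c1 : G.dist z u = G.dist u z := SimpleGraph.dist_comm
      have c2 : G.dist z v = G.dist v z := SimpleGraph.dist_comm
      have c3 : G.dist v z = G.dist z v := SimpleGraph.dist_comm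
      omega
    obtain ⟨zu, hzu1, hzu2, hzu3, swu, hswu⟩ := Stmt9Aux.down hG u ℓ hlu
    obtain ⟨zv, hzv1, hzv2, hzv3, swv, hswv⟩ := Stmt9Aux.down hG v ℓ hlv
    have hz : Stmt9Aux.cl G r zu = Stmt9Aux.cl G r zv := by
      apply Stmt9Aux.cl_eq_iff.mpr
      refine ⟨by rw [hzu1, hzv1], ?_⟩
      rw [hzu1]
      exact Stmt9Aux.reach_trans hzu3
        (Stmt9Aux.reach_trans hreach (Stmt9Aux.reach_symm hzv3))
    have hupper : (Stmt9Aux.S G r).dist (Stmt9Aux.cl G r u) (Stmt9Aux.cl G r v)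
        ≤ G.dist u v := by
      have hle := SimpleGraph.dist_le (swu.append (swv.reverse.copy hz.symm rfl))
      rw [Walk.length_append, Walk.length_copy, Walk.length_reverse, hswu, hswv] at hle
      omega
    -- lower bound on tree distance
    obtain ⟨sw, hsw⟩ := (Stmt9Aux.S_connected (r := r) hG).exists_walk_length_eq_dist
      (Stmt9Aux.cl G r u) (Stmt9Aux.cl G r v)
    obtain ⟨ℓ₂, hℓ₂u, hℓ₂v, hre2, hbnd⟩ := Stmt9Aux.trace hG sw u v rfl rfl
    obtain ⟨zu2, ha1, ha2, ha3, -, -⟩ := Stmt9Aux.down.{u, w} hG u ℓ₂ hℓ₂u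
    obtain ⟨zv2, hb1, hb2, hb3, -, -⟩ := Stmt9Aux.down.{u, w} hG v ℓ₂ hℓ₂v
    have hclus : G.dist zu2 zv2 ≤ 3 * k := by
      apply Stmt9Aux.cluster_diam hG hTD houter
      · rw [ha1, hb1]
      · rw [ha1]
        exact Stmt9Aux.reach_trans ha3
          (Stmt9Aux.reach_trans hre2 (Stmt9Aux.reach_symm hb3))
    have t1 : G.dist u v ≤ G.dist u zu2 + G.dist zu2 v := hG.dist_triangle
    have t2 : G.dist zu2 v ≤ G.dist zu2 zv2 + G.dist zv2 v := hG.dist_triangle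
    have c1 : G.dist u zu2 = G.dist zu2 u := SimpleGraph.dist_comm
    have c2 : G.dist zv2 v = G.dist v zv2 := SimpleGraph.dist_comm
    constructor
    · omega
    · omega
  · intro s
    obtain ⟨x, hx⟩ := Stmt9Aux.cl_surjective s
    refine ⟨x, ?_⟩
    rw [hx]
    simp [SimpleGraph.dist_self]
end

section
/- For every graph G, mcw(G) ≤ odw(G): given a tree-decomposition of outer diameter d and any three vertices u, v, w of G, there exists a vertex x of G such that the ball of radius d around x meets every path of G joining two of u, v, w. -/
open SimpleGraph

/-- In a tree, any path's support is contained in any walk's support (same endpoints). -/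
lemma tree_path_support_subset_walk {W : Type*} {T : SimpleGraph W} (hT : T.IsTree)
    {s s' : W} (q : T.Walk s s') (hq : q.IsPath) (Wk : T.Walk s s') :
    q.support ⊆ Wk.support := by
  classical
  obtain ⟨p, -, hp⟩ := hT.existsUnique_path s s'
  have h1 : q = Wk.bypass := by
    rw [hp q hq, hp Wk.bypass Wk.bypass_isPath]
  rw [h1]
  exact Wk.support_bypass_subset

/-- Median of three vertices in a tree. -/
lemma tree_median {W : Type*} {T : SimpleGraph W} (hT : T.IsTree) (c : W) :
    ∀ {a b : W} (q : T.Walk a b) (p : T.Walk b c), q.IsPath → p.IsPath →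
      ∃ m, m ∈ p.support ∧ m ∈ q.support ∧
        ∀ (r : T.Walk a c), r.IsPath → m ∈ r.support := by
  classical
  intro a b q
  induction q with
  | nil =>
    intro p _ _
    exact ⟨_, p.start_mem_support, by simp, fun r _ => r.start_mem_support⟩
  | @cons a a' b h q' ih =>
    intro p hq hp
    have hq' : q'.IsPath := hq.of_cons
    by_cases hap : a ∈ p.support
    · exact ⟨a, hap, by simp, fun r _ => r.start_mem_support⟩
    obtain ⟨m, hmp, hmq', hmr'⟩ := ih p hq' hp
    have hma : m ≠ a := fun he => hap (he ▸ hmp)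
    refine ⟨m, hmp, by simp [hmq'], ?_⟩
    intro r hr
    obtain ⟨r0⟩ := hT.isConnected a' c
    set r' := r0.bypass with hr'def
    have hr'p : r'.IsPath := r0.bypass_isPath
    have hmr : m ∈ r'.support := hmr' r' hr'p
    obtain ⟨pac, -, hpac⟩ := hT.existsUnique_path a c
    by_cases har' : a ∈ r'.support
    · have hdrop : (r'.dropUntil a har').IsPath := hr'p.dropUntil har'
      have hre : r = r'.dropUntil a har' := by
        rw [hpac r hr, hpac _ hdrop]
      have htake : (r'.takeUntil a har').IsPath := hr'p.takeUntil har'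
      have hsingle : r'.takeUntil a har' = Walk.cons h.symm Walk.nil := by
        obtain ⟨pe, -, hpe⟩ := hT.existsUnique_path a' a
        rw [hpe _ htake]
        exact (hpe (Walk.cons h.symm Walk.nil) (by simp [h.ne'])).symm
      have hsup : r'.support = (r'.takeUntil a har').support
          ++ (r'.dropUntil a har').support.tail := by
        rw [← Walk.support_append, r'.take_spec har']
      rw [hsup, hsingle] at hmr
      simp only [Walk.support_cons, Walk.support_nil, List.mem_append,
        List.mem_cons, List.mem_singleton, List.not_mem_nil, or_false] at hmr
      rcases hmr with (hmr | hmr) | hmr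
      · -- m = a'
        exfalso
        have ha'p : a' ∈ p.support := hmr ▸ hmp
        have hdp : (p.dropUntil a' ha'p).IsPath := hp.dropUntil ha'p
        obtain ⟨pe, -, hpe⟩ := hT.existsUnique_path a' c
        have he2 : r' = p.dropUntil a' ha'p := by rw [hpe _ hr'p, hpe _ hdp]
        exact hap (p.support_dropUntil_subset ha'p (he2 ▸ har'))
      · exact absurd hmr hma
      · rw [hre]
        exact List.mem_of_mem_tail hmr
    · have hcp : (Walk.cons h r').IsPath := hr'p.cons har'
      have he3 : r = Walk.cons h r' := by rw [hpac r hr, hpac _ hcp]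
      rw [he3]
      simp [hmr]

/-- Separation lemma. -/
lemma tree_sep {V W : Type*} {G : SimpleGraph V} {T : SimpleGraph W} {B : W → Set V}
    (hTD : TreeDecomp G T B) (m : W) :
    ∀ {a b : V} (P : G.Walk a b) (s s' : W), a ∈ B s → b ∈ B s' →
      (∀ q : T.Walk s s', q.IsPath → m ∈ q.support) →
      ∃ z ∈ P.support, z ∈ B m := by
  classical
  intro a b P
  induction P with
  | nil =>
    intro s s' ha hb hm
    obtain ⟨q0⟩ := hTD.isTree.isConnected s s'
    have := hTD.interpolation q0.bypass q0.bypass_isPath (hm _ q0.bypass_isPath)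
    exact ⟨_, by simp, this ⟨ha, hb⟩⟩
  | @cons a c b hadj P' ih =>
    intro s s' ha hb hm
    obtain ⟨t, hat, hct⟩ := hTD.coversEdges hadj
    obtain ⟨q1w⟩ := hTD.isTree.isConnected t s'
    set q1 := q1w.bypass with hq1
    have hq1p : q1.IsPath := q1w.bypass_isPath
    by_cases hmq1 : m ∈ q1.support
    · have hall : ∀ q : T.Walk t s', q.IsPath → m ∈ q.support := by
        intro q hq
        obtain ⟨pe, -, hpe⟩ := hTD.isTree.existsUnique_path t s'
        rw [hpe q hq, ← hpe q1 hq1p]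
        exact hmq1
      obtain ⟨z, hz, hzB⟩ := ih t s' hct hb hall
      exact ⟨z, by simp [hz], hzB⟩
    · obtain ⟨q2w⟩ := hTD.isTree.isConnected s t
      set q2 := q2w.bypass with hq2
      have hq2p : q2.IsPath := q2w.bypass_isPath
      obtain ⟨q3w⟩ := hTD.isTree.isConnected s s'
      have hq3p : q3w.bypass.IsPath := q3w.bypass_isPath
      have hm3 : m ∈ q3w.bypass.support := hm _ hq3p
      have hsub := tree_path_support_subset_walk hTD.isTree q3w.bypass hq3p (q2.append q1)
      have hmem : m ∈ (q2.append q1).support := hsub hm3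
      rw [Walk.mem_support_append_iff] at hmem
      have hmq2 : m ∈ q2.support := by
        rcases hmem with h1 | h1
        · exact h1
        · exact absurd h1 hmq1
      have := hTD.interpolation q2 hq2p hmq2
      exact ⟨a, by simp, this ⟨ha, hat⟩⟩

/-- mcw(G) ≤ odw(G): given a tree-decomposition of outer diameter at most d and any three
vertices u, v, w of G, there is a vertex x such that the ball of radius d around x meets
every path of G joining two of u, v, w. -/
theorem stmt_11 {V W : Type*} (G : SimpleGraph V) (T : SimpleGraph W) (B : W → Set V)
    (hTD : TreeDecomp G T B) (d : ℕ)
    (houter : ∀ t, ∀ u ∈ B t, ∀ v ∈ B t, G.dist u v ≤ d)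
    (u v w : V) :
    ∃ x : V,
      (∀ P : G.Walk u v, ∃ z ∈ P.support, G.edist x z ≤ (d : ℕ∞)) ∧
      (∀ P : G.Walk u w, ∃ z ∈ P.support, G.edist x z ≤ (d : ℕ∞)) ∧
      (∀ P : G.Walk v w, ∃ z ∈ P.support, G.edist x z ≤ (d : ℕ∞)) := by
  classical
  obtain ⟨tu, htu⟩ := hTD.coversVertices u
  obtain ⟨tv, htv⟩ := hTD.coversVertices v
  obtain ⟨tw, htw⟩ := hTD.coversVertices w
  obtain ⟨pw⟩ := hTD.isTree.isConnected tv tw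
  obtain ⟨qw⟩ := hTD.isTree.isConnected tu tv
  have hp : pw.bypass.IsPath := pw.bypass_isPath
  have hq : qw.bypass.IsPath := qw.bypass_isPath
  obtain ⟨m, hmp, hmq, hmr⟩ := tree_median hTD.isTree tw qw.bypass pw.bypass hq hp
  have Huv : ∀ qq : T.Walk tu tv, qq.IsPath → m ∈ qq.support := by
    intro qq hqq
    obtain ⟨pe, -, hpe⟩ := hTD.isTree.existsUnique_path tu tv
    rw [hpe qq hqq, ← hpe qw.bypass hq]; exact hmq
  have Hvw : ∀ qq : T.Walk tv tw, qq.IsPath → m ∈ qq.support := by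
    intro qq hqq
    obtain ⟨pe, -, hpe⟩ := hTD.isTree.existsUnique_path tv tw
    rw [hpe qq hqq, ← hpe pw.bypass hp]; exact hmp
  have sepUV : ∀ P : G.Walk u v, ∃ z ∈ P.support, z ∈ B m :=
    fun P => tree_sep hTD m P tu tv htu htv Huv
  have sepUW : ∀ P : G.Walk u w, ∃ z ∈ P.support, z ∈ B m :=
    fun P => tree_sep hTD m P tu tw htu htw hmr
  have sepVW : ∀ P : G.Walk v w, ∃ z ∈ P.support, z ∈ B m :=
    fun P => tree_sep hTD m P tv tw htv htw Hvw
  have key : ∀ x ∈ B m, ∀ z ∈ B m, G.Reachable x z → G.edist x z ≤ (d : ℕ∞) := by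
    intro x hx z hz hr
    obtain ⟨Pz, hPz⟩ := hr.exists_walk_length_eq_dist
    calc G.edist x z ≤ (Pz.length : ℕ∞) := Pz.edist_le
      _ = ((G.dist x z : ℕ) : ℕ∞) := by rw [hPz]
      _ ≤ (d : ℕ∞) := Nat.cast_le.mpr (houter m x hx z hz)
  by_cases huv : G.Reachable u v
  · obtain ⟨P0⟩ := huv
    obtain ⟨x, hx, hxB⟩ := sepUV P0
    have hux : G.Reachable u x := ⟨P0.takeUntil x hx⟩
    refine ⟨x, ?_, ?_, ?_⟩
    · intro P
      obtain ⟨z, hz, hzB⟩ := sepUV P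
      exact ⟨z, hz, key x hxB z hzB (hux.symm.trans ⟨P.takeUntil z hz⟩)⟩
    · intro P
      obtain ⟨z, hz, hzB⟩ := sepUW P
      exact ⟨z, hz, key x hxB z hzB (hux.symm.trans ⟨P.takeUntil z hz⟩)⟩
    · intro P
      obtain ⟨z, hz, hzB⟩ := sepVW P
      exact ⟨z, hz, key x hxB z hzB
        (hux.symm.trans (Reachable.trans ⟨P0⟩ ⟨P.takeUntil z hz⟩))⟩
  by_cases huw : G.Reachable u w
  · obtain ⟨P0⟩ := huw
    obtain ⟨x, hx, hxB⟩ := sepUW P0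
    have hux : G.Reachable u x := ⟨P0.takeUntil x hx⟩
    refine ⟨x, fun P => absurd ⟨P⟩ huv, ?_, fun P => absurd (Reachable.trans ⟨P0⟩ ⟨P.reverse⟩) huv⟩
    intro P
    obtain ⟨z, hz, hzB⟩ := sepUW P
    exact ⟨z, hz, key x hxB z hzB (hux.symm.trans ⟨P.takeUntil z hz⟩)⟩
  by_cases hvw : G.Reachable v w
  · obtain ⟨P0⟩ := hvw
    obtain ⟨x, hx, hxB⟩ := sepVW P0
    have hvx : G.Reachable v x := ⟨P0.takeUntil x hx⟩
    refine ⟨x, fun P => absurd ⟨P⟩ huv, fun P => absurd ⟨P⟩ huw, ?_⟩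
    intro P
    obtain ⟨z, hz, hzB⟩ := sepVW P
    exact ⟨z, hz, key x hxB z hzB (hvx.symm.trans ⟨P.takeUntil z hz⟩)⟩
  exact ⟨u, fun P => absurd ⟨P⟩ huv, fun P => absurd ⟨P⟩ huw, fun P => absurd ⟨P⟩ hvw⟩
end

section
/- For every graph G, glc(G) ≤ 6·mcw(G) + 2, and consequently (odw(G) − 3)/6 ≤ mcw(G). -/
open SimpleGraph

universe u

/-- `(C, F)` is a geodesic loaded cycle of `G`: `C` is a cycle, `F` a set of edges of `C`,
and for all vertices `u, v` of `C`, one of the two paths of `C` between `u` and `v`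
contains at most `d_G(u,v)` edges of `F`. -/
def IsGeodesicLoadedCycle {V : Type*} [DecidableEq V] (G : SimpleGraph V) {a : V}
    (C : G.Walk a a) (F : Finset (Sym2 V)) : Prop :=
  C.IsCycle ∧ (∀ e ∈ F, e ∈ C.edges) ∧
    ∀ u v : V, u ∈ C.support → v ∈ C.support →
      ∃ P : G.Walk u v, P.IsPath ∧ (∀ e ∈ P.edges, e ∈ C.edges) ∧
        (F ∩ P.edges.toFinset).card ≤ G.dist u v

section StmtAux12Section
open SimpleGraph List

namespace StmtAux12

variable {V : Type*} {G : SimpleGraph V}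

open SimpleGraph.Walk

@[simp] lemma getVert_nil {u : V} (i : ℕ) : (Walk.nil : G.Walk u u).getVert i = u := rfl

lemma support_eq_map {u v : V} (p : G.Walk u v) :
    p.support = (List.range (p.length + 1)).map p.getVert := by
  induction p with
  | nil => rfl
  | @cons a b c h q ih =>
    have h2 : (List.range (q.length + 1 + 1)).map (Walk.cons h q).getVert
        = a :: (List.range (q.length + 1)).map q.getVert := by
      rw [List.range_succ_eq_map, List.map_cons, List.map_map]
      exact congrArg₂ _ rfl (List.map_congr_left fun t _ => rfl)
    rw [support_cons, ih, Walk.length_cons, h2]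

lemma edges_eq_map {u v : V} (p : G.Walk u v) :
    p.edges = (List.range p.length).map (fun i => s(p.getVert i, p.getVert (i+1))) := by
  induction p with
  | nil => rfl
  | @cons a b c h q ih =>
    have h2 : (List.range (q.length + 1)).map
          (fun i => s((Walk.cons h q).getVert i, (Walk.cons h q).getVert (i+1)))
        = s(a, b) :: (List.range q.length).map (fun i => s(q.getVert i, q.getVert (i+1))) := by
      rw [List.range_succ_eq_map, List.map_cons, List.map_map]
      refine congrArg₂ _ (by rw [getVert_cons_succ, Walk.getVert_zero, Walk.getVert_zero]) (List.map_congr_left fun t _ => rfl)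
    rw [edges_cons, ih, Walk.length_cons, h2]

lemma edges_getElem {u v : V} (p : G.Walk u v) (i : ℕ) (h : i < p.edges.length) :
    p.edges[i] = s(p.getVert i, p.getVert (i+1)) := by
  have h' : i < p.length := by simpa using h
  simp [edges_eq_map]

/-- take of a walk -/
def wtake {u v : V} : (p : G.Walk u v) → (n : ℕ) → G.Walk u (p.getVert n)
  | .nil, _ => .nil
  | .cons _ _, 0 => .nil
  | .cons h q, n+1 => .cons h (wtake q n)

@[simp] lemma wtake_length {u v : V} (p : G.Walk u v) (n : ℕ) :
    (wtake p n).length = min n p.length := by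
  induction p generalizing n with
  | nil => simp [wtake]
  | cons h q ih =>
    cases n with
    | zero => simp [wtake]; rfl
    | succ n => simp [wtake, ih, Nat.succ_min_succ]

lemma wtake_getVert {u v : V} (p : G.Walk u v) (n i : ℕ) :
    (wtake p n).getVert i = p.getVert (min i n) := by
  induction p generalizing n i with
  | nil => simp [wtake]
  | cons h q ih =>
    cases n with
    | zero => simp [wtake]; rfl
    | succ n =>
      cases i with
      | zero => simp [wtake]
      | succ i => simp [wtake, ih, Nat.succ_min_succ]

lemma wtake_edges {u v : V} (p : G.Walk u v) (n : ℕ) :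
    (wtake p n).edges = p.edges.take n := by
  induction p generalizing n with
  | nil => simp [wtake]
  | cons h q ih =>
    cases n with
    | zero => simp [wtake]; rfl
    | succ n => simp [wtake, ih]

lemma drop_getVert {u v : V} (p : G.Walk u v) (n i : ℕ) :
    (p.drop n).getVert i = p.getVert (n + i) := by
  induction p generalizing n i with
  | nil => simp [Walk.drop]
  | cons h q ih =>
    cases n with
    | zero => simp [Walk.drop]
    | succ n =>
      have h1 : (n+1) + i = (n+i) + 1 := by omega
      simp [Walk.drop, h1, ih n]

@[simp] lemma drop_length {u v : V} (p : G.Walk u v) (n : ℕ) :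
    (p.drop n).length = p.length - n := by
  induction p generalizing n with
  | nil => simp [Walk.drop]
  | cons h q ih =>
    cases n with
    | zero => simp [Walk.drop]
    | succ n => simpa [Walk.drop] using ih n

lemma drop_edges {u v : V} (p : G.Walk u v) (n : ℕ) :
    (p.drop n).edges = p.edges.drop n := by
  induction p generalizing n with
  | nil => simp [Walk.drop]
  | cons h q ih =>
    cases n with
    | zero => simp [Walk.drop]
    | succ n => simpa [Walk.drop] using ih n


section Cycle

variable {a : V} {C : G.Walk a a}

/-- injectivity of `getVert` on `[0, length)` for a cycle -/
lemma getVert_inj0 (hC : C.IsCycle) {i j : ℕ} (hi : i < C.length) (hj : j < C.length)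
    (h : C.getVert i = C.getVert j) : i = j := by
  have hnd : C.support.tail.Nodup := hC.2
  have hs : C.support.tail = (List.range C.length).map (fun t => C.getVert (t+1)) := by
    rw [support_eq_map, List.range_succ_eq_map, List.map_cons, List.map_map]
    rfl
  rw [hs] at hnd
  have key : ∀ i' j', i' < C.length → j' < C.length →
      C.getVert (i'+1) = C.getVert (j'+1) → i' = j' := by
    intro i' j' hi' hj' hij
    exact List.inj_on_of_nodup_map hnd (List.mem_range.mpr hi') (List.mem_range.mpr hj') hij
  rcases Nat.eq_zero_or_pos i with rfl | hipos
  · rcases Nat.eq_zero_or_pos j with rfl | hjpos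
    · rfl
    · exfalso
      have h0 : C.getVert (C.length - 1 + 1) = C.getVert (j - 1 + 1) := by
        have e1 : C.length - 1 + 1 = C.length := by omega
        have e2 : j - 1 + 1 = j := by omega
        rw [e1, e2, Walk.getVert_length, ← h, Walk.getVert_zero]
      have := key _ _ (by omega) (by omega) h0
      omega
  · rcases Nat.eq_zero_or_pos j with rfl | hjpos
    · exfalso
      have h0 : C.getVert (C.length - 1 + 1) = C.getVert (i - 1 + 1) := by
        have e1 : C.length - 1 + 1 = C.length := by omega
        have e2 : i - 1 + 1 = i := by omega
        rw [e1, e2, Walk.getVert_length, h, Walk.getVert_zero]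
      have := key _ _ (by omega) (by omega) h0
      omega
    · have := key (i-1) (j-1) (by omega) (by omega)
        (by rw [Nat.sub_add_cancel hipos, Nat.sub_add_cancel hjpos]; exact h)
      omega

/-- injectivity of `getVert` on `[1, length]` for a cycle -/
lemma getVert_inj1 (hC : C.IsCycle) {i j : ℕ} (hi1 : 1 ≤ i) (hi : i ≤ C.length)
    (hj1 : 1 ≤ j) (hj : j ≤ C.length) (h : C.getVert i = C.getVert j) : i = j := by
  rcases eq_or_lt_of_le hi with rfl | hi'
  · rcases eq_or_lt_of_le hj with rfl | hj'
    · rfl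
    · exfalso
      have h4 : C.getVert 0 = C.getVert j := by
        rw [Walk.getVert_zero, ← h, Walk.getVert_length]
      have := getVert_inj0 hC (by have := hC.three_le_length; omega) hj' h4
      omega
  · rcases eq_or_lt_of_le hj with rfl | hj'
    · exfalso
      have h4 : C.getVert 0 = C.getVert i := by
        rw [Walk.getVert_zero, h, Walk.getVert_length]
      have := getVert_inj0 hC (by have := hC.three_le_length; omega) hi' h4
      omega
    · exact getVert_inj0 hC hi' hj' h

lemma edge_inj (hC : C.IsCycle) {i j : ℕ} (hi : i < C.length) (hj : j < C.length)
    (h : s(C.getVert i, C.getVert (i+1)) = s(C.getVert j, C.getVert (j+1))) : i = j := by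
  have hnd : C.edges.Nodup := hC.edges_nodup
  rw [edges_eq_map] at hnd
  exact List.inj_on_of_nodup_map hnd (by simp [hi]) (by simp [hj]) h

lemma mem_edges_iff (hC : C.IsCycle) {e : Sym2 V} :
    e ∈ C.edges ↔ ∃ i, i < C.length ∧ e = s(C.getVert i, C.getVert (i+1)) := by
  rw [edges_eq_map]
  simp only [List.mem_map, List.mem_range]
  constructor
  · rintro ⟨i, hi, rfl⟩; exact ⟨i, hi, rfl⟩
  · rintro ⟨i, hi, rfl⟩; exact ⟨i, hi, rfl⟩

/-- every vertex of a cycle has two distinct neighbours on the cycle -/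
lemma cycle_two_neighbors {w : V} {v : V} {c : G.Walk v v} (hc : c.IsCycle)
    (hw : w ∈ c.support) :
    ∃ b b', b ≠ b' ∧ G.Adj w b ∧ G.Adj w b' ∧ b ∈ c.support ∧ b' ∈ c.support := by
  classical
  set c' := c.rotate w hw with hc'def
  have hc' : c'.IsCycle := hc.rotate hw
  have hlen : 3 ≤ c'.length := hc'.three_le_length
  have hmem : ∀ y, y ∈ c'.support → y ∈ c.support := by
    intro y hy
    rcases (Walk.mem_support_iff _).mp hy with rfl | hy'
    · exact hw
    · exact List.mem_of_mem_tail ((Walk.support_rotate c w hw).mem_iff.mp hy')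
  refine ⟨c'.getVert 1, c'.getVert (c'.length - 1), ?_, ?_, ?_, ?_, ?_⟩
  · intro hbb
    have hnd : c'.edges.Nodup := hc'.edges_nodup
    have hl0 : (0:ℕ) < c'.edges.length := by rw [Walk.length_edges]; omega
    have hl1 : c'.length - 1 < c'.edges.length := by rw [Walk.length_edges]; omega
    have e0 : c'.edges[0]'hl0 = c'.edges[c'.length - 1]'hl1 := by
      rw [edges_getElem _ 0 hl0, edges_getElem _ _ hl1]
      have h2 : c'.length - 1 + 1 = c'.length := by omega
      rw [h2, Walk.getVert_length, Walk.getVert_zero, ← hbb]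
      exact Sym2.eq_swap
    have h3 := (List.Nodup.getElem_inj_iff hnd).mp e0
    omega
  · have := c'.adj_getVert_succ (i := 0) (by omega)
    simpa using this
  · have := c'.adj_getVert_succ (i := c'.length - 1) (by omega)
    have h2 : c'.length - 1 + 1 = c'.length := by omega
    rw [h2, Walk.getVert_length] at this
    exact this.symm
  · exact hmem _ (Walk.mem_support_iff_exists_getVert.mpr ⟨1, rfl, by omega⟩)
  · exact hmem _ (Walk.mem_support_iff_exists_getVert.mpr ⟨c'.length - 1, rfl, by omega⟩)

end Cycle

/-- a graph with an ℕ-grading where edges join consecutive levels and neighbours are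
determined by their level is acyclic -/
lemma acyclic_of_grading {H : SimpleGraph V} (phi : V → ℕ)
    (hstep : ∀ ⦃x y⦄, H.Adj x y → phi x + 1 = phi y ∨ phi y + 1 = phi x)
    (hloc : ∀ ⦃w x y⦄, H.Adj w x → H.Adj w y → phi x = phi y → x = y) :
    H.IsAcyclic := by
  classical
  intro v c hc
  obtain ⟨w, hw, hmax⟩ : ∃ w ∈ c.support.toFinset, ∀ y ∈ c.support.toFinset, phi y ≤ phi w :=
    Finset.exists_max_image _ _ ⟨v, by simp⟩
  rw [List.mem_toFinset] at hw
  obtain ⟨b, b', hbb, hAb, hAb', hbs, hbs'⟩ := cycle_two_neighbors hc hw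
  have h1 : phi b + 1 = phi w := by
    rcases hstep hAb with h | h
    · exact absurd h (by have := hmax b (List.mem_toFinset.mpr hbs); omega)
    · exact h
  have h2 : phi b' + 1 = phi w := by
    rcases hstep hAb' with h | h
    · exact absurd h (by have := hmax b' (List.mem_toFinset.mpr hbs'); omega)
    · exact h
  exact hbb (hloc hAb hAb' (by omega))

/-- a "parent function" graph with decreasing height is a tree -/
lemma isTree_parent {W : Type*} (par : W → W) (ht : W → ℕ) (root : W)
    (hroot : par root = root)
    (hdesc : ∀ w, w ≠ root → ht (par w) < ht w) :
    (SimpleGraph.fromRel (fun x y => par x = y)).IsTree := by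
  set T := SimpleGraph.fromRel (fun x y : W => par x = y) with hT
  have hAdjPar : ∀ w, w ≠ root → T.Adj w (par w) := by
    intro w hwr
    have hne : w ≠ par w := by
      intro h
      have := hdesc w hwr
      rw [← h] at this
      omega
    exact (SimpleGraph.fromRel_adj _ _ _).mpr ⟨hne, Or.inl rfl⟩
  classical
  constructor
  · have : Nonempty W := ⟨root⟩
    refine SimpleGraph.Connected.mk ?_
    intro x y
    · have reach : ∀ n w, ht w ≤ n → T.Reachable w root := by
        intro n
        induction n with
        | zero =>
          intro w hw
          by_cases h : w = root
          · exact h ▸ Reachable.refl _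
          · exact absurd (hdesc w h) (by omega)
        | succ n ih =>
          intro w hw
          by_cases h : w = root
          · exact h ▸ Reachable.refl _
          · exact (hAdjPar w h).reachable.trans (ih (par w) (by have := hdesc w h; omega))
      exact (reach (ht x) x le_rfl).trans (reach (ht y) y le_rfl).symm
  · intro v c hc
    obtain ⟨w, hw, hmax⟩ : ∃ w ∈ c.support.toFinset, ∀ y ∈ c.support.toFinset, ht y ≤ ht w :=
      Finset.exists_max_image _ _ ⟨v, by simp⟩
    rw [List.mem_toFinset] at hw
    obtain ⟨b, b', hbb, hAb, hAb', hbs, hbs'⟩ := cycle_two_neighbors hc hw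
    have key : ∀ y, T.Adj w y → y ∈ c.support → par w = y := by
      intro y hAy hys
      rcases (SimpleGraph.fromRel_adj _ _ _).mp hAy with ⟨hne, h | h⟩
      · exact h
      · exfalso
        have hyr : y ≠ root := by
          intro hr
          rw [hr] at h hne
          rw [hroot] at h
          exact hne h.symm
        have := hdesc y hyr
        rw [h] at this
        have := hmax y (List.mem_toFinset.mpr hys)
        omega
    exact hbb ((key b hAb hbs).symm.trans (key b' hAb' hbs'))

section Classify

lemma mod2 {L x : ℕ} (hL : 0 < L) (hx : x < 2*L) : x % L = if x < L then x else x - L := by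
  split_ifs with h
  · exact Nat.mod_eq_of_lt h
  · rw [Nat.mod_eq_sub_mod (by omega)]
    exact Nat.mod_eq_of_lt (by omega)

lemma mod_step {L q i : ℕ} (hq : q < L) (hi : i < L) (hne : i ≠ q) :
    ((i+1) % L + (L - (q+1))) % L = (i + (L - (q+1))) % L + 1 := by
  have hL : 0 < L := by omega
  rw [mod2 hL (by omega : i+1 < 2*L)]
  by_cases h2 : i + 1 < L
  · rw [if_pos h2, mod2 hL (by omega), mod2 hL (by omega)]
    split_ifs <;> omega
  · rw [if_neg h2, mod2 hL (by omega), mod2 hL (by omega)]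
    split_ifs <;> omega

lemma mod_inj {L s x y : ℕ} (hs : s < L) (hx : x < L) (hy : y < L)
    (h : (x+s) % L = (y+s) % L) : x = y := by
  rw [mod2 (by omega) (by omega), mod2 (by omega) (by omega)] at h
  split_ifs at h <;> omega

variable {a : V} {C : G.Walk a a}

open Classical in
noncomputable def cpos (C : G.Walk a a) (w : V) : ℕ :=
  if h : ∃ i, i < C.length ∧ C.getVert i = w then h.choose else 0

lemma cpos_getVert (hC : C.IsCycle) {i : ℕ} (hi : i < C.length) :
    cpos C (C.getVert i) = i := by
  have h : ∃ j, j < C.length ∧ C.getVert j = C.getVert i := ⟨i, hi, rfl⟩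
  rw [cpos]
  rw [dif_pos h]
  exact getVert_inj0 hC h.choose_spec.1 hi h.choose_spec.2

lemma cpos_getVert' (hC : C.IsCycle) {i : ℕ} (hi : i ≤ C.length) :
    cpos C (C.getVert i) = i % C.length := by
  have hL : 0 < C.length := by have := hC.three_le_length; omega
  rcases eq_or_lt_of_le hi with rfl | hlt
  · have h4 : C.getVert C.length = C.getVert 0 := by
      rw [Walk.getVert_length, Walk.getVert_zero]
    rw [Nat.mod_self, h4, cpos_getVert hC hL]
  · rw [Nat.mod_eq_of_lt hlt, cpos_getVert hC hlt]

lemma exists_pos_fst_of_mem_edges (hC : C.IsCycle) {x y : V} (h : s(x,y) ∈ C.edges) :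
    ∃ j, j < C.length ∧ C.getVert j = x := by
  have hL : 0 < C.length := by have := hC.three_le_length; omega
  rw [mem_edges_iff hC] at h
  obtain ⟨i, hi, he⟩ := h
  rw [Sym2.eq_iff] at he
  rcases he with ⟨h1, _⟩ | ⟨h1, _⟩
  · exact ⟨i, hi, h1.symm⟩
  · rcases eq_or_lt_of_le (Nat.succ_le_of_lt hi) with h3 | h3
    · have h4 : C.getVert (i+1) = C.getVert 0 := by
        rw [show i+1 = C.length by omega, Walk.getVert_length, Walk.getVert_zero]
      exact ⟨0, hL, by rw [h1, h4]⟩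
    · exact ⟨i+1, h3, h1.symm⟩

/-- Two paths between the same pair of vertices, both using only edges of the cycle `C`
and both avoiding the `q`-th edge of `C`, have the same edges. -/
lemma path_edges_eq_of_avoid [DecidableEq V] (hC : C.IsCycle)
    {y y' : V} {P A : G.Walk y y'} (hP : P.IsPath) (hA : A.IsPath)
    (hPC : ∀ e ∈ P.edges, e ∈ C.edges) (hAC : ∀ e ∈ A.edges, e ∈ C.edges)
    {q : ℕ} (hq : q < C.length)
    (hPq : s(C.getVert q, C.getVert (q+1)) ∉ P.edges)
    (hAq : s(C.getVert q, C.getVert (q+1)) ∉ A.edges) :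
    P.edges = A.edges := by
  have hL : 0 < C.length := by have := hC.three_le_length; omega
  set L := C.length with hLdef
  set eq' : Sym2 V := s(C.getVert q, C.getVert (q+1)) with heq'
  set H : SimpleGraph V := SimpleGraph.fromEdgeSet {e | e ∈ C.edges ∧ e ≠ eq'} with hH
  set phi : V → ℕ := fun w => (cpos C w + (L - (q+1))) % L with hphi
  have hAdj : ∀ {x z : V}, H.Adj x z → ∃ i, i < L ∧ i ≠ q ∧
      ((x = C.getVert i ∧ z = C.getVert (i+1)) ∨ (x = C.getVert (i+1) ∧ z = C.getVert i)) := by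
    intro x z hxz
    rw [hH, SimpleGraph.fromEdgeSet_adj] at hxz
    obtain ⟨⟨hmem, hne⟩, hxzne⟩ := hxz
    rw [mem_edges_iff hC] at hmem
    obtain ⟨i, hi, he⟩ := hmem
    rw [Sym2.eq_iff] at he
    refine ⟨i, hi, ?_, he⟩
    rintro rfl
    apply hne
    rw [heq']
    rcases he with ⟨h1, h2⟩ | ⟨h1, h2⟩
    · rw [← h1, ← h2]
    · rw [← h1, ← h2]
      exact Sym2.eq_swap
  have hacyc : H.IsAcyclic := by
    apply acyclic_of_grading phi
    · intro x z hxz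
      obtain ⟨i, hi, hiq, hcase⟩ := hAdj hxz
      rcases hcase with ⟨h1, h2⟩ | ⟨h1, h2⟩
      · left
        rw [hphi]
        simp only
        rw [h1, h2, cpos_getVert hC hi, cpos_getVert' hC (by omega)]
        exact (mod_step hq hi hiq).symm
      · right
        rw [hphi]
        simp only
        rw [h1, h2, cpos_getVert hC hi, cpos_getVert' hC (by omega)]
        exact (mod_step hq hi hiq).symm
    · intro w x z hwx hwz hpxz
      rw [hH, SimpleGraph.fromEdgeSet_adj] at hwx hwz
      obtain ⟨jx, hjx, hjx2⟩ := exists_pos_fst_of_mem_edges hC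
        (by rw [Sym2.eq_swap]; exact hwx.1.1)
      obtain ⟨jz, hjz, hjz2⟩ := exists_pos_fst_of_mem_edges hC
        (by rw [Sym2.eq_swap]; exact hwz.1.1)
      rw [hphi] at hpxz
      simp only at hpxz
      rw [← hjx2, ← hjz2, cpos_getVert hC hjx, cpos_getVert hC hjz] at hpxz
      rw [← hjx2, ← hjz2, mod_inj (by omega) hjx hjz hpxz]
  have hPH : ∀ e ∈ P.edges, e ∈ H.edgeSet := by
    intro e he
    rw [hH, SimpleGraph.edgeSet_fromEdgeSet]
    refine ⟨⟨hPC e he, ?_⟩, ?_⟩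
    · rintro rfl; exact hPq he
    · exact SimpleGraph.not_isDiag_of_mem_edgeSet G (P.edges_subset_edgeSet he)
  have hAH : ∀ e ∈ A.edges, e ∈ H.edgeSet := by
    intro e he
    rw [hH, SimpleGraph.edgeSet_fromEdgeSet]
    refine ⟨⟨hAC e he, ?_⟩, ?_⟩
    · rintro rfl; exact hAq he
    · exact SimpleGraph.not_isDiag_of_mem_edgeSet G (A.edges_subset_edgeSet he)
  have hPA : (⟨P.transfer H hPH, hP.transfer hPH⟩ : H.Path y y')
      = ⟨A.transfer H hAH, hA.transfer hAH⟩ :=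
    SimpleGraph.isAcyclic_iff_path_unique.mp hacyc _ _
  have := congrArg (fun p : H.Path y y' => (p : H.Walk y y').edges) hPA
  simpa only [Walk.edges_transfer] using this

end Classify

section Arcs

variable {a : V} {C : G.Walk a a}

lemma arc_exists (hC : C.IsCycle) {i j : ℕ} (hij : i ≤ j) (hjL : j ≤ C.length)
    (hcase : j < C.length ∨ 1 ≤ i) :
    ∃ A : G.Walk (C.getVert i) (C.getVert j), A.IsPath ∧
      A.edges = (List.range (j - i)).map (fun t => s(C.getVert (i+t), C.getVert (i+t+1))) ∧
      A.support = (List.range (j - i + 1)).map (fun t => C.getVert (i+t)) := by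
  have hL : 0 < C.length := by have := hC.three_le_length; omega
  have hend : (C.drop i).getVert (j - i) = C.getVert j := by
    rw [drop_getVert]
    congr 1
    omega
  refine ⟨(wtake (C.drop i) (j - i)).copy rfl hend, ?_, ?_, ?_⟩
  case refine_2 =>
    rw [Walk.edges_copy, wtake_edges, drop_edges]
    apply List.ext_getElem
    · simp [Walk.length_edges]
      omega
    · intro t h1 h2
      have ht : t < j - i := by simpa using h2
      have hlt : i + t < C.edges.length := by
        rw [Walk.length_edges]
        omega
      simp only [List.getElem_take, List.getElem_drop, List.getElem_map, List.getElem_range]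
      exact edges_getElem C (i+t) hlt
  case refine_3 =>
    rw [Walk.support_copy, support_eq_map]
    have hlen : (wtake (C.drop i) (j - i)).length = j - i := by
      rw [wtake_length, drop_length]
      omega
    rw [hlen]
    apply List.map_congr_left
    intro t ht
    rw [List.mem_range] at ht
    rw [wtake_getVert, drop_getVert]
    congr 1
    omega
  case refine_1 =>
    rw [Walk.isPath_def, Walk.support_copy, support_eq_map]
    have hlen : (wtake (C.drop i) (j - i)).length = j - i := by
      rw [wtake_length, drop_length]
      omega
    rw [hlen]
    have hcong : (List.range (j - i + 1)).map (wtake (C.drop i) (j - i)).getVert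
        = (List.range (j - i + 1)).map (fun t => C.getVert (i+t)) := by
      apply List.map_congr_left
      intro t ht
      rw [List.mem_range] at ht
      rw [wtake_getVert, drop_getVert]
      congr 1
      omega
    rw [hcong]
    refine List.Nodup.map_on ?_ List.nodup_range
    intro x hx y hy hxy
    rw [List.mem_range] at hx hy
    rcases hcase with hjlt | hi1
    · have := getVert_inj0 hC (i := i+x) (j := i+y) (by omega) (by omega) hxy
      omega
    · have := getVert_inj1 hC (i := i+x) (j := i+y) (by omega) (by omega) (by omega)
        (by omega) hxy
      omega

lemma arc_wrap_exists (hC : C.IsCycle) {i j : ℕ} (hji : j < i) (hiL : i ≤ C.length) :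
    ∃ A : G.Walk (C.getVert i) (C.getVert j), A.IsPath ∧
      A.edges = ((List.range (C.length - i)).map
          (fun t => s(C.getVert (i+t), C.getVert (i+t+1))))
        ++ ((List.range j).map (fun t => s(C.getVert t, C.getVert (t+1)))) := by
  have hL : 0 < C.length := by have := hC.three_le_length; omega
  obtain ⟨W1, hW1p, hW1e, hW1s⟩ := arc_exists hC (i := i) (j := C.length) hiL le_rfl
    (Or.inr (by omega))
  obtain ⟨W2, hW2p, hW2e, hW2s⟩ := arc_exists hC (i := 0) (j := j) (by omega) (by omega)
    (Or.inl (by omega))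
  set W1' := W1.copy rfl (Walk.getVert_length C) with hW1'
  set W2' := W2.copy (Walk.getVert_zero C) rfl with hW2'
  refine ⟨W1'.append W2', ?_, ?_⟩
  · rw [Walk.isPath_def, Walk.support_append, hW1', hW2', Walk.support_copy,
      Walk.support_copy, hW1s, hW2s]
    have htail : ((List.range (j - 0 + 1)).map (fun t => C.getVert (0+t))).tail
        = (List.range j).map (fun t => C.getVert (t+1)) := by
      rw [List.range_succ_eq_map, List.map_cons, List.tail_cons, List.map_map]
      apply List.map_congr_left
      intro t ht
      simp [Function.comp_def]
    rw [htail]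
    have hrw : (List.range (C.length - i + 1)).map (fun t => C.getVert (i+t))
          ++ (List.range j).map (fun t => C.getVert (t+1))
        = (((List.range (C.length - i + 1)).map (fun t => i+t))
            ++ (List.range j).map (fun t => t+1)).map C.getVert := by
      rw [List.map_append, List.map_map, List.map_map]
      rfl
    rw [hrw]
    refine List.Nodup.map_on ?_ ?_
    · intro x hx y hy hxy
      rw [List.mem_append] at hx hy
      have hx' : 1 ≤ x ∧ x ≤ C.length := by
        rcases hx with hx | hx <;> simp only [List.mem_map, List.mem_range] at hx <;>
          obtain ⟨t, ht, rfl⟩ := hx <;> omega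
      have hy' : 1 ≤ y ∧ y ≤ C.length := by
        rcases hy with hy | hy <;> simp only [List.mem_map, List.mem_range] at hy <;>
          obtain ⟨t, ht, rfl⟩ := hy <;> omega
      exact getVert_inj1 hC hx'.1 hx'.2 hy'.1 hy'.2 hxy
    · rw [List.nodup_append]
      refine ⟨?_, ?_, ?_⟩
      · exact List.nodup_range.map (fun x y h => by omega)
      · exact List.nodup_range.map (fun x y h => by omega)
      · intro x hx y hy hxy
        simp only [List.mem_map, List.mem_range] at hx hy
        obtain ⟨t, ht, rfl⟩ := hx
        obtain ⟨t', ht', rfl⟩ := hy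
        omega
  · rw [Walk.edges_append, hW1', hW2', Walk.edges_copy, Walk.edges_copy, hW1e, hW2e]
    congr 1
    apply List.map_congr_left
    intro t ht
    simp

end Arcs

section Metric

lemma reachable_of_edist_le {u v : V} {k : ℕ} (h : G.edist u v ≤ (k : ℕ∞)) :
    G.Reachable u v := by
  have hne : G.edist u v ≠ ⊤ := by
    intro htop
    rw [htop] at h
    simp at h
  obtain ⟨p, _⟩ := SimpleGraph.exists_walk_of_edist_ne_top hne
  exact ⟨p⟩

lemma dist_le_of_edist_le {u v : V} {k : ℕ} (h : G.edist u v ≤ (k : ℕ∞)) :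
    G.dist u v ≤ k := by
  have h2 := ENat.toNat_le_toNat h (by simp)
  simpa [SimpleGraph.dist] using h2

lemma dist_triangle' {u v w : V} (h1 : G.Reachable u v) (h2 : G.Reachable v w) :
    G.dist u w ≤ G.dist u v + G.dist v w := by
  obtain ⟨p, hp⟩ := h1.exists_walk_length_eq_dist
  obtain ⟨q, hq⟩ := h2.exists_walk_length_eq_dist
  have h3 := SimpleGraph.dist_le (p.append q)
  rwa [Walk.length_append, hp, hq] at h3

lemma dist_pair_le {x z z' : V} {k : ℕ} (h1 : G.edist x z ≤ (k : ℕ∞))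
    (h2 : G.edist x z' ≤ (k : ℕ∞)) : G.dist z z' ≤ 2*k := by
  apply dist_le_of_edist_le (k := 2*k)
  calc G.edist z z' ≤ G.edist z x + G.edist x z' := SimpleGraph.edist_triangle
  _ ≤ (k : ℕ∞) + (k : ℕ∞) := by
      rw [SimpleGraph.edist_comm]
      exact add_le_add h1 h2
  _ = ((2*k : ℕ) : ℕ∞) := by push_cast; ring

end Metric

section Part1

lemma part1 [DecidableEq V] (G : SimpleGraph V) (k : ℕ)
    (hmcw : ∀ u v w : V, ∃ x : V,
      (∀ P : G.Walk u v, ∃ z ∈ P.support, G.edist x z ≤ (k : ℕ∞)) ∧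
      (∀ P : G.Walk u w, ∃ z ∈ P.support, G.edist x z ≤ (k : ℕ∞)) ∧
      (∀ P : G.Walk v w, ∃ z ∈ P.support, G.edist x z ≤ (k : ℕ∞)))
    {a : V} (C : G.Walk a a) (F : Finset (Sym2 V))
    (hC : C.IsCycle) (hF : ∀ e ∈ F, e ∈ C.edges)
    (hgeo : ∀ u v : V, u ∈ C.support → v ∈ C.support →
      ∃ P : G.Walk u v, P.IsPath ∧ (∀ e ∈ P.edges, e ∈ C.edges) ∧
        (F ∩ P.edges.toFinset).card ≤ G.dist u v) :
    F.card ≤ 6 * k + 2 := by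
  by_contra hcon
  push_neg at hcon
  have hL : 0 < C.length := by have := hC.three_le_length; omega
  set L := C.length with hLdef
  set E : ℕ → Sym2 V := fun i => s(C.getVert i, C.getVert (i+1)) with hE
  set I : Finset ℕ := (Finset.range L).filter (fun i => E i ∈ F) with hI
  have hIF : ∀ i ∈ I, i < L ∧ E i ∈ F := by
    intro i hi
    have := Finset.mem_filter.mp hi
    exact ⟨Finset.mem_range.mp this.1, this.2⟩
  have hFI : F = I.image E := by
    ext e
    constructor
    · intro he
      obtain ⟨i, hi, rfl⟩ := (mem_edges_iff hC).mp (hF e he)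
      exact Finset.mem_image.mpr ⟨i, Finset.mem_filter.mpr ⟨Finset.mem_range.mpr hi, he⟩, rfl⟩
    · intro he
      obtain ⟨i, hi, rfl⟩ := Finset.mem_image.mp he
      exact (hIF i hi).2
  have hcardI : I.card = F.card := by
    rw [hFI]
    exact (Finset.card_image_of_injOn (fun i hi j hj h =>
      edge_inj hC (hIF i hi).1 (hIF j hj).1 h)).symm
  set m := I.card with hm
  have hm3 : 6*k + 3 ≤ m := by omega
  set σ0 := I.orderEmbOfFin (rfl : I.card = m) with hσ0
  set σ : ℕ → ℕ := fun j => if h : j < m then σ0 ⟨j, h⟩ else 0 with hσ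
  have hσmem : ∀ j, j < m → σ j ∈ I := by
    intro j hj
    simp only [hσ]
    rw [dif_pos hj]
    exact Finset.orderEmbOfFin_mem I rfl _
  have hσmono : ∀ j j', j < j' → j' < m → σ j < σ j' := by
    intro j j' hjj hj'
    simp only [hσ]
    rw [dif_pos (by omega : j < m), dif_pos hj']
    exact σ0.strictMono (by exact_mod_cast hjj)
  have hσL : ∀ j, j < m → σ j < L := fun j hj => (hIF _ (hσmem j hj)).1
  -- the key pigeonhole step
  have key : ∀ lo : ℕ, lo + (2*k+1) ≤ m → ∀ lst : List (Sym2 V),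
      (F ∩ lst.toFinset).card ≤ 2*k → ∃ t, t < 2*k+1 ∧ E (σ (lo+t)) ∉ lst := by
    intro lo hlo lst hcard
    by_contra hall
    push_neg at hall
    have hsub : (Finset.range (2*k+1)).image (fun t => E (σ (lo+t))) ⊆ F ∩ lst.toFinset := by
      intro e he
      obtain ⟨t, ht, rfl⟩ := Finset.mem_image.mp he
      rw [Finset.mem_range] at ht
      exact Finset.mem_inter.mpr ⟨(hIF _ (hσmem _ (by omega))).2,
        List.mem_toFinset.mpr (hall t ht)⟩
    have hcardim : ((Finset.range (2*k+1)).image (fun t => E (σ (lo+t)))).card = 2*k+1 := by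
      rw [Finset.card_image_of_injOn, Finset.card_range]
      intro t ht t' ht' h
      rw [Finset.mem_coe, Finset.mem_range] at ht ht'
      have := edge_inj hC (hσL _ (by omega)) (hσL _ (by omega)) h
      have hmono := hσmono
      rcases lt_trichotomy t t' with h2 | h2 | h2
      · exact absurd this (by have := hσmono (lo+t) (lo+t') (by omega) (by omega); omega)
      · exact h2
      · exact absurd this (by have := hσmono (lo+t') (lo+t) (by omega) (by omega); omega)
    have := Finset.card_le_card hsub
    omega
  set b1 := σ (2*k) + 1 with hb1
  set b2 := σ (4*k+1) + 1 with hb2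
  have hbb : b1 ≤ b2 ∧ 1 ≤ b1 ∧ b2 < L ∧ b1 < b2 := by
    have h1 := hσmono (2*k) (4*k+1) (by omega) (by omega)
    have h2 := hσmono (4*k+1) (4*k+2) (by omega) (by omega)
    have h3 := hσL (4*k+2) (by omega)
    omega
  -- the three corner vertices and the three arc walks between them
  obtain ⟨A1, hA1p, hA1e, hA1s⟩ := arc_exists hC (i := 0) (j := b1) (by omega)
    (by omega) (Or.inl (by omega))
  obtain ⟨A2, hA2p, hA2e, hA2s⟩ := arc_exists hC (i := b1) (j := b2) (by omega)
    (by omega) (Or.inl (by omega))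
  obtain ⟨A3, hA3p, hA3e, hA3s⟩ := arc_exists hC (i := b2) (j := L) (by omega)
    le_rfl (Or.inr (by omega))
  obtain ⟨x, hx1, hx2, hx3⟩ := hmcw (C.getVert 0) (C.getVert b1) (C.getVert b2)
  -- z1 on the first arc
  obtain ⟨z1, hz1s, hz1d⟩ := hx1 A1
  obtain ⟨j1, hj1v, hj1le⟩ : ∃ t, t ≤ b1 ∧ z1 = C.getVert t := by
    rw [hA1s] at hz1s
    obtain ⟨t, ht, h⟩ := List.mem_map.mp hz1s
    rw [List.mem_range] at ht
    exact ⟨0 + t, by omega, h.symm⟩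
  obtain ⟨z2, hz2s, hz2d⟩ := hx3 A2
  obtain ⟨j2, hj2v, hj2le⟩ : ∃ t, b1 ≤ t ∧ t ≤ b2 ∧ z2 = C.getVert t := by
    rw [hA2s] at hz2s
    obtain ⟨t, ht, h⟩ := List.mem_map.mp hz2s
    rw [List.mem_range] at ht
    exact ⟨b1 + t, by omega, by omega, h.symm⟩
  obtain ⟨hj2le1, hj2le2⟩ := hj2le
  have hgl : C.getVert L = C.getVert 0 := by
    rw [Walk.getVert_length, Walk.getVert_zero]
  obtain ⟨z3, hz3s, hz3d⟩ := hx2 ((A3.copy rfl hgl).reverse)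
  obtain ⟨j3, hj3v, hj3le⟩ : ∃ t, b2 ≤ t ∧ t ≤ L ∧ z3 = C.getVert t := by
    rw [Walk.support_reverse, List.mem_reverse, Walk.support_copy, hA3s] at hz3s
    obtain ⟨t, ht, h⟩ := List.mem_map.mp hz3s
    rw [List.mem_range] at ht
    exact ⟨b2 + t, by omega, by omega, h.symm⟩
  obtain ⟨hj3le1, hj3le2⟩ := hj3le
  subst hj1le hj2le2 hj3le2
  -- membership of the three z's in C.support
  have hmemC : ∀ t, t ≤ L → C.getVert t ∈ C.support :=
    fun t ht => Walk.mem_support_iff_exists_getVert.mpr ⟨t, rfl, ht⟩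
  -- the three geodesic paths
  obtain ⟨P12, hP12p, hP12C, hP12l⟩ := hgeo _ _ (hmemC j1 (by omega)) (hmemC j2 (by omega))
  obtain ⟨P23, hP23p, hP23C, hP23l⟩ := hgeo _ _ (hmemC j2 (by omega)) (hmemC j3 (by omega))
  obtain ⟨P31, hP31p, hP31C, hP31l⟩ := hgeo _ _ (hmemC j3 (by omega)) (hmemC j1 (by omega))
  have hload12 : (F ∩ P12.edges.toFinset).card ≤ 2*k :=
    le_trans hP12l (dist_pair_le hz1d hz2d)
  have hload23 : (F ∩ P23.edges.toFinset).card ≤ 2*k :=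
    le_trans hP23l (dist_pair_le hz2d hz3d)
  have hload31 : (F ∩ P31.edges.toFinset).card ≤ 2*k :=
    le_trans hP31l (dist_pair_le hz3d hz1d)
  -- identify each geodesic path with the corresponding arc
  obtain ⟨t12, ht12, hq12⟩ := key (4*k+2) (by omega) P12.edges hload12
  obtain ⟨t23, ht23, hq23⟩ := key 0 (by omega) P23.edges hload23
  obtain ⟨t31, ht31, hq31⟩ := key (2*k+1) (by omega) P31.edges hload31
  set q12 := σ (4*k+2+t12) with hq12d
  set q23 := σ (0+t23) with hq23d
  set q31 := σ (2*k+1+t31) with hq31d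
  have hq12b : b2 ≤ q12 ∧ q12 < L := by
    have := hσmono (4*k+1) (4*k+2+t12) (by omega) (by omega)
    have := hσL (4*k+2+t12) (by omega)
    omega
  have hq23b : q23 < b1 := by
    have h0 : σ (0+t23) ≤ σ (2*k) := by
      rcases eq_or_lt_of_le (by omega : 0 + t23 ≤ 2*k) with h | h
      · rw [h]
      · exact le_of_lt (hσmono _ _ h (by omega))
    omega
  have hq31b : b1 ≤ q31 ∧ q31 < b2 := by
    constructor
    · have h0 : σ (2*k) < σ (2*k+1+t31) := hσmono _ _ (by omega) (by omega)
      omega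
    · have h0 : σ (2*k+1+t31) ≤ σ (4*k+1) := by
        rcases eq_or_lt_of_le (by omega : 2*k+1+t31 ≤ 4*k+1) with h | h
        · rw [h]
        · exact le_of_lt (hσmono _ _ h (by omega))
      omega
  obtain ⟨A12, hA12p, hA12e, _⟩ := arc_exists hC (i := j1) (j := j2) (by omega)
    (by omega) (Or.inl (by omega))
  obtain ⟨A23, hA23p, hA23e, _⟩ := arc_exists hC (i := j2) (j := j3) (by omega)
    (by omega) (Or.inr (by omega))
  obtain ⟨A31, hA31p, hA31e⟩ := arc_wrap_exists hC (i := j3) (j := j1) (by omega) (by omega)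
  have harcC : ∀ (lst : List (Sym2 V)), (∀ e ∈ lst, ∃ i, i < L ∧ e = E i) →
      ∀ e ∈ lst, e ∈ C.edges := by
    intro lst hl e he
    obtain ⟨i, hi, rfl⟩ := hl e he
    rw [mem_edges_iff hC]
    exact ⟨i, hi, rfl⟩
  have hA12mem : ∀ e ∈ A12.edges, ∃ i, j1 ≤ i ∧ i < j2 ∧ e = E i := by
    intro e he
    rw [hA12e] at he
    obtain ⟨t, ht, h⟩ := List.mem_map.mp he
    rw [List.mem_range] at ht
    exact ⟨j1 + t, by omega, by omega, h.symm⟩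
  have hA23mem : ∀ e ∈ A23.edges, ∃ i, j2 ≤ i ∧ i < j3 ∧ e = E i := by
    intro e he
    rw [hA23e] at he
    obtain ⟨t, ht, h⟩ := List.mem_map.mp he
    rw [List.mem_range] at ht
    exact ⟨j2 + t, by omega, by omega, h.symm⟩
  have hA31mem : ∀ e ∈ A31.edges, ∃ i, i < L ∧ (j3 ≤ i ∨ i < j1) ∧ e = E i := by
    intro e he
    rw [hA31e] at he
    rcases List.mem_append.mp he with h | h
    · obtain ⟨t, ht, h⟩ := List.mem_map.mp h
      rw [List.mem_range] at ht
      exact ⟨j3 + t, by omega, Or.inl (by omega), h.symm⟩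
    · obtain ⟨t, ht, h⟩ := List.mem_map.mp h
      rw [List.mem_range] at ht
      exact ⟨t, by omega, Or.inr (by omega), h.symm⟩
  have hP12A : P12.edges = A12.edges := by
    apply path_edges_eq_of_avoid hC hP12p hA12p hP12C
      (harcC _ (fun e he => by obtain ⟨i, h1, h2, h3⟩ := hA12mem e he; exact ⟨i, by omega, h3⟩))
      (hq12b.2) hq12
    intro hcontra
    obtain ⟨i, h1, h2, h3⟩ := hA12mem _ hcontra
    have := edge_inj hC hq12b.2 (by omega : i < L) h3
    omega
  have hP23A : P23.edges = A23.edges := by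
    apply path_edges_eq_of_avoid hC hP23p hA23p hP23C
      (harcC _ (fun e he => by obtain ⟨i, h1, h2, h3⟩ := hA23mem e he; exact ⟨i, by omega, h3⟩))
      (by omega : q23 < L) hq23
    intro hcontra
    obtain ⟨i, h1, h2, h3⟩ := hA23mem _ hcontra
    have := edge_inj hC (by omega : q23 < L) (by omega : i < L) h3
    omega
  have hP31A : P31.edges = A31.edges := by
    apply path_edges_eq_of_avoid hC hP31p hA31p hP31C
      (harcC _ (fun e he => by obtain ⟨i, h1, h2, h3⟩ := hA31mem e he; exact ⟨i, h1, h3⟩))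
      (by omega : q31 < L) hq31
    intro hcontra
    obtain ⟨i, h1, h2, h3⟩ := hA31mem _ hcontra
    have := edge_inj hC (by omega : q31 < L) h1 h3
    omega
  -- coverage: every F-edge lies on one of the three arcs
  have hcover : F ⊆ (F ∩ P12.edges.toFinset) ∪ ((F ∩ P23.edges.toFinset)
      ∪ (F ∩ P31.edges.toFinset)) := by
    intro e he
    have heF := he
    rw [hFI] at he
    obtain ⟨i, hi, rfl⟩ := Finset.mem_image.mp he
    have hiL : i < L := (hIF i hi).1
    rcases lt_or_ge i j1 with hc | hc
    · refine Finset.mem_union_right _ (Finset.mem_union_right _ ?_)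
      refine Finset.mem_inter.mpr ⟨heF, List.mem_toFinset.mpr ?_⟩
      rw [hP31A, hA31e]
      refine List.mem_append.mpr (Or.inr ?_)
      exact List.mem_map.mpr ⟨i, List.mem_range.mpr (by omega), rfl⟩
    rcases lt_or_ge i j2 with hc2 | hc2
    · refine Finset.mem_union_left _ ?_
      refine Finset.mem_inter.mpr ⟨heF, List.mem_toFinset.mpr ?_⟩
      rw [hP12A, hA12e]
      refine List.mem_map.mpr ⟨i - j1, List.mem_range.mpr (by omega), ?_⟩
      rw [show j1 + (i - j1) = i by omega]
    rcases lt_or_ge i j3 with hc3 | hc3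
    · refine Finset.mem_union_right _ (Finset.mem_union_left _ ?_)
      refine Finset.mem_inter.mpr ⟨heF, List.mem_toFinset.mpr ?_⟩
      rw [hP23A, hA23e]
      refine List.mem_map.mpr ⟨i - j2, List.mem_range.mpr (by omega), ?_⟩
      rw [show j2 + (i - j2) = i by omega]
    · refine Finset.mem_union_right _ (Finset.mem_union_right _ ?_)
      refine Finset.mem_inter.mpr ⟨heF, List.mem_toFinset.mpr ?_⟩
      rw [hP31A, hA31e]
      refine List.mem_append.mpr (Or.inl ?_)
      refine List.mem_map.mpr ⟨i - j3, List.mem_range.mpr (by omega), ?_⟩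
      rw [show j3 + (i - j3) = i by omega]
  have hfinal := Finset.card_le_card hcover
  have h1 := Finset.card_union_le (F ∩ P12.edges.toFinset)
    ((F ∩ P23.edges.toFinset) ∪ (F ∩ P31.edges.toFinset))
  have h2 := Finset.card_union_le (F ∩ P23.edges.toFinset) (F ∩ P31.edges.toFinset)
  omega

end Part1

section Part2

lemma isPath_loop_eq_nil {u : V} {p : G.Walk u u} (hp : p.IsPath) : p = Walk.nil := by
  cases p with
  | nil => rfl
  | cons h q =>
    exfalso
    rw [Walk.cons_isPath_iff] at hp
    exact hp.2 q.end_mem_support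

variable (G : SimpleGraph V)

noncomputable def vroot (v : V) : V := (G.connectedComponentMk v).out

lemma reachable_vroot (v : V) : G.Reachable (vroot G v) v :=
  ConnectedComponent.exact (G.connectedComponentMk v).out_eq

lemma vroot_eq {u v : V} (h : G.Reachable u v) : vroot G u = vroot G v := by
  unfold vroot
  rw [ConnectedComponent.sound h]

noncomputable def lvl (v : V) : ℕ := G.dist (vroot G v) v

def Upper (n : ℕ) : Set V := {v | n ≤ lvl G v}

lemma upper_mono {m n : ℕ} (h : m ≤ n) : Upper G n ⊆ Upper G m := fun _ hv => le_trans h hv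

/-- nodes of the tree decomposition -/
abbrev Node := Option ((n : ℕ) × (G.induce (Upper G n)).ConnectedComponent)

noncomputable def parNode : Node G → Node G
  | none => none
  | some ⟨0, _⟩ => none
  | some ⟨n+1, c⟩ => some ⟨n, c.map (G.induceHomOfLE (upper_mono G (by omega))).toHom⟩

def htNode : Node G → ℕ
  | none => 0
  | some ⟨n, _⟩ => n + 1

def bagNode : Node G → Set V
  | none => ∅
  | some ⟨n, c⟩ => {v | lvl G v ≤ n + 1 ∧
      ∃ h : v ∈ Upper G n, (G.induce (Upper G n)).connectedComponentMk ⟨v, h⟩ = c}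

/-- the decomposition tree -/
noncomputable def TNode : SimpleGraph (Node G) :=
  SimpleGraph.fromRel (fun x y => parNode G x = y)

lemma TNode_isTree : (TNode G).IsTree := by
  apply isTree_parent (parNode G) (htNode G) none rfl
  intro w hw
  match w with
  | none => exact absurd rfl hw
  | some ⟨0, c⟩ => simp [parNode, htNode]
  | some ⟨n+1, c⟩ => simp [parNode, htNode]

lemma map_mk_upper {n : ℕ} (hsub : Upper G (n+1) ⊆ Upper G n) {v : V}
    (hv : v ∈ Upper G (n+1)) :
    ((G.induce (Upper G (n+1))).connectedComponentMk ⟨v, hv⟩).map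
      (G.induceHomOfLE hsub).toHom
    = (G.induce (Upper G n)).connectedComponentMk ⟨v, hsub hv⟩ := rfl

lemma mem_bag {n : ℕ} {c : (G.induce (Upper G n)).ConnectedComponent} {v : V} :
    v ∈ bagNode G (some ⟨n, c⟩) ↔ lvl G v ≤ n + 1 ∧
      ∃ h : v ∈ Upper G n, (G.induce (Upper G n)).connectedComponentMk ⟨v, h⟩ = c :=
  Iff.rfl

lemma bag_nodes_adj {v : V} {t t' : Node G} (h : v ∈ bagNode G t) (h' : v ∈ bagNode G t')
    (hne : t ≠ t') : (TNode G).Adj t t' := by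
  match t, t' with
  | none, _ => exact absurd h (by simp [bagNode])
  | some _, none => exact absurd h' (by simp [bagNode])
  | some ⟨n, c⟩, some ⟨n', c'⟩ =>
    rw [mem_bag] at h h'
    obtain ⟨hl, hin, hc⟩ := h
    obtain ⟨hl', hin', hc'⟩ := h'
    have hnn : n ≠ n' := by
      rintro rfl
      exact hne (by rw [← hc, ← hc'])
    have hb1 : n ≤ lvl G v := hin
    have hb2 : n' ≤ lvl G v := hin'
    have hpar : ∀ (a b : ℕ) (ca : (G.induce (Upper G a)).ConnectedComponent)
        (cb : (G.induce (Upper G b)).ConnectedComponent), a = b + 1 →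
        (∀ hia : v ∈ Upper G a, (G.induce (Upper G a)).connectedComponentMk ⟨v, hia⟩ = ca) →
        v ∈ Upper G a →
        (∀ hib : v ∈ Upper G b, (G.induce (Upper G b)).connectedComponentMk ⟨v, hib⟩ = cb) →
        parNode G (some ⟨a, ca⟩) = some ⟨b, cb⟩ := by
      rintro a b ca cb rfl hca hia hcb
      show parNode G (some ⟨b+1, ca⟩) = some ⟨b, cb⟩
      rw [parNode]
      congr 1
      refine Sigma.ext rfl ?_
      simp only [heq_eq_eq]
      rw [← hca hia, map_mk_upper G _ hia, hcb]
    rcases (by omega : n = n' + 1 ∨ n' = n + 1) with heq | heq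
    · refine (SimpleGraph.fromRel_adj _ _ _).mpr ⟨hne, Or.inl ?_⟩
      exact hpar n n' c c' heq (fun hia => by rw [← hc]) hin (fun hib => by rw [← hc'])
    · refine (SimpleGraph.fromRel_adj _ _ _).mpr ⟨hne, Or.inr ?_⟩
      exact hpar n' n c' c heq (fun hia => by rw [← hc']) hin' (fun hib => by rw [← hc])

lemma lvl_le_adj {u v : V} (h : G.Adj u v) : lvl G v ≤ lvl G u + 1 := by
  have hr : vroot G v = vroot G u := vroot_eq G h.reachable.symm
  unfold lvl
  rw [hr]
  have h1 := dist_triangle' (G := G) (reachable_vroot G u) h.reachable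
  have h2 : G.dist u v ≤ 1 := SimpleGraph.dist_le (Walk.cons h Walk.nil)
  omega

lemma covers_vertices (v : V) : ∃ t : Node G, v ∈ bagNode G t := by
  refine ⟨some ⟨lvl G v, (G.induce (Upper G (lvl G v))).connectedComponentMk
    ⟨v, Set.mem_setOf.mpr le_rfl⟩⟩, ?_⟩
  rw [mem_bag]
  exact ⟨by omega, Set.mem_setOf.mpr le_rfl, rfl⟩

lemma covers_edges {u v : V} (h : G.Adj u v) : ∃ t : Node G, u ∈ bagNode G t ∧ v ∈ bagNode G t := by
  rcases le_total (lvl G u) (lvl G v) with hle | hle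
  · have hu : u ∈ Upper G (lvl G u) := Set.mem_setOf.mpr le_rfl
    have hv : v ∈ Upper G (lvl G u) := Set.mem_setOf.mpr hle
    refine ⟨some ⟨lvl G u, (G.induce (Upper G (lvl G u))).connectedComponentMk ⟨u, hu⟩⟩, ?_, ?_⟩
    · rw [mem_bag]
      exact ⟨by omega, hu, rfl⟩
    · rw [mem_bag]
      refine ⟨by have := lvl_le_adj G h; omega, hv, ?_⟩
      exact (ConnectedComponent.sound (SimpleGraph.Adj.reachable
        (SimpleGraph.comap_adj.mpr h))).symm
  · have hv : v ∈ Upper G (lvl G v) := Set.mem_setOf.mpr le_rfl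
    have hu : u ∈ Upper G (lvl G v) := Set.mem_setOf.mpr hle
    refine ⟨some ⟨lvl G v, (G.induce (Upper G (lvl G v))).connectedComponentMk ⟨v, hv⟩⟩, ?_, ?_⟩
    · rw [mem_bag]
      refine ⟨by have := lvl_le_adj G h.symm; omega, hu, ?_⟩
      exact (ConnectedComponent.sound (SimpleGraph.Adj.reachable
        (SimpleGraph.comap_adj.mpr h.symm))).symm
    · rw [mem_bag]
      exact ⟨by omega, hv, rfl⟩

lemma interpolation_prop : ∀ ⦃t₁ t₂ t₃ : Node G⦄ (p : (TNode G).Walk t₁ t₃), p.IsPath →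
    t₂ ∈ p.support → bagNode G t₁ ∩ bagNode G t₃ ⊆ bagNode G t₂ := by
  intro t1 t2 t3 p hp hmem v hv
  obtain ⟨hv1, hv3⟩ := hv
  by_cases h13 : t1 = t3
  · subst h13
    rw [isPath_loop_eq_nil hp] at hmem
    simp only [Walk.support_nil, List.mem_singleton] at hmem
    subst hmem
    exact hv1
  · have hadj : (TNode G).Adj t1 t3 := bag_nodes_adj G hv1 hv3 h13
    have hP2 : (Walk.cons hadj Walk.nil : (TNode G).Walk t1 t3).IsPath := by
      rw [Walk.cons_isPath_iff]
      exact ⟨Walk.IsPath.nil, by simp [h13]⟩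
    have huniq := SimpleGraph.isAcyclic_iff_path_unique.mp (TNode_isTree G).2
      ⟨p, hp⟩ ⟨Walk.cons hadj Walk.nil, hP2⟩
    have hsupp : p.support = [t1, t3] := by
      have := congrArg (fun q : (TNode G).Path t1 t3 => (q : (TNode G).Walk t1 t3).support) huniq
      simpa using this
    rw [hsupp] at hmem
    simp only [List.mem_cons, List.mem_singleton, List.not_mem_nil, or_false] at hmem
    rcases hmem with rfl | rfl
    · exact hv1
    · exact hv3

lemma bag_diam (k : ℕ)
    (hmcw : ∀ u v w : V, ∃ x : V,
      (∀ P : G.Walk u v, ∃ z ∈ P.support, G.edist x z ≤ (k : ℕ∞)) ∧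
      (∀ P : G.Walk u w, ∃ z ∈ P.support, G.edist x z ≤ (k : ℕ∞)) ∧
      (∀ P : G.Walk v w, ∃ z ∈ P.support, G.edist x z ≤ (k : ℕ∞))) :
    ∀ t : Node G, ∀ u ∈ bagNode G t, ∀ v ∈ bagNode G t, G.dist u v ≤ 6 * k + 3 := by
  classical
  intro t u hu v hv
  match t with
  | none => exact absurd hu (by simp [bagNode])
  | some ⟨n, c⟩ =>
    rw [mem_bag] at hu hv
    obtain ⟨hul, huin, huc⟩ := hu
    obtain ⟨hvl, hvin, hvc⟩ := hv
    -- a walk from u to v staying in `Upper G n`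
    have hreach : (G.induce (Upper G n)).Reachable ⟨u, huin⟩ ⟨v, hvin⟩ :=
      ConnectedComponent.exact (huc.trans hvc.symm)
    obtain ⟨W0⟩ := hreach
    set Wuv := W0.map (SimpleGraph.Embedding.induce (Upper G n)).toHom with hWuv
    have hWsupp : ∀ z ∈ Wuv.support, z ∈ Upper G n := by
      intro z hz
      rw [hWuv, Walk.support_map] at hz
      obtain ⟨z0, _, rfl⟩ := List.mem_map.mp hz
      exact z0.2
    have hruv : G.Reachable u v := ⟨Wuv⟩
    have hru : G.Reachable (vroot G u) u := reachable_vroot G u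
    have hrv : G.Reachable (vroot G u) v := hru.trans hruv
    obtain ⟨x, hx1, hx2, hx3⟩ := hmcw (vroot G u) u v
    obtain ⟨z', hz's, hz'd⟩ := hx3 Wuv
    have hz'lvl : n ≤ G.dist (vroot G u) z' := by
      have h1 : n ≤ lvl G z' := Set.mem_setOf.mp (hWsupp z' hz's)
      have h2 : vroot G z' = vroot G u := by
        refine (vroot_eq G ?_).symm
        exact ⟨Wuv.takeUntil z' hz's⟩
      unfold lvl at h1
      rwa [h2] at h1
    -- generic one-sided estimate
    have side : ∀ w : V, G.Reachable (vroot G u) w → lvl G w ≤ n + 1 →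
        (∀ P : G.Walk (vroot G u) w, ∃ z ∈ P.support, G.edist x z ≤ (k : ℕ∞)) →
        G.dist w x ≤ 3 * k + 1 := by
      intro w hrw hwl hx'
      obtain ⟨p, hplen⟩ := hrw.exists_walk_length_eq_dist
      obtain ⟨z, hzs, hzd⟩ := hx' p
      have ht12 : (p.takeUntil z hzs).length + (p.dropUntil z hzs).length
          = G.dist (vroot G u) w := by
        rw [← hplen]
        conv_rhs => rw [← Walk.take_spec p hzs]
        rw [Walk.length_append]
      have hdr : G.dist (vroot G u) z ≤ (p.takeUntil z hzs).length := SimpleGraph.dist_le _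
      have hdw : G.dist z w ≤ (p.dropUntil z hzs).length := SimpleGraph.dist_le _
      have hzz' : G.dist z z' ≤ 2 * k := dist_pair_le hzd hz'd
      have hrz' : G.dist (vroot G u) z' ≤ G.dist (vroot G u) z + G.dist z z' := by
        apply dist_triangle'
        · exact ⟨p.takeUntil z hzs⟩
        · exact (reachable_of_edist_le hzd).symm.trans (reachable_of_edist_le hz'd)
      have hwx : G.dist w x ≤ G.dist w z + G.dist z x := by
        apply dist_triangle'
        · exact ⟨(p.dropUntil z hzs).reverse⟩
        · exact (reachable_of_edist_le hzd).symm
      have hzx : G.dist z x ≤ k := by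
        rw [SimpleGraph.dist_comm]
        exact dist_le_of_edist_le hzd
      have hwz : G.dist w z ≤ (p.dropUntil z hzs).length := by
        rw [SimpleGraph.dist_comm]
        exact hdw
      have hvw : vroot G w = vroot G u := by
        rw [← vroot_eq G hrw]
        exact vroot_eq G (reachable_vroot G u)
      have hlvlw : G.dist (vroot G u) w = lvl G w := by
        unfold lvl
        rw [hvw]
      omega
    have hu3 : G.dist u x ≤ 3 * k + 1 := side u hru hul hx1
    have hv3 : G.dist v x ≤ 3 * k + 1 := side v hrv hvl hx2
    have hux : G.Reachable u x := by
      obtain ⟨p, _⟩ := hru.exists_walk_length_eq_dist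
      obtain ⟨z, hzs, hzd⟩ := hx1 p
      exact Reachable.trans ⟨(p.dropUntil z hzs).reverse⟩ (reachable_of_edist_le hzd).symm
    have hvx : G.Reachable v x := by
      obtain ⟨p, _⟩ := hrv.exists_walk_length_eq_dist
      obtain ⟨z, hzs, hzd⟩ := hx2 p
      exact Reachable.trans ⟨(p.dropUntil z hzs).reverse⟩ (reachable_of_edist_le hzd).symm
    have hfin : G.dist u v ≤ G.dist u x + G.dist x v := dist_triangle' hux hvx.symm
    have hxv : G.dist x v ≤ 3 * k + 1 := by
      rw [SimpleGraph.dist_comm]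
      exact hv3
    omega

end Part2

end StmtAux12

end StmtAux12Section

/-- glc(G) ≤ 6·mcw(G) + 2, and consequently odw(G) ≤ 6·mcw(G) + 3 (i.e. (odw(G) − 3)/6 ≤ mcw(G)):
if G has McCarty-width at most k, then every geodesic loaded cycle of G has load at most 6k + 2,
and G has a tree-decomposition of outer diameter at most 6k + 3. -/
theorem stmt_12 {V : Type u} [DecidableEq V] [Nonempty V] (G : SimpleGraph V) (k : ℕ)
    (hmcw : ∀ u v w : V, ∃ x : V,
      (∀ P : G.Walk u v, ∃ z ∈ P.support, G.edist x z ≤ (k : ℕ∞)) ∧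
      (∀ P : G.Walk u w, ∃ z ∈ P.support, G.edist x z ≤ (k : ℕ∞)) ∧
      (∀ P : G.Walk v w, ∃ z ∈ P.support, G.edist x z ≤ (k : ℕ∞))) :
    (∀ (a : V) (C : G.Walk a a) (F : Finset (Sym2 V)),
      IsGeodesicLoadedCycle G C F → F.card ≤ 6 * k + 2) ∧
    (∃ (W : Type u) (T : SimpleGraph W) (B : W → Set V), TreeDecomp G T B ∧
      ∀ t, ∀ u ∈ B t, ∀ v ∈ B t, G.dist u v ≤ 6 * k + 3) := by
  constructor
  · intro a C F hglc
    obtain ⟨hC, hF, hgeo⟩ := hglc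
    exact StmtAux12.part1 G k hmcw C F hC hF hgeo
  · refine ⟨StmtAux12.Node G, StmtAux12.TNode G, StmtAux12.bagNode G,
      ⟨StmtAux12.TNode_isTree G, StmtAux12.covers_vertices G,
        fun u v h => StmtAux12.covers_edges G h, StmtAux12.interpolation_prop G⟩,
      StmtAux12.bag_diam G k hmcw⟩
end
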